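/- arXiv:2510.17510 — 12 statements merged into one kernel-verified Lean document; each statement's English description precedes it below -/
import Mathlib

section
/- If E is an Archimedean Φ-algebra (unital f-algebra) with multiplicative unit e, then for every f ∈ E the supremum sup_{λ∈ℝ} (2λf − λ²e) exists in E and equals f². -/
set_option linter.unusedSectionVars false
set_option linter.unnecessarySimpa false
set_option maxHeartbeats 1000000

section Helpers
variable {E : Type*} [Lattice E] [AddCommGroup E] [Module ℝ E]
  [CovariantClass E E (· + ·) (· ≤ ·)] [PosSMulMono ℝ E]

theorem phiAux_smul_sup {r : ℝ} (hr : 0 < r) (a b : E) : r • (a ⊔ b) = r • a ⊔ r • b := by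
  refine le_antisymm ?_ (sup_le (smul_le_smul_of_nonneg_left le_sup_left hr.le)
    (smul_le_smul_of_nonneg_left le_sup_right hr.le))
  have h1 : a ⊔ b ≤ r⁻¹ • (r • a ⊔ r • b) := by
    refine sup_le ?_ ?_
    · have := smul_le_smul_of_nonneg_left (le_sup_left : r • a ≤ r • a ⊔ r • b)
        (inv_pos.mpr hr).le
      rwa [inv_smul_smul₀ hr.ne' a] at this
    · have := smul_le_smul_of_nonneg_left (le_sup_right : r • b ≤ r • a ⊔ r • b)
        (inv_pos.mpr hr).le
      rwa [inv_smul_smul₀ hr.ne' b] at this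
  have := smul_le_smul_of_nonneg_left h1 hr.le
  rwa [smul_inv_smul₀ hr.ne'] at this

theorem phiAux_smul_inf {r : ℝ} (hr : 0 < r) (a b : E) : r • (a ⊓ b) = r • a ⊓ r • b := by
  have : a ⊓ b = -((-a) ⊔ (-b)) := by rw [neg_sup]; simp
  rw [this, smul_neg, phiAux_smul_sup hr, neg_sup, smul_neg, smul_neg, neg_neg, neg_neg]

theorem phiAux_smul_mono_scalar {r r' : ℝ} (h : r ≤ r') {a : E} (ha : 0 ≤ a) :
    r • a ≤ r' • a := by
  have h0 : 0 ≤ (r' - r) • a := smul_nonneg (by linarith) ha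
  rw [sub_smul] at h0
  exact sub_nonneg.1 h0

theorem phiAux_posneg_inf (a : E) : (a ⊔ 0) ⊓ ((-a) ⊔ 0) = 0 := by
  simpa [posPart_def, negPart_def] using posPart_inf_negPart_eq_zero a

theorem phiAux_pos_sub_neg (a : E) : a = (a ⊔ 0) - ((-a) ⊔ 0) := by
  simpa [posPart_def, negPart_def] using (posPart_sub_negPart a).symm

theorem phiAux_inf_add {a x y : E} (ha : 0 ≤ a) (hx : 0 ≤ x) (hy : 0 ≤ y) :
    a ⊓ (x + y) ≤ a ⊓ x + a ⊓ y := by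
  have key : a ⊓ (x + y) - a ⊓ x ≤ a ⊓ y := by
    rw [sub_inf]
    refine sup_le ?_ ?_
    · have h1 : a ⊓ (x + y) - a ≤ 0 := sub_nonpos.2 inf_le_left
      exact h1.trans (le_inf ha hy)
    · refine le_inf ?_ ?_
      · have h1 : a ⊓ (x + y) - x ≤ a - x := sub_le_sub_right inf_le_left x
        exact h1.trans (sub_le_self a hx)
      · have h1 : a ⊓ (x + y) ≤ x + y := inf_le_right
        have := sub_le_sub_right h1 x
        simpa [add_comm] using this
  have := add_le_add_right key (a ⊓ x)
  simpa [add_comm] using this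

theorem phiAux_sum_le {ι : Type*} (t : Finset ι) (F G : ι → E)
    (hle : ∀ i ∈ t, F i ≤ G i) : ∑ i ∈ t, F i ≤ ∑ i ∈ t, G i := by
  classical
  induction t using Finset.induction_on with
  | empty => simp
  | insert a s hnotmem ih =>
    rw [Finset.sum_insert hnotmem, Finset.sum_insert hnotmem]
    exact add_le_add (hle _ (Finset.mem_insert_self _ _))
      (ih (fun i hi => hle i (Finset.mem_insert_of_mem hi)))

theorem phiAux_disj_scale {a b : E} (hab : a ⊓ b = 0) {r : ℝ} (hr : 0 < r) {c : E}
    (hc0 : 0 ≤ c) (hc : c ≤ r • a) : c ⊓ b = 0 := by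
  have ha : 0 ≤ a := by rw [← hab]; exact inf_le_left
  have hb : 0 ≤ b := by rw [← hab]; exact inf_le_right
  set r' : ℝ := max r 1 with hr'
  have hr'0 : 0 < r' := lt_of_lt_of_le one_pos (le_max_right _ _)
  have h1 : c ≤ r' • a := hc.trans (phiAux_smul_mono_scalar (le_max_left _ _) ha)
  have h2 : b ≤ r' • b := by
    have := phiAux_smul_mono_scalar (le_max_right r 1) hb
    rwa [one_smul] at this
  have h3 : c ⊓ b ≤ r' • a ⊓ r' • b := inf_le_inf h1 h2
  rw [← phiAux_smul_inf hr'0, hab, smul_zero] at h3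
  exact le_antisymm h3 (le_inf hc0 hb)

variable (mul : E →ₗ[ℝ] E →ₗ[ℝ] E) (e : E)
  (hpos : ∀ f g : E, 0 ≤ f → 0 ≤ g → 0 ≤ mul f g)
  (hf1 : ∀ f g c : E, f ⊓ g = 0 → 0 ≤ c → (mul c f) ⊓ g = 0)
  (hf2 : ∀ f g c : E, f ⊓ g = 0 → 0 ≤ c → (mul f c) ⊓ g = 0)
  (hunitr : ∀ f : E, mul f e = f) (hunitl : ∀ f : E, mul e f = f)

include hpos hf1 hf2 hunitr hunitl

theorem phiAux_mul_mono_right {a b : E} (hab : a ≤ b) {c : E} (hc : 0 ≤ c) :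
    mul c a ≤ mul c b := by
  have := hpos c (b - a) hc (sub_nonneg.2 hab)
  rw [map_sub] at this
  exact sub_nonneg.1 this

theorem phiAux_mul_mono_left {a b : E} (hab : a ≤ b) {c : E} (hc : 0 ≤ c) :
    mul a c ≤ mul b c := by
  have := hpos (b - a) c (sub_nonneg.2 hab) hc
  rw [map_sub, LinearMap.sub_apply] at this
  exact sub_nonneg.1 this

theorem phiAux_disj_mul {a b : E} (hab : a ⊓ b = 0) : mul a b = 0 := by
  have ha : 0 ≤ a := by rw [← hab]; exact inf_le_left
  have hb : 0 ≤ b := by rw [← hab]; exact inf_le_right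
  have h1 : (mul a b) ⊓ b = 0 := hf2 a b b hab hb
  rw [inf_comm] at h1
  have h3 : (mul a b) ⊓ (mul a b) = 0 := hf1 b (mul a b) a h1 ha
  rwa [inf_idem] at h3

theorem phiAux_sq_nonneg (g : E) : 0 ≤ mul g g := by
  set p := g ⊔ 0 with hp
  set n := (-g) ⊔ 0 with hn
  have hpn : p ⊓ n = 0 := phiAux_posneg_inf g
  have hnp : n ⊓ p = 0 := by rwa [inf_comm] at hpn
  have h1 : mul p n = 0 := phiAux_disj_mul mul e hpos hf1 hf2 hunitr hunitl hpn
  have h2 : mul n p = 0 := phiAux_disj_mul mul e hpos hf1 hf2 hunitr hunitl hnp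
  have hg : g = p - n := phiAux_pos_sub_neg g
  have hexp : mul g g = mul p p - mul p n - mul n p + mul n n := by
    rw [hg]; simp only [map_sub, LinearMap.sub_apply]; abel
  rw [hexp, h1, h2]
  have := add_nonneg (hpos p p le_sup_right le_sup_right) (hpos n n le_sup_right le_sup_right)
  simpa using this

theorem phiAux_expand (g : E) (l : ℝ) :
    mul (g - l • e) (g - l • e) = mul g g - (2*l) • g + (l^2) • e := by
  simp only [map_sub, map_smul, LinearMap.sub_apply, LinearMap.smul_apply, hunitr, hunitl]
  module

theorem phiAux_quad (g : E) {a : ℝ} (ha : 0 < a) :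
    a • g - (a^2) • e ≤ mul g g := by
  have h0 := phiAux_sq_nonneg mul e hpos hf1 hf2 hunitr hunitl (g - (a/2) • e)
  rw [phiAux_expand mul e hpos hf1 hf2 hunitr hunitl g (a/2)] at h0
  have h1 : (2*(a/2)) • g = a • g := by rw [show (2*(a/2) : ℝ) = a by ring]
  have h2 : ((a/2)^2 : ℝ) ≤ a^2 := by nlinarith
  have he : 0 ≤ e := by
    have := phiAux_sq_nonneg mul e hpos hf1 hf2 hunitr hunitl e; rwa [hunitr e] at this
  have h3 : ((a/2)^2) • e ≤ (a^2) • e := phiAux_smul_mono_scalar h2 he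
  have h4 : a • g - ((a/2)^2) • e ≤ mul g g := by
    rw [← h1]
    refine sub_nonneg.1 ?_
    calc (0:E) ≤ mul g g - (2*(a/2)) • g + ((a/2)^2) • e := h0
      _ = mul g g - ((2*(a/2)) • g - ((a/2)^2) • e) := by abel
  calc a • g - (a^2) • e ≤ a • g - ((a/2)^2) • e := sub_le_sub_left h3 _
    _ ≤ mul g g := h4

end Helpers

/-- In an Archimedean Φ-algebra with multiplicative unit `e`, for every `f`
the supremum `sup_{λ∈ℝ} (2λf − λ²e)` exists and equals `f² = mul f f`. -/
theorem phiAlgebra_square_isLUB {E : Type*} [Lattice E] [AddCommGroup E]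
    [Module ℝ E] [CovariantClass E E (· + ·) (· ≤ ·)] [PosSMulMono ℝ E]
    (hArch : ∀ x y : E, (∀ n : ℕ, (n : ℝ) • x ≤ y) → x ≤ 0)
    (mul : E →ₗ[ℝ] E →ₗ[ℝ] E) (e : E)
    (hassoc : ∀ f g h : E, mul (mul f g) h = mul f (mul g h))
    (hpos : ∀ f g : E, 0 ≤ f → 0 ≤ g → 0 ≤ mul f g)
    (hf1 : ∀ f g c : E, f ⊓ g = 0 → 0 ≤ c → (mul c f) ⊓ g = 0)
    (hf2 : ∀ f g c : E, f ⊓ g = 0 → 0 ≤ c → (mul f c) ⊓ g = 0)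
    (hunitr : ∀ f : E, mul f e = f) (hunitl : ∀ f : E, mul e f = f)
    (f : E) :
    IsLUB (Set.range fun l : ℝ => (2 * l) • f - (l ^ 2) • e) (mul f f) := by
  have hsqnn := phiAux_sq_nonneg mul e hpos hf1 hf2 hunitr hunitl
  have hexp := phiAux_expand mul e hpos hf1 hf2 hunitr hunitl
  have hquad := phiAux_quad mul e hpos hf1 hf2 hunitr hunitl
  have hmonoR := fun {a b} hab {c} hc =>
    phiAux_mul_mono_right mul e hpos hf1 hf2 hunitr hunitl (a := a) (b := b) hab (c := c) hc
  have hmonoL := fun {a b} hab {c} hc =>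
    phiAux_mul_mono_left mul e hpos hf1 hf2 hunitr hunitl (a := a) (b := b) hab (c := c) hc
  have hdmul := fun {a b} hab =>
    phiAux_disj_mul mul e hpos hf1 hf2 hunitr hunitl (a := a) (b := b) hab
  have he : 0 ≤ e := by
    have := hsqnn e; rwa [hunitr e] at this
  constructor
  · rintro x ⟨l, rfl⟩
    have h0 := hsqnn (f - l • e)
    rw [hexp f l] at h0
    have h1 : mul f f - (2*l) • f + (l^2) • e = mul f f - ((2*l) • f - (l^2) • e) := by abel
    rw [h1] at h0
    simpa using sub_nonneg.1 h0
  · intro b hb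
    have hb' : ∀ l : ℝ, (2*l) • f - (l^2) • e ≤ b := by
      intro l
      simpa using hb ⟨l, rfl⟩
    have hF : 0 ≤ mul f f := hsqnn f
    set w : E := (mul f f - b) ⊔ 0 with hw
    have hw0 : 0 ≤ w := le_sup_right
    have hwle : ∀ l : ℝ, w ≤ mul (f - l • e) (f - l • e) := by
      intro l
      refine sup_le ?_ (hsqnn _)
      rw [hexp f l]
      have h2 : mul f f - ((2*l) • f - (l^2) • e) = mul f f - (2*l) • f + (l^2) • e := by abel
      rw [← h2]
      exact sub_le_sub_left (hb' l) _
    have hz0 : 0 ≤ mul (mul f f) w := hpos _ _ hF hw0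
    have hmain : ∀ h : ℝ, 0 < h → w ≤ (4*h^2) • e := by
      intro h hh
      have hhi : 0 < h⁻¹ := inv_pos.mpr hh
      set z : E := mul (mul f f) w with hzdef
      set g : ℤ → E := fun k => f - ((k:ℝ)*h) • e with hgdef
      set s : ℤ → E := fun k => e ⊓ ((h⁻¹ • g k) ⊔ 0) with hsdef
      have hgk : ∀ k : ℤ, g k = f - ((k:ℝ)*h) • e := fun k => rfl
      have hsk : ∀ k : ℤ, s k = e ⊓ ((h⁻¹ • g k) ⊔ 0) := fun k => rfl
      have hgadd : ∀ k m : ℤ, g (k+m) = g k - ((m:ℝ)*h) • e := by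
        intro k m
        simp only [hgk]
        push_cast
        module
      have hwg : ∀ k : ℤ, w ≤ mul (g k) (g k) := fun k => hwle ((k:ℝ)*h)
      have hs0 : ∀ k : ℤ, 0 ≤ s k := by
        intro k; rw [hsk]; exact le_inf he le_sup_right
      have hse : ∀ k : ℤ, s k ≤ e := by
        intro k; rw [hsk]; exact inf_le_left
      have hsmono : ∀ k : ℤ, s (k+1) ≤ s k := by
        intro k
        rw [hsk, hsk]
        refine inf_le_inf_left e (sup_le_sup_right ?_ 0)
        refine smul_le_smul_of_nonneg_left ?_ hhi.le
        rw [hgadd k 1]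
        exact sub_le_self _ (smul_nonneg (by positivity) he)
      have hstep : ∀ k : ℤ, e - s (k+1) ≤ h⁻¹ • ((-(g (k+2))) ⊔ 0) := by
        intro k
        have h1 : e - s (k+1) = (e - ((h⁻¹ • g (k+1)) ⊔ 0)) ⊔ 0 := by
          rw [hsk, sub_inf, sub_self, sup_comm]
        have h2 : e - ((h⁻¹ • g (k+1)) ⊔ 0) ≤ e - h⁻¹ • g (k+1) :=
          sub_le_sub_left le_sup_left e
        have h3 : e - h⁻¹ • g (k+1) = -(h⁻¹ • g (k+2)) := by
          rw [hgk (k+1), hgk (k+2)]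
          push_cast
          match_scalars <;> field_simp <;> ring
        rw [h1]
        calc (e - ((h⁻¹ • g (k+1)) ⊔ 0)) ⊔ 0 ≤ (e - h⁻¹ • g (k+1)) ⊔ 0 :=
              sup_le_sup_right h2 0
          _ = (-(h⁻¹ • g (k+2))) ⊔ 0 := by rw [h3]
          _ = h⁻¹ • ((-(g (k+2))) ⊔ 0) := by
              rw [phiAux_smul_sup hhi, smul_neg, smul_zero]
      have hck : ∀ k : ℤ, mul (s k - s (k+1)) w ≤ (4*h^2) • (s k - s (k+1)) := by
        intro k
        have hck0 : 0 ≤ s k - s (k+1) := sub_nonneg.2 (hsmono k)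
        set ck : E := s k - s (k+1) with hckdef
        have hA : ck ⊓ (g (k+2) ⊔ 0) = 0 := by
          have h1 : ck ≤ e - s (k+1) := sub_le_sub_right (hse k) _
          refine phiAux_disj_scale ?_ hhi hck0 (h1.trans (hstep k))
          rw [inf_comm]
          exact phiAux_posneg_inf (g (k+2))
        have hB : ck ⊓ ((-(g (k-2))) ⊔ 0) = 0 := by
          have h1 : ck ≤ s k := sub_le_self _ (hs0 (k+1))
          have h3 : g k ≤ g (k-2) := by
            have h4 := hgadd (k-2) 2
            rw [show k-2+2 = k by ring] at h4
            rw [h4]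
            exact sub_le_self _ (smul_nonneg (by positivity) he)
          have h2 : s k ≤ h⁻¹ • (g (k-2) ⊔ 0) := by
            calc s k ≤ (h⁻¹ • g k) ⊔ 0 := by rw [hsk]; exact inf_le_right
              _ ≤ (h⁻¹ • g (k-2)) ⊔ 0 :=
                  sup_le_sup_right (smul_le_smul_of_nonneg_left h3 hhi.le) 0
              _ = h⁻¹ • (g (k-2) ⊔ 0) := by rw [phiAux_smul_sup hhi, smul_zero]
          exact phiAux_disj_scale (phiAux_posneg_inf (g (k-2))) hhi hck0 (h1.trans h2)
        have hprod : mul (g k) (g k) - (4*h^2) • e = mul (g (k+2)) (g (k-2)) := by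
          have e1 : g (k+2) = g k - (2*h) • e := by
            have := hgadd k 2
            rwa [show (((2:ℤ)):ℝ) = 2 by norm_num] at this
          have e2 : g (k-2) = g k + (2*h) • e := by
            have h4 := hgadd (k-2) 2
            rw [show k-2+2 = k by ring, show (((2:ℤ)):ℝ) = 2 by norm_num] at h4
            rw [h4]; abel
          rw [e1, e2]
          simp only [map_sub, map_add, map_smul, LinearMap.sub_apply, LinearMap.add_apply,
            LinearMap.smul_apply, hunitr, hunitl]
          module
        have hP1 : 0 ≤ mul (g (k+2) ⊔ 0) (g (k-2) ⊔ 0) := hpos _ _ le_sup_right le_sup_right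
        have hP2 : 0 ≤ mul ((-(g (k+2))) ⊔ 0) ((-(g (k-2))) ⊔ 0) :=
          hpos _ _ le_sup_right le_sup_right
        have hXle : (mul (g (k+2)) (g (k-2))) ⊔ 0 ≤
            mul (g (k+2) ⊔ 0) (g (k-2) ⊔ 0) + mul ((-(g (k+2))) ⊔ 0) ((-(g (k-2))) ⊔ 0) := by
          refine sup_le ?_ (add_nonneg hP1 hP2)
          have hc1 : 0 ≤ mul (g (k+2) ⊔ 0) ((-(g (k-2))) ⊔ 0) :=
            hpos _ _ le_sup_right le_sup_right
          have hc2 : 0 ≤ mul ((-(g (k+2))) ⊔ 0) (g (k-2) ⊔ 0) :=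
            hpos _ _ le_sup_right le_sup_right
          have hexp2 : mul (g (k+2)) (g (k-2)) =
              mul (g (k+2) ⊔ 0) (g (k-2) ⊔ 0) - mul (g (k+2) ⊔ 0) ((-(g (k-2))) ⊔ 0)
                - mul ((-(g (k+2))) ⊔ 0) (g (k-2) ⊔ 0)
                + mul ((-(g (k+2))) ⊔ 0) ((-(g (k-2))) ⊔ 0) := by
            conv_lhs => rw [phiAux_pos_sub_neg (g (k+2)), phiAux_pos_sub_neg (g (k-2))]
            simp only [map_sub, LinearMap.sub_apply]
            abel
          rw [hexp2]
          have h5 : mul (g (k+2) ⊔ 0) (g (k-2) ⊔ 0)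
              - mul (g (k+2) ⊔ 0) ((-(g (k-2))) ⊔ 0)
              - mul ((-(g (k+2))) ⊔ 0) (g (k-2) ⊔ 0) ≤ mul (g (k+2) ⊔ 0) (g (k-2) ⊔ 0) :=
            (sub_le_self _ hc2).trans (sub_le_self _ hc1)
          exact add_le_add_left h5 _
        have h01 : ck ⊓ mul (g (k+2) ⊔ 0) (g (k-2) ⊔ 0) = 0 := by
          have h1 : (g (k+2) ⊔ 0) ⊓ ck = 0 := by rwa [inf_comm] at hA
          have := hf2 (g (k+2) ⊔ 0) ck (g (k-2) ⊔ 0) h1 le_sup_right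
          rwa [inf_comm] at this
        have h02 : ck ⊓ mul ((-(g (k+2))) ⊔ 0) ((-(g (k-2))) ⊔ 0) = 0 := by
          have h1 : ((-(g (k-2))) ⊔ 0) ⊓ ck = 0 := by rwa [inf_comm] at hB
          have := hf1 ((-(g (k-2))) ⊔ 0) ck ((-(g (k+2))) ⊔ 0) h1 le_sup_right
          rwa [inf_comm] at this
        have hdisjX : ck ⊓ ((mul (g k) (g k) - (4*h^2) • e) ⊔ 0) = 0 := by
          rw [hprod]
          refine le_antisymm ?_ (le_inf hck0 le_sup_right)
          calc ck ⊓ ((mul (g (k+2)) (g (k-2))) ⊔ 0)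
              ≤ ck ⊓ (mul (g (k+2) ⊔ 0) (g (k-2) ⊔ 0)
                  + mul ((-(g (k+2))) ⊔ 0) ((-(g (k-2))) ⊔ 0)) := inf_le_inf_left ck hXle
            _ ≤ ck ⊓ mul (g (k+2) ⊔ 0) (g (k-2) ⊔ 0)
                  + ck ⊓ mul ((-(g (k+2))) ⊔ 0) ((-(g (k-2))) ⊔ 0) :=
                phiAux_inf_add hck0 hP1 hP2
            _ = 0 := by rw [h01, h02, add_zero]
        have hmz : mul ck ((mul (g k) (g k) - (4*h^2) • e) ⊔ 0) = 0 := hdmul hdisjX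
        calc mul ck w ≤ mul ck (mul (g k) (g k)) := hmonoR (hwg k) hck0
          _ ≤ mul ck ((4*h^2) • e + ((mul (g k) (g k) - (4*h^2) • e) ⊔ 0)) := by
              refine hmonoR ?_ hck0
              calc mul (g k) (g k) = (4*h^2) • e + (mul (g k) (g k) - (4*h^2) • e) := by abel
                _ ≤ (4*h^2) • e + ((mul (g k) (g k) - (4*h^2) • e) ⊔ 0) :=
                    add_le_add_right le_sup_left _
          _ = (4*h^2) • ck := by
              rw [map_add, map_smul, hunitr ck, hmz, add_zero]
      refine sub_nonpos.1 (hArch (w - (4*h^2) • e) ((2/h^2) • z) ?_)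
      intro n
      rcases Nat.eq_zero_or_pos n with hn | hn
      · subst hn
        simpa using smul_nonneg (by positivity) hz0
      have hn0 : (0:ℝ) < (n:ℝ) := by exact_mod_cast hn
      set K : ℕ := n + 1 with hKdef
      have hK0 : (0:ℝ) < (K:ℝ) := by exact_mod_cast Nat.succ_pos n
      have htel : ∑ i ∈ Finset.range (2*K), (s ((i:ℤ) - (K:ℤ)) - s (((i:ℤ) - (K:ℤ)) + 1))
          = s (-(K:ℤ)) - s ((K:ℤ)) := by
        have h0 := Finset.sum_range_sub' (fun i : ℕ => s ((i:ℤ) - (K:ℤ))) (2*K)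
        calc ∑ i ∈ Finset.range (2*K), (s ((i:ℤ) - (K:ℤ)) - s (((i:ℤ) - (K:ℤ)) + 1))
            = ∑ i ∈ Finset.range (2*K), (s ((i:ℤ) - (K:ℤ)) - s ((((i+1:ℕ)):ℤ) - (K:ℤ))) := by
              refine Finset.sum_congr rfl (fun i _ => ?_)
              congr 2
              push_cast
              ring
          _ = s (((0:ℕ):ℤ) - (K:ℤ)) - s (((2*K:ℕ):ℤ) - (K:ℤ)) := h0
          _ = s (-(K:ℤ)) - s ((K:ℤ)) := by
              rw [show ((0:ℕ):ℤ) - (K:ℤ) = -(K:ℤ) by push_cast; ring,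
                show ((2*K:ℕ):ℤ) - (K:ℤ) = (K:ℤ) by push_cast; ring]
      have hsum : mul (s (-(K:ℤ)) - s ((K:ℤ))) w ≤ (4*h^2) • (s (-(K:ℤ)) - s ((K:ℤ))) := by
        rw [← htel]
        calc mul (∑ i ∈ Finset.range (2*K), (s ((i:ℤ) - (K:ℤ)) - s (((i:ℤ) - (K:ℤ)) + 1))) w
            = ∑ i ∈ Finset.range (2*K),
                mul (s ((i:ℤ) - (K:ℤ)) - s (((i:ℤ) - (K:ℤ)) + 1)) w := by
              simp only [map_sum, LinearMap.sum_apply]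
          _ ≤ ∑ i ∈ Finset.range (2*K),
                (4*h^2) • (s ((i:ℤ) - (K:ℤ)) - s (((i:ℤ) - (K:ℤ)) + 1)) :=
              phiAux_sum_le _ _ _ (fun i _ => hck _)
          _ = (4*h^2) • ∑ i ∈ Finset.range (2*K),
                (s ((i:ℤ) - (K:ℤ)) - s (((i:ℤ) - (K:ℤ)) + 1)) := (Finset.smul_sum).symm
      have hKe : s (-(K:ℤ)) - s ((K:ℤ)) ≤ e := (sub_le_self _ (hs0 _)).trans (hse _)
      have h5 : w - mul (e - (s (-(K:ℤ)) - s ((K:ℤ)))) w ≤ (4*h^2) • e := by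
        have h6 : mul (e - (s (-(K:ℤ)) - s ((K:ℤ)))) w
            = w - mul (s (-(K:ℤ)) - s ((K:ℤ))) w := by
          rw [map_sub, LinearMap.sub_apply, hunitl w]
        rw [h6]
        have h7 : (4*h^2) • (s (-(K:ℤ)) - s ((K:ℤ))) ≤ (4*h^2) • e :=
          smul_le_smul_of_nonneg_left hKe (by positivity)
        calc w - (w - mul (s (-(K:ℤ)) - s ((K:ℤ))) w)
            = mul (s (-(K:ℤ)) - s ((K:ℤ))) w := by abel
          _ ≤ (4*h^2) • e := hsum.trans h7
      have ha : (0:ℝ) < (K:ℝ)*h := mul_pos hK0 hh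
      have hb2 : (0:ℝ) < (n:ℝ)*h := mul_pos hn0 hh
      have htail1 : s ((K:ℤ)) ≤ (h⁻¹ * ((K:ℝ)*h)⁻¹) • (mul f f) := by
        have hq := hquad f ha
        have hgK : ((K:ℝ)*h) • g ((K:ℤ)) = ((K:ℝ)*h) • f - (((K:ℝ)*h)^2) • e := by
          rw [hgk]
          push_cast
          rw [smul_sub, smul_smul]
          module
        have hgKle : g ((K:ℤ)) ≤ (((K:ℝ)*h)⁻¹) • (mul f f) := by
          have h1 : ((K:ℝ)*h) • g ((K:ℤ)) ≤ mul f f := by rw [hgK]; exact hq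
          have h2 := smul_le_smul_of_nonneg_left h1 (inv_pos.mpr ha).le
          rwa [smul_smul, inv_mul_cancel₀ ha.ne', one_smul] at h2
        calc s ((K:ℤ)) ≤ (h⁻¹ • g ((K:ℤ))) ⊔ 0 := by rw [hsk]; exact inf_le_right
          _ = h⁻¹ • (g ((K:ℤ)) ⊔ 0) := by rw [phiAux_smul_sup hhi, smul_zero]
          _ ≤ h⁻¹ • ((((K:ℝ)*h)⁻¹) • (mul f f)) :=
              smul_le_smul_of_nonneg_left
                (sup_le hgKle (smul_nonneg (inv_pos.mpr ha).le hF)) hhi.le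
          _ = (h⁻¹ * ((K:ℝ)*h)⁻¹) • (mul f f) := by rw [smul_smul]
      have htail2 : e - s (-(K:ℤ)) ≤ (h⁻¹ * ((n:ℝ)*h)⁻¹) • (mul f f) := by
        have hst := hstep (-(K:ℤ)-1)
        rw [show (-(K:ℤ)-1+1) = -(K:ℤ) by ring,
          show (-(K:ℤ)-1+2) = -((n:ℤ)) by rw [hKdef]; push_cast; ring] at hst
        have hgn : ((n:ℝ)*h) • (-(g (-(n:ℤ)))) = ((n:ℝ)*h) • (-f) - (((n:ℝ)*h)^2) • e := by
          rw [hgk]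
          push_cast
          module
        have hq2 := hquad (-f) hb2
        have hmm2 : mul (-f) (-f) = mul f f := by
          simp only [map_neg, LinearMap.neg_apply, neg_neg]
        have h1 : ((n:ℝ)*h) • (-(g (-(n:ℤ)))) ≤ mul f f := by
          rw [hgn, ← hmm2]; exact hq2
        have h2 : (-(g (-(n:ℤ)))) ≤ (((n:ℝ)*h)⁻¹) • mul f f := by
          have := smul_le_smul_of_nonneg_left h1 (inv_pos.mpr hb2).le
          rwa [smul_smul, inv_mul_cancel₀ hb2.ne', one_smul] at this
        calc e - s (-(K:ℤ)) ≤ h⁻¹ • ((-(g (-(n:ℤ)))) ⊔ 0) := hst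
          _ ≤ h⁻¹ • ((((n:ℝ)*h)⁻¹) • mul f f) :=
              smul_le_smul_of_nonneg_left
                (sup_le h2 (smul_nonneg (inv_pos.mpr hb2).le hF)) hhi.le
          _ = (h⁻¹ * ((n:ℝ)*h)⁻¹) • mul f f := by rw [smul_smul]
      have htail : e - (s (-(K:ℤ)) - s ((K:ℤ))) ≤ (2/((n:ℝ)*h^2)) • (mul f f) := by
        calc e - (s (-(K:ℤ)) - s ((K:ℤ))) = (e - s (-(K:ℤ))) + s ((K:ℤ)) := by abel
          _ ≤ (h⁻¹ * ((n:ℝ)*h)⁻¹) • (mul f f) + (h⁻¹ * ((K:ℝ)*h)⁻¹) • (mul f f) :=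
              add_le_add htail2 htail1
          _ = ((h⁻¹ * ((n:ℝ)*h)⁻¹) + (h⁻¹ * ((K:ℝ)*h)⁻¹)) • (mul f f) := (add_smul _ _ _).symm
          _ ≤ (2/((n:ℝ)*h^2)) • (mul f f) := by
              refine phiAux_smul_mono_scalar ?_ hF
              have hKn : (n:ℝ) ≤ (K:ℝ) := by
                rw [hKdef]; push_cast; linarith
              have e1 : h⁻¹ * ((n:ℝ)*h)⁻¹ = 1/((n:ℝ)*h^2) := by
                field_simp
              have e2 : h⁻¹ * ((K:ℝ)*h)⁻¹ ≤ 1/((n:ℝ)*h^2) := by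
                rw [show h⁻¹ * ((K:ℝ)*h)⁻¹ = 1/((K:ℝ)*h^2) by field_simp]
                apply one_div_le_one_div_of_le (by positivity)
                have := mul_le_mul_of_nonneg_right hKn (sq_nonneg h)
                linarith
              have e3 : (1:ℝ)/((n:ℝ)*h^2) + 1/((n:ℝ)*h^2) = 2/((n:ℝ)*h^2) := by ring
              rw [e1]
              linarith
      have h8 : mul (e - (s (-(K:ℤ)) - s ((K:ℤ)))) w ≤ (2/((n:ℝ)*h^2)) • z := by
        calc mul (e - (s (-(K:ℤ)) - s ((K:ℤ)))) w
            ≤ mul ((2/((n:ℝ)*h^2)) • (mul f f)) w := hmonoL htail hw0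
          _ = (2/((n:ℝ)*h^2)) • z := by
              rw [map_smul, LinearMap.smul_apply, ← hzdef]
      have h9 : w ≤ (4*h^2) • e + (2/((n:ℝ)*h^2)) • z := by
        calc w = (w - mul (e - (s (-(K:ℤ)) - s ((K:ℤ)))) w)
              + mul (e - (s (-(K:ℤ)) - s ((K:ℤ)))) w := by abel
          _ ≤ (4*h^2) • e + (2/((n:ℝ)*h^2)) • z := add_le_add h5 h8
      have h10 : w - (4*h^2) • e ≤ (2/((n:ℝ)*h^2)) • z := sub_le_iff_le_add'.2 h9
      have h11 := smul_le_smul_of_nonneg_left h10 hn0.le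
      rw [smul_smul, show (n:ℝ) * (2/((n:ℝ)*h^2)) = 2/h^2 by field_simp] at h11
      exact h11
    have hfinal : ∀ n : ℕ, (n:ℝ) • w ≤ (4:ℝ) • e := by
      intro n
      rcases Nat.eq_zero_or_pos n with hn | hn
      · subst hn
        simpa using smul_nonneg (by norm_num : (0:ℝ) ≤ 4) he
      · have hn0 : (0:ℝ) < (n:ℝ) := by exact_mod_cast hn
        have h1 := hmain ((n:ℝ)⁻¹) (by positivity)
        have h2 := smul_le_smul_of_nonneg_left h1 hn0.le
        rw [smul_smul] at h2
        refine h2.trans (phiAux_smul_mono_scalar ?_ he)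
        rw [show ((n:ℝ) * (4 * ((n:ℝ)⁻¹)^2)) = 4 / n by field_simp]
        rw [div_le_iff₀ hn0]
        have h1n : (1:ℝ) ≤ (n:ℝ) := by exact_mod_cast hn
        nlinarith
    have h12 := hArch w ((4:ℝ) • e) hfinal
    have h13 : mul f f - b ≤ 0 := le_trans le_sup_left h12
    exact sub_nonpos.1 h13
end

section
/- Let (E,e) be a vector lattice with designated element e, let f ∈ E be such that f^[2] := sup_{λ∈ℝ}(2λf − λ²e) exists in E, and let t ∈ ℝ. Then (f + te)^[2] exists and equals f^[2] + 2tf + t²e. -/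
/-! Completing the square, `2λ(f + te) - λ²e = (2(λ - t)f - (λ - t)²e) + (2tf + t²e)`: the family
defining `(f + te)^[2]` is the one defining `f^[2]`, reparametrized by `λ ↦ λ - t` and translated by
`2tf + t²e`. Translation is an order automorphism, so it carries the supremum along. -/

open Set

theorem IsLUB.range_add_const {ι E : Type*} [AddGroup E] [Preorder E] [AddRightMono E]
    {g : ι → E} {s : E} (h : IsLUB (range g) s) (c : E) :
    IsLUB (range fun i => g i + c) (s + c) := by
  simpa only [← range_comp', OrderIso.addRight_apply] using (OrderIso.addRight c).isLUB_image'.2 h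

theorem IsLUB.range_comp_surjective {ι ι' E : Type*} [Preorder E] {g : ι' → E} {s : E}
    (h : IsLUB (range g) s) {σ : ι → ι'} (hσ : σ.Surjective) :
    IsLUB (range fun i => g (σ i)) s := by
  rwa [← Function.comp_def, hσ.range_comp]

theorem smul_add_smul_sub_sq_smul_eq {E : Type*} [AddCommGroup E] [Module ℝ E]
    (e f : E) (t l : ℝ) :
    (2 * l) • (f + t • e) - (l ^ 2) • e
      = ((2 * (l - t)) • f - ((l - t) ^ 2) • e) + ((2 * t) • f + (t ^ 2) • e) := by
  module

theorem square_add_smul_unit_general {E : Type*} [Lattice E] [AddCommGroup E]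
    [Module ℝ E] [CovariantClass E E (· + ·) (· ≤ ·)]
    (e : E) (f : E) (s : E)
    (hsq : IsLUB (Set.range fun l : ℝ => (2 * l) • f - (l ^ 2) • e) s)
    (t : ℝ) :
    IsLUB (Set.range fun l : ℝ => (2 * l) • (f + t • e) - (l ^ 2) • e)
      (s + (2 * t) • f + (t ^ 2) • e) := by
  have hshift := (hsq.range_comp_surjective (Equiv.subRight t).surjective).range_add_const
    ((2 * t) • f + (t ^ 2) • e)
  simpa only [Equiv.subRight_apply, funext (smul_add_smul_sub_sq_smul_eq e f t), add_assoc]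
    using hshift

/-- If `f^[2]` exists then `(f + t e)^[2]` exists and equals `f^[2] + 2tf + t²e`. -/
theorem square_add_smul_unit {E : Type*} [Lattice E] [AddCommGroup E]
    [Module ℝ E] [CovariantClass E E (· + ·) (· ≤ ·)] [PosSMulMono ℝ E]
    (e : E) (f : E) (s : E)
    (hsq : IsLUB (Set.range fun l : ℝ => (2 * l) • f - (l ^ 2) • e) s)
    (t : ℝ) :
    IsLUB (Set.range fun l : ℝ => (2 * l) • (f + t • e) - (l ^ 2) • e)
      (s + (2 * t) • f + (t ^ 2) • e) :=
  square_add_smul_unit_general e f s hsq t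
end

section
/- Let E be a vector lattice with e ∈ E⁺ such that f^[2] := sup_{λ∈ℝ}(2λf − λ²e) exists for all f ∈ E. Then for all f, g ∈ E⁺ one has f^[2] + g^[2] ≤ (f+g)^[2]. -/
/-!
For `λ, μ ∈ ℝ` put `ν = max λ μ`. Positivity of `f` and `g` gives `2λf + 2μg ≤ 2ν(f + g)`, and
`ν² ≤ λ² + μ²` together with `0 ≤ e` gives `ν²e ≤ λ²e + μ²e`; hence the `λ`-term of `f^[2]` plus
the `μ`-term of `g^[2]` lies below the `ν`-term of `(f + g)^[2]`. Taking suprema over `λ` and `μ`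
gives the inequality.
-/

open Set
open scoped Pointwise

lemma max_sq_le_sq_add_sq (l m : ℝ) : max l m ^ 2 ≤ l ^ 2 + m ^ 2 := by
  rcases max_choice l m with h | h <;> rw [h] <;> nlinarith [sq_nonneg l, sq_nonneg m]

section SqTangent

variable {E : Type*} [AddCommGroup E] [PartialOrder E] [IsOrderedAddMonoid E] [Module ℝ E]
  [PosSMulMono ℝ E]

/-- `f^[2]` is the supremum of `sqTangent e f λ` over `λ ∈ ℝ`. -/
def sqTangent (e f : E) (l : ℝ) : E := (2 * l) • f - l ^ 2 • e

lemma sqTangent_add_sqTangent_le {e f g : E} (he : 0 ≤ e) (hf : 0 ≤ f) (hg : 0 ≤ g) (l m : ℝ) :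
    sqTangent e f l + sqTangent e g m ≤ sqTangent e (f + g) (max l m) := by
  have hf' : (2 * l) • f ≤ (2 * max l m) • f := by
    gcongr
    exact le_max_left l m
  have hg' : (2 * m) • g ≤ (2 * max l m) • g := by
    gcongr
    exact le_max_right l m
  have he' : max l m ^ 2 • e ≤ l ^ 2 • e + m ^ 2 • e := by
    rw [← add_smul]
    exact smul_le_smul_of_nonneg_right (max_sq_le_sq_add_sq l m) he
  unfold sqTangent
  rw [smul_add, sub_add_sub_comm]
  exact sub_le_sub (add_le_add hf' hg') he'

end SqTangent

/-- In a square closed positively pointed vector lattice,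
`f^[2] + g^[2] ≤ (f+g)^[2]` for positive `f, g`. -/
theorem square_superadditive {E : Type*} [Lattice E] [AddCommGroup E]
    [Module ℝ E] [CovariantClass E E (· + ·) (· ≤ ·)] [PosSMulMono ℝ E]
    (e : E) (he : 0 ≤ e) (sq : E → E)
    (hsq : ∀ f : E, IsLUB (Set.range fun l : ℝ => (2 * l) • f - (l ^ 2) • e) (sq f))
    (f g : E) (hf : 0 ≤ f) (hg : 0 ≤ g) :
    sq f + sq g ≤ sq (f + g) := by
  have : IsOrderedAddMonoid E := { add_le_add_left := fun _ _ h c => add_le_add_left h c }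
  have hsum : IsLUB (range (sqTangent e f) + range (sqTangent e g)) (sq f + sq g) :=
    (hsq f).add (hsq g)
  refine hsum.2 ?_
  rintro _ ⟨_, ⟨l, rfl⟩, _, ⟨m, rfl⟩, rfl⟩
  exact (sqTangent_add_sqTangent_le he hf hg l m).trans ((hsq (f + g)).1 ⟨max l m, rfl⟩)
end

section
/- Let E be a vector lattice with e ∈ E⁺ such that f^[2] := sup_{λ∈ℝ}(2λf − λ²e) exists for all f ∈ E. If f, g ∈ E satisfy f ∧ g = 0, then f^[2] ∧ g^[2] = 0. -/
/-- If `v` is the supremum of `S` and `a ⊓ b ≤ 0` for all `b ∈ S`, then `a ⊓ v ≤ 0`. -/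
lemma inf_le_zero_of_isLUB {E : Type*} [Lattice E] [AddCommGroup E]
    [CovariantClass E E (· + ·) (· ≤ ·)]
    {a v : E} {S : Set E} (hv : IsLUB S v) (h : ∀ b ∈ S, a ⊓ b ≤ 0) :
    a ⊓ v ≤ 0 := by
  have hub : ∀ b ∈ S, b ≤ a ⊔ v - a := by
    intro b hb
    have h1 : a ⊓ b + (a ⊔ b) = a + b := inf_add_sup a b
    have h2 : a ⊔ b ≤ a ⊔ v := sup_le_sup_left (hv.1 hb) a
    have hb' : b = a ⊓ b + (a ⊔ b) - a := by rw [h1]; abel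
    rw [hb']
    have := add_le_add (h b hb) h2
    calc a ⊓ b + (a ⊔ b) - a ≤ 0 + (a ⊔ v) - a := by
          exact sub_le_sub_right this a
      _ = a ⊔ v - a := by abel
  have hv' : v ≤ a ⊔ v - a := hv.2 hub
  have h1 : a ⊓ v + (a ⊔ v) = a + v := inf_add_sup a v
  have : a ⊓ v = a + v - (a ⊔ v) := by rw [← h1]; abel
  rw [this]
  have : a + v ≤ a + (a ⊔ v - a) := add_le_add le_rfl hv'
  calc a + v - (a ⊔ v) ≤ a + (a ⊔ v - a) - (a ⊔ v) := sub_le_sub_right this _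
    _ = 0 := by abel

/-- In a square closed positively pointed vector lattice,
`f ∧ g = 0` implies `f^[2] ∧ g^[2] = 0`. -/
theorem square_disjoint {E : Type*} [Lattice E] [AddCommGroup E]
    [Module ℝ E] [CovariantClass E E (· + ·) (· ≤ ·)] [PosSMulMono ℝ E]
    (e : E) (he : 0 ≤ e) (sq : E → E)
    (hsq : ∀ f : E, IsLUB (Set.range fun l : ℝ => (2 * l) • f - (l ^ 2) • e) (sq f))
    (f g : E) (hfg : f ⊓ g = 0) :
    sq f ⊓ sq g = 0 := by
  have hf : 0 ≤ f := by rw [← hfg]; exact inf_le_left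
  have hg : 0 ≤ g := by rw [← hfg]; exact inf_le_right
  -- scaled infima vanish
  have key : ∀ c : ℝ, 0 < c → (c • f) ⊓ (c • g) ≤ 0 := by
    intro c hc
    have h1 : c⁻¹ • ((c • f) ⊓ (c • g)) ≤ f := by
      have : c⁻¹ • ((c • f) ⊓ (c • g)) ≤ c⁻¹ • (c • f) :=
        smul_le_smul_of_nonneg_left inf_le_left (by positivity)
      rwa [inv_smul_smul₀ hc.ne'] at this
    have h2 : c⁻¹ • ((c • f) ⊓ (c • g)) ≤ g := by
      have : c⁻¹ • ((c • f) ⊓ (c • g)) ≤ c⁻¹ • (c • g) :=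
        smul_le_smul_of_nonneg_left inf_le_right (by positivity)
      rwa [inv_smul_smul₀ hc.ne'] at this
    have h3 : c⁻¹ • ((c • f) ⊓ (c • g)) ≤ 0 := by
      rw [← hfg]; exact le_inf h1 h2
    have := smul_le_smul_of_nonneg_left h3 hc.le
    rwa [smul_inv_smul₀ hc.ne', smul_zero] at this
  -- a term is dominated by a positive multiple
  have dom : ∀ (l : ℝ) (x : E), 0 ≤ x → ∀ c : ℝ, 2 * l ≤ c →
      (2 * l) • x - (l ^ 2) • e ≤ c • x := by
    intro l x hx c hlc
    have h1 : (2 * l) • x - (l ^ 2) • e ≤ (2 * l) • x :=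
      sub_le_self _ (smul_nonneg (by positivity) he)
    have h2 : (2 * l) • x ≤ c • x := by
      have : (0:E) ≤ (c - 2 * l) • x := smul_nonneg (by linarith) hx
      rw [sub_smul] at this
      exact sub_nonneg.mp this
    exact h1.trans h2
  -- pairwise terms have inf ≤ 0
  have pair : ∀ l m : ℝ,
      ((2 * l) • f - (l ^ 2) • e) ⊓ ((2 * m) • g - (m ^ 2) • e) ≤ 0 := by
    intro l m
    set c : ℝ := |2 * l| + |2 * m| + 1 with hcdef
    have hc : 0 < c := by positivity
    have hfl := dom l f hf c (by have := le_abs_self (2 * l); have := abs_nonneg (2 * m); linarith)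
    have hgm := dom m g hg c (by have := le_abs_self (2 * m); have := abs_nonneg (2 * l); linarith)
    exact (inf_le_inf hfl hgm).trans (key c hc)
  have h0f : (0:E) ≤ sq f := by
    have := (hsq f).1 (Set.mem_range_self (0:ℝ))
    simpa using this
  have h0g : (0:E) ≤ sq g := by
    have := (hsq g).1 (Set.mem_range_self (0:ℝ))
    simpa using this
  have step1 : ∀ l : ℝ, ((2 * l) • f - (l ^ 2) • e) ⊓ sq g ≤ 0 := by
    intro l
    refine inf_le_zero_of_isLUB (hsq g) ?_
    rintro b ⟨m, rfl⟩
    exact pair l m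
  have step2 : sq g ⊓ sq f ≤ 0 := by
    refine inf_le_zero_of_isLUB (hsq f) ?_
    rintro b ⟨l, rfl⟩
    rw [inf_comm]
    exact step1 l
  rw [inf_comm] at step2
  exact le_antisymm step2 (le_inf h0f h0g)
end

section
/- Let E be a vector lattice with e ∈ E⁺ such that f^[2] := sup_{λ∈ℝ}(2λf − λ²e) exists for all f ∈ E. If f, g ∈ E satisfy f ∧ g = 0, then (f+g)^[2] = f^[2] + g^[2]. -/
section aux

variable {E : Type*} [Lattice E] [AddCommGroup E]
    [Module ℝ E] [CovariantClass E E (· + ·) (· ≤ ·)] [PosSMulMono ℝ E]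

lemma smul_nonneg'' {c : ℝ} (hc : 0 ≤ c) {x : E} (hx : 0 ≤ x) : 0 ≤ c • x := by
  have := smul_le_smul_of_nonneg_left hx hc
  simpa using this

lemma smul_nonpos'' {c : ℝ} (hc : c ≤ 0) {x : E} (hx : 0 ≤ x) : c • x ≤ 0 := by
  have h : 0 ≤ (-c) • x := smul_nonneg'' (by linarith) hx
  have h2 : c • x = -((-c) • x) := by rw [neg_smul, neg_neg]
  rw [h2]
  exact neg_nonpos.mpr h

lemma smul_inf_zero' {c : ℝ} (hc : 0 ≤ c) {x y : E} (hx : 0 ≤ x) (hy : 0 ≤ y)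
    (hxy : x ⊓ y = 0) : (c • x) ⊓ (c • y) = 0 := by
  rcases eq_or_lt_of_le hc with h | h
  · simp [← h]
  · apply le_antisymm
    · have h1 : c⁻¹ • ((c • x) ⊓ (c • y)) ≤ x := by
        calc c⁻¹ • ((c • x) ⊓ (c • y)) ≤ c⁻¹ • (c • x) :=
              smul_le_smul_of_nonneg_left inf_le_left (by positivity)
          _ = x := by rw [smul_smul, inv_mul_cancel₀ h.ne', one_smul]
      have h2 : c⁻¹ • ((c • x) ⊓ (c • y)) ≤ y := by
        calc c⁻¹ • ((c • x) ⊓ (c • y)) ≤ c⁻¹ • (c • y) :=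
              smul_le_smul_of_nonneg_left inf_le_right (by positivity)
          _ = y := by rw [smul_smul, inv_mul_cancel₀ h.ne', one_smul]
      have h3 : c⁻¹ • ((c • x) ⊓ (c • y)) ≤ 0 := hxy ▸ le_inf h1 h2
      calc (c • x) ⊓ (c • y) = c • (c⁻¹ • ((c • x) ⊓ (c • y))) := by
            rw [smul_smul, mul_inv_cancel₀ h.ne', one_smul]
        _ ≤ c • (0 : E) := smul_le_smul_of_nonneg_left h3 hc
        _ = 0 := smul_zero c
    · exact le_inf (smul_nonneg'' hc hx) (smul_nonneg'' hc hy)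

end aux

/-- In a square closed positively pointed vector lattice,
`f ∧ g = 0` implies `(f+g)^[2] = f^[2] + g^[2]`. -/
theorem square_add_of_disjoint {E : Type*} [Lattice E] [AddCommGroup E]
    [Module ℝ E] [CovariantClass E E (· + ·) (· ≤ ·)] [PosSMulMono ℝ E]
    (e : E) (he : 0 ≤ e) (sq : E → E)
    (hsq : ∀ f : E, IsLUB (Set.range fun l : ℝ => (2 * l) • f - (l ^ 2) • e) (sq f))
    (f g : E) (hfg : f ⊓ g = 0) :
    sq (f + g) = sq f + sq g := by
  have hf : 0 ≤ f := hfg ▸ inf_le_left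
  have hg : 0 ≤ g := hfg ▸ inf_le_right
  have hsq_nonneg : ∀ x : E, 0 ≤ sq x := by
    intro x
    have := (hsq x).1 ⟨0, rfl⟩
    simpa using this
  have hmem : ∀ (x : E) (l : ℝ), (2 * l) • x - (l ^ 2) • e ≤ sq x := fun x l =>
    (hsq x).1 ⟨l, rfl⟩
  -- key inequality
  have key : ∀ l m : ℝ,
      ((2 * l) • f - (l ^ 2) • e) + ((2 * m) • g - (m ^ 2) • e) ≤ sq (f + g) := by
    intro l m
    set a : E := ((2 * l) • f - (l ^ 2) • e) + ((2 * m) • g - (m ^ 2) • e) with ha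
    set b : E := (2 * l) • (f + g) - (l ^ 2) • e with hb
    set c : E := (2 * m) • (f + g) - (m ^ 2) • e with hc
    have hab : a - b = (2 * (m - l)) • g - (m ^ 2) • e := by
      rw [ha, hb, smul_add]; module
    have hac : a - c = (2 * (l - m)) • f - (l ^ 2) • e := by
      rw [ha, hc, smul_add]; module
    have habc : (a - b) ⊓ (a - c) ≤ 0 := by
      rcases le_total 0 (m - l) with ht | ht
      · refine le_trans inf_le_right ?_
        rw [hac]
        have h1 : (2 * (l - m)) • f ≤ 0 := smul_nonpos'' (by linarith) hf
        have h2 : (0:E) ≤ (l ^ 2) • e := smul_nonneg'' (by positivity) he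
        calc (2 * (l - m)) • f - (l ^ 2) • e ≤ (2 * (l - m)) • f := sub_le_self _ h2
          _ ≤ 0 := h1
      · refine le_trans inf_le_left ?_
        rw [hab]
        have h1 : (2 * (m - l)) • g ≤ 0 := smul_nonpos'' (by linarith) hg
        have h2 : (0:E) ≤ (m ^ 2) • e := smul_nonneg'' (by positivity) he
        calc (2 * (m - l)) • g - (m ^ 2) • e ≤ (2 * (m - l)) • g := sub_le_self _ h2
          _ ≤ 0 := h1
    have hsup : a ≤ b ⊔ c := by
      have h : a - (b ⊔ c) ≤ 0 := by rw [sub_sup]; exact habc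
      exact sub_nonpos.mp h
    exact hsup.trans (sup_le (hmem _ l) (hmem _ m))
  apply le_antisymm
  · -- sq (f+g) ≤ sq f + sq g
    apply (hsq (f + g)).2
    rintro x ⟨l, rfl⟩
    show (2 * l) • (f + g) - (l ^ 2) • e ≤ sq f + sq g
    rcases le_total 0 l with hl | hl
    · set a : E := (2 * l) • f - (l ^ 2) • e with ha
      set b : E := (2 * l) • g - (l ^ 2) • e with hb
      have h0 : ((2 * l) • f) ⊓ ((2 * l) • g) = 0 :=
        smul_inf_zero' (by linarith) hf hg hfg
      have hinf : a ⊓ b = -((l ^ 2) • e) := by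
        rw [ha, hb, ← inf_sub, h0, zero_sub]
      have hsupeq : (2 * l) • (f + g) - (l ^ 2) • e = a ⊔ b := by
        have h1 : a ⊓ b + a ⊔ b = a + b := inf_add_sup a b
        have h2 : a ⊔ b = a + b - a ⊓ b := by rw [← h1]; abel
        rw [h2, hinf, ha, hb, smul_add]
        module
      rw [hsupeq]
      have h3 : a ⊔ b ≤ sq f ⊔ sq g := sup_le_sup (hmem f l) (hmem g l)
      refine h3.trans (sup_le ?_ ?_)
      · exact le_add_of_nonneg_right (hsq_nonneg g)
      · exact le_add_of_nonneg_left (hsq_nonneg f)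
    · have h1 : (2 * l) • (f + g) ≤ 0 :=
        smul_nonpos'' (by linarith) (add_nonneg hf hg)
      have h2 : (0:E) ≤ (l ^ 2) • e := smul_nonneg'' (by positivity) he
      have h3 : (2 * l) • (f + g) - (l ^ 2) • e ≤ 0 :=
        sub_nonpos.mpr (h1.trans h2)
      exact h3.trans (add_nonneg (hsq_nonneg f) (hsq_nonneg g))
  · -- sq f + sq g ≤ sq (f+g)
    have h1 : sq f ≤ sq (f + g) - sq g := by
      apply (hsq f).2
      rintro x ⟨l, rfl⟩
      rw [le_sub_comm]
      apply (hsq g).2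
      rintro y ⟨m, rfl⟩
      rw [le_sub_iff_add_le']
      exact key l m
    calc sq f + sq g ≤ (sq (f + g) - sq g) + sq g := add_le_add_left h1 _
      _ = sq (f + g) := by abel
end

section
/- Let E be a vector lattice with e ∈ E⁺ such that f^[2] := sup_{λ∈ℝ}(2λf − λ²e) exists for all f ∈ E. Then for every f ∈ E one has f^[2] = |f|^[2]. -/
/-!
The families `2λf − λ²e` and `2λ|f| − λ²e` have the same upper bounds, hence the same supremum:
`2λf ≤ 2|λ||f|` on the one hand, and `2|λ||f| = (2|λ|f) ⊔ (−2|λ|f)` on the other.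
-/

section
variable {E : Type*} [Lattice E] [AddCommGroup E] [Module ℝ E] [PosSMulMono ℝ E]

lemma smul_sup_of_nonneg {c : ℝ} (hc : 0 ≤ c) (a b : E) : c • (a ⊔ b) = c • a ⊔ c • b := by
  rcases hc.eq_or_lt with rfl | hc
  · simp
  · exact (OrderIso.smulRight hc).map_sup a b

-- `2λx − λ²` is the tangent line of `x ↦ x²` at `λ`.
def squareTangent (e : E) (l : ℝ) (f : E) : E := (2 * l) • f - l ^ 2 • e

variable [CovariantClass E E (· + ·) (· ≤ ·)]

lemma squareTangent_le_abs (e : E) (l : ℝ) (f : E) :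
    squareTangent e l f ≤ squareTangent e |l| |f| := by
  have key : (2 * l) • f ≤ (2 * |l|) • |f| := by
    rcases le_or_gt 0 l with hl | hl
    · rw [abs_of_nonneg hl]
      exact smul_le_smul_of_nonneg_left (le_abs_self f) (by positivity)
    · rw [abs_of_neg hl, show (2 * l) • f = (2 * -l) • -f by rw [smul_neg, ← neg_smul]; ring_nf]
      exact smul_le_smul_of_nonneg_left (neg_le_abs f) (by linarith)
  rw [squareTangent, squareTangent, sq_abs]
  exact sub_le_sub_right key _

lemma squareTangent_abs_of_nonneg (e : E) {l : ℝ} (hl : 0 ≤ l) (f : E) :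
    squareTangent e l |f| = squareTangent e l f ⊔ squareTangent e (-l) f := by
  rw [squareTangent, squareTangent, squareTangent, abs, smul_sup_of_nonneg (by positivity), neg_sq,
    sup_sub, mul_neg, neg_smul, smul_neg]

lemma upperBounds_range_squareTangent_abs (e f : E) :
    upperBounds (Set.range fun l => squareTangent e l |f|) =
      upperBounds (Set.range fun l => squareTangent e l f) := by
  ext u
  simp only [mem_upperBounds, Set.forall_mem_range]
  constructor
  · intro hu l
    exact (squareTangent_le_abs e l f).trans (hu |l|)
  · intro hu l
    calc squareTangent e l |f| ≤ squareTangent e |l| |f| := by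
          simpa only [abs_abs] using squareTangent_le_abs e l |f|
      _ = squareTangent e |l| f ⊔ squareTangent e (-|l|) f :=
          squareTangent_abs_of_nonneg e (abs_nonneg l) f
      _ ≤ u := sup_le (hu _) (hu _)

end

theorem square_abs_general {E : Type*} [Lattice E] [AddCommGroup E]
    [Module ℝ E] [CovariantClass E E (· + ·) (· ≤ ·)] [PosSMulMono ℝ E]
    (e : E) (sq : E → E)
    (hsq : ∀ f : E, IsLUB (Set.range fun l : ℝ => (2 * l) • f - (l ^ 2) • e) (sq f))
    (f : E) :
    sq f = sq |f| := by
  have hsq_abs : IsLUB (Set.range fun l => squareTangent e l f) (sq |f|) := by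
    rw [IsLUB, ← upperBounds_range_squareTangent_abs]
    exact hsq |f|
  exact (hsq f).unique hsq_abs

/-- In a square closed positively pointed vector lattice, `f^[2] = |f|^[2]`. -/
theorem square_abs {E : Type*} [Lattice E] [AddCommGroup E]
    [Module ℝ E] [CovariantClass E E (· + ·) (· ≤ ·)] [PosSMulMono ℝ E]
    (e : E) (he : 0 ≤ e) (sq : E → E)
    (hsq : ∀ f : E, IsLUB (Set.range fun l : ℝ => (2 * l) • f - (l ^ 2) • e) (sq f))
    (f : E) :
    sq f = sq |f| :=
  square_abs_general e sq hsq f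
end

section
/- Let E be a vector lattice with e ∈ E⁺ such that f^[2] := sup_{λ∈ℝ}(2λf − λ²e) exists for all f ∈ E. If {xₙ} is a sequence in E⁺ and f ∈ E⁺ with xₙ ↑ f (the sequence is increasing with supremum f), then xₙ^[2] is an increasing sequence in E⁺ with supremum f^[2], i.e., xₙ^[2] ↑ f^[2]. -/
/-!
The term `λ = 0` makes every square nonnegative, and for `f ≥ 0` the terms with `λ ≤ 0` are
`≤ 0`, so only `λ > 0` matters. For such `λ` the term `2λf − λ²e` is monotone in `f`, which makes
squaring monotone on `E⁺`; and multiplication by `2λ > 0` is an order automorphism, so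
`2λxₙ ↑ 2λf`, whence `2λf − λ²e` lies below every upper bound of the `xₙ^[2]`.
-/

open Set

section SquareTerm

variable {E : Type*} [AddCommGroup E] [Module ℝ E]

/-- `f^[2]` is the supremum of `squareTerm e f λ` over `λ ∈ ℝ`. -/
def squareTerm (e f : E) (l : ℝ) : E := (2 * l) • f - l ^ 2 • e

lemma squareTerm_zero (e f : E) : squareTerm e f 0 = 0 := by
  simp [squareTerm]

lemma nonneg_of_isLUB_range_squareTerm [Preorder E] {e f s : E}
    (hs : IsLUB (range (squareTerm e f)) s) : 0 ≤ s :=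
  squareTerm_zero e f ▸ hs.1 (mem_range_self 0)

variable [PartialOrder E] [IsOrderedAddMonoid E] [PosSMulMono ℝ E]

lemma squareTerm_nonpos {e f : E} {l : ℝ} (he : 0 ≤ e) (hf : 0 ≤ f) (hl : l ≤ 0) :
    squareTerm e f l ≤ 0 := by
  have hlf : (2 * l) • f ≤ 0 := smul_nonpos_of_nonpos_of_nonneg (by linarith) hf
  have hle : 0 ≤ l ^ 2 • e := smul_nonneg (sq_nonneg l) he
  exact sub_nonpos.2 (hlf.trans hle)

lemma squareTerm_mono {e f g : E} {l : ℝ} (hl : 0 ≤ l) (hfg : f ≤ g) :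
    squareTerm e f l ≤ squareTerm e g l :=
  sub_le_sub_right (smul_le_smul_of_nonneg_left hfg (by linarith)) _

lemma le_of_isLUB_range_squareTerm {e f s u : E} (hs : IsLUB (range (squareTerm e f)) s)
    (he : 0 ≤ e) (hf : 0 ≤ f) (hu : 0 ≤ u) (h : ∀ l, 0 < l → squareTerm e f l ≤ u) :
    s ≤ u := by
  refine hs.2 ?_
  rintro _ ⟨l, rfl⟩
  rcases le_or_gt l 0 with hl | hl
  · exact (squareTerm_nonpos he hf hl).trans hu
  · exact h l hl

lemma monotoneOn_of_isLUB_range_squareTerm {e : E} {sq : E → E} (he : 0 ≤ e)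
    (hsq : ∀ f, IsLUB (range (squareTerm e f)) (sq f)) : MonotoneOn sq (Ici 0) := by
  intro f hf g _ hfg
  refine le_of_isLUB_range_squareTerm (hsq f) he hf (nonneg_of_isLUB_range_squareTerm (hsq g)) ?_
  intro l hl
  exact (squareTerm_mono hl.le hfg).trans ((hsq g).1 (mem_range_self l))

lemma isLUB_range_comp_of_isLUB_range_squareTerm {ι : Type*} [Nonempty ι] {e f : E}
    {sq : E → E} {x : ι → E} (he : 0 ≤ e) (hsq : ∀ f, IsLUB (range (squareTerm e f)) (sq f))
    (hx : ∀ i, 0 ≤ x i) (hlub : IsLUB (range x) f) : IsLUB (range (sq ∘ x)) (sq f) := by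
  obtain ⟨i₀⟩ := ‹Nonempty ι›
  have hf : 0 ≤ f := (hx i₀).trans (hlub.1 (mem_range_self i₀))
  refine ⟨?_, fun u hu => ?_⟩
  · rintro _ ⟨i, rfl⟩
    exact monotoneOn_of_isLUB_range_squareTerm he hsq (hx i) hf (hlub.1 (mem_range_self i))
  have hsq_le : ∀ i, sq (x i) ≤ u := fun i => hu (mem_range_self i)
  refine le_of_isLUB_range_squareTerm (hsq f) he hf
    ((nonneg_of_isLUB_range_squareTerm (hsq (x i₀))).trans (hsq_le i₀)) fun l hl => ?_
  have hscaled : IsLUB (((2 * l) • ·) '' range x) ((2 * l) • f) :=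
    (OrderIso.smulRight (by linarith : (0 : ℝ) < 2 * l)).isLUB_image'.2 hlub
  refine sub_le_iff_le_add.2 (hscaled.2 ?_)
  rintro _ ⟨_, ⟨i, rfl⟩, rfl⟩
  exact sub_le_iff_le_add.1 (((hsq (x i)).1 (mem_range_self l)).trans (hsq_le i))

end SquareTerm

theorem square_order_continuous_general {E : Type*} [Lattice E] [AddCommGroup E]
    [Module ℝ E] [CovariantClass E E (· + ·) (· ≤ ·)] [PosSMulMono ℝ E]
    (e : E) (he : 0 ≤ e) (sq : E → E)
    (hsq : ∀ f : E, IsLUB (Set.range fun l : ℝ => (2 * l) • f - (l ^ 2) • e) (sq f))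
    (x : ℕ → E) (f : E) (hxpos : ∀ n, 0 ≤ x n)
    (hmono : Monotone x) (hlub : IsLUB (Set.range x) f) :
    (∀ n, 0 ≤ sq (x n)) ∧ Monotone (fun n => sq (x n)) ∧
      IsLUB (Set.range fun n => sq (x n)) (sq f) := by
  have : IsOrderedAddMonoid E :=
    ⟨fun _ _ h c => add_le_add_left h c, fun _ _ h c => add_le_add_right h c⟩
  have hsq_mono := monotoneOn_of_isLUB_range_squareTerm he hsq
  exact ⟨fun n => nonneg_of_isLUB_range_squareTerm (hsq (x n)),
    fun m n hmn => hsq_mono (hxpos m) (hxpos n) (hmono hmn),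
    isLUB_range_comp_of_isLUB_range_squareTerm he hsq hxpos hlub⟩

/-- Order continuity of the order-theoretic square: if `0 ≤ xₙ ↑ f` then
`xₙ^[2]` is an increasing sequence in `E⁺` with `xₙ^[2] ↑ f^[2]`. -/
theorem square_order_continuous {E : Type*} [Lattice E] [AddCommGroup E]
    [Module ℝ E] [CovariantClass E E (· + ·) (· ≤ ·)] [PosSMulMono ℝ E]
    (e : E) (he : 0 ≤ e) (sq : E → E)
    (hsq : ∀ f : E, IsLUB (Set.range fun l : ℝ => (2 * l) • f - (l ^ 2) • e) (sq f))
    (x : ℕ → E) (f : E) (hxpos : ∀ n, 0 ≤ x n) (hfpos : 0 ≤ f)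
    (hmono : Monotone x) (hlub : IsLUB (Set.range x) f) :
    (∀ n, 0 ≤ sq (x n)) ∧ Monotone (fun n => sq (x n)) ∧
      IsLUB (Set.range fun n => sq (x n)) (sq f) :=
  square_order_continuous_general e he sq hsq x f hxpos hmono hlub
end

section
/- Let E be an Archimedean vector lattice and e ∈ E. If sup_{λ∈ℝ}(−λ²e) exists in E, then e ∈ E⁺ and the supremum equals 0. -/
/-! Substituting `λ = √t` turns the family `-(λ² • e)` into the ray `-(t • e)`, `t ≥ 0`.
An upper bound `s` of the ray gives `n • (-e) ≤ s` for all `n`, so `-e ≤ 0` by the Archimedean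
property; then every `-(t • e)` is `≤ 0 = -(0 • e)`, so `0` is the supremum. -/

section OrderedModule

variable {E : Type*} [AddCommGroup E] [Module ℝ E]

theorem range_neg_sq_smul_eq_image_Ici (e : E) :
    Set.range (fun l : ℝ => -((l ^ 2) • e)) = (fun t : ℝ => -(t • e)) '' Set.Ici 0 := by
  ext x
  constructor
  · rintro ⟨l, rfl⟩
    exact ⟨l ^ 2, sq_nonneg l, rfl⟩
  · rintro ⟨t, ht, rfl⟩
    exact ⟨Real.sqrt t, by simp only [Real.sq_sqrt ht]⟩

variable [PartialOrder E] [CovariantClass E E (· + ·) (· ≤ ·)]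

theorem nonneg_of_forall_neg_natCast_smul_le
    (hArch : ∀ x y : E, (∀ n : ℕ, (n : ℝ) • x ≤ y) → x ≤ 0)
    {e s : E} (h : ∀ n : ℕ, -((n : ℝ) • e) ≤ s) : 0 ≤ e :=
  neg_nonpos.mp <| hArch (-e) s fun n => by simpa only [smul_neg] using h n

theorem isLUB_image_Ici_neg_smul [PosSMulMono ℝ E] {e : E} (he : 0 ≤ e) :
    IsLUB ((fun t : ℝ => -(t • e)) '' Set.Ici 0) 0 := by
  refine ⟨?_, fun b hb => ?_⟩
  · rintro x ⟨t, ht, rfl⟩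
    exact neg_nonpos.mpr (smul_nonneg ht he)
  · simpa using hb ⟨0, Set.self_mem_Ici, rfl⟩

end OrderedModule

/-- In an Archimedean vector lattice, if `sup_{λ∈ℝ} (−λ²e)` exists,
then `e ∈ E⁺` and the supremum equals `0`. -/
theorem zero_square_archimedean {E : Type*} [Lattice E] [AddCommGroup E]
    [Module ℝ E] [CovariantClass E E (· + ·) (· ≤ ·)] [PosSMulMono ℝ E]
    (hArch : ∀ x y : E, (∀ n : ℕ, (n : ℝ) • x ≤ y) → x ≤ 0)
    (e : E) (s : E)
    (hs : IsLUB (Set.range fun l : ℝ => -((l ^ 2) • e)) s) :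
    0 ≤ e ∧ s = 0 := by
  rw [range_neg_sq_smul_eq_image_Ici] at hs
  have he : 0 ≤ e := nonneg_of_forall_neg_natCast_smul_le hArch fun n =>
    hs.1 ⟨n, Set.mem_Ici.mpr n.cast_nonneg, rfl⟩
  exact ⟨he, hs.unique (isLUB_image_Ici_neg_smul he)⟩
end

section
/- Let E be an Archimedean vector lattice and e ∈ E such that f^[2] := sup_{λ∈ℝ}(2λf − λ²e) exists for every f ∈ E. Then e is a weak order unit of E, i.e., e ∈ E⁺ and the only f ∈ E with |f| ∧ e = 0 is f = 0. -/
/-!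
Both claims come from the Archimedean property applied to the upper bounds of the sets
`{2λf - λ²e}`. For `f = 0` these say `-λ²e ≤ 0^[2]`, so all multiples of `-e` are bounded.
If `g = |f|` is disjoint from `e`, then `ng ≤ (n²/4)e + g^[2]` (take `λ = n/2`), and since
`ng ⊥ (n²/4)e` and `g^[2] ≥ 0` this improves to `ng ≤ g^[2]` for all `n`, forcing `g = 0`.
-/

section LatticeOrderedGroup

variable {E : Type*} [Lattice E] [AddCommGroup E] [AddLeftMono E]

theorem inf_add_le_inf_add_of_nonneg {c : E} (hc : 0 ≤ c) (a b : E) :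
    a ⊓ (b + c) ≤ a ⊓ b + c := by
  rw [inf_add]
  exact inf_le_inf_right _ (le_add_of_nonneg_right hc)

variable [Module ℝ E] [PosSMulMono ℝ E]

theorem smul_inf_smul_eq_zero {a b : E} (ha : 0 ≤ a) (hb : 0 ≤ b) (hab : a ⊓ b = 0)
    {s t : ℝ} (hs : 0 ≤ s) (ht : 0 ≤ t) : s • a ⊓ t • b = 0 := by
  have hm : (0 : ℝ) < s + t + 1 := by linarith
  have hsa : s • a ≤ (s + t + 1) • a := by
    rw [add_assoc, add_smul]
    exact le_add_of_nonneg_right (smul_nonneg (by linarith) ha)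
  have htb : t • b ≤ (s + t + 1) • b := by
    rw [show s + t + 1 = t + (s + 1) by ring, add_smul]
    exact le_add_of_nonneg_right (smul_nonneg (by linarith) hb)
  refine le_antisymm ?_ (le_inf (smul_nonneg hs ha) (smul_nonneg ht hb))
  calc s • a ⊓ t • b ≤ (s + t + 1) • a ⊓ (s + t + 1) • b := inf_le_inf hsa htb
    _ = (s + t + 1) • (a ⊓ b) := ((OrderIso.smulRight hm).map_inf a b).symm
    _ = 0 := by rw [hab, smul_zero]

end LatticeOrderedGroup

def squareFamily {E : Type*} [AddCommGroup E] [Module ℝ E] (e f : E) : Set E :=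
  Set.range fun l : ℝ => (2 * l) • f - (l ^ 2) • e

theorem natCast_smul_neg_le_of_mem_upperBounds_squareFamily_zero {E : Type*} [AddCommGroup E]
    [Module ℝ E] [Preorder E] {e s : E} (hs : s ∈ upperBounds (squareFamily e 0)) (n : ℕ) :
    (n : ℝ) • -e ≤ s := by
  simpa [Real.sq_sqrt (Nat.cast_nonneg n)] using hs ⟨Real.sqrt n, rfl⟩

theorem natCast_smul_le_of_mem_upperBounds_squareFamily {E : Type*} [Lattice E] [AddCommGroup E]
    [AddLeftMono E] [Module ℝ E] [PosSMulMono ℝ E] {e f s : E} (he : 0 ≤ e) (hf : 0 ≤ f)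
    (hfe : f ⊓ e = 0) (hs : s ∈ upperBounds (squareFamily e f)) (n : ℕ) :
    (n : ℝ) • f ≤ s := by
  set c : ℝ := (n : ℝ) ^ 2 / 4
  have hs_nonneg : 0 ≤ s := by simpa using hs ⟨0, rfl⟩
  have hbound : (n : ℝ) • f ≤ c • e + s := by
    have h : (2 * ((n : ℝ) / 2)) • f - ((n : ℝ) / 2) ^ 2 • e ≤ s := hs ⟨(n : ℝ) / 2, rfl⟩
    rwa [show 2 * ((n : ℝ) / 2) = n by ring, show ((n : ℝ) / 2) ^ 2 = c by ring,
      sub_le_iff_le_add'] at h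
  calc (n : ℝ) • f = (n : ℝ) • f ⊓ (n : ℝ) • f := (inf_idem _).symm
    _ ≤ (n : ℝ) • f ⊓ (c • e + s) := inf_le_inf_left _ hbound
    _ ≤ (n : ℝ) • f ⊓ c • e + s := inf_add_le_inf_add_of_nonneg hs_nonneg _ _
    _ = s := by
      rw [smul_inf_smul_eq_zero hf he hfe (Nat.cast_nonneg n) (by positivity), zero_add]

/-- If `(E,e)` is a square closed pointed Archimedean vector lattice,
then `e` is a weak order unit. -/
theorem square_closed_weak_order_unit {E : Type*} [Lattice E] [AddCommGroup E]
    [Module ℝ E] [CovariantClass E E (· + ·) (· ≤ ·)] [PosSMulMono ℝ E]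
    (hArch : ∀ x y : E, (∀ n : ℕ, (n : ℝ) • x ≤ y) → x ≤ 0)
    (e : E) (sq : E → E)
    (hsq : ∀ f : E, IsLUB (Set.range fun l : ℝ => (2 * l) • f - (l ^ 2) • e) (sq f)) :
    0 ≤ e ∧ ∀ f : E, |f| ⊓ e = 0 → f = 0 := by
  have he : 0 ≤ e := neg_nonpos.mp <| hArch _ _ <|
    natCast_smul_neg_le_of_mem_upperBounds_squareFamily_zero (hsq 0).1
  refine ⟨he, fun f hf => ?_⟩
  obtain ⟨hf_nonpos, hf_neg_nonpos⟩ := abs_le'.mp <| hArch _ _ <|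
    natCast_smul_le_of_mem_upperBounds_squareFamily he (abs_nonneg f) hf (hsq |f|).1
  exact le_antisymm hf_nonpos (neg_nonpos.mp hf_neg_nonpos)
end

section
/- Let (E,e₁) and (F,e₂) be Archimedean vector lattices with strong order units e₁ and e₂ respectively, and let T : E → F be a vector lattice homomorphism with T(e₁) = e₂. If f ∈ E is such that f^[2] := sup_{λ∈ℝ}(2λf − λ²e₁) exists in E and (Tf)^[2] := sup_{λ∈ℝ}(2λT(f) − λ²e₂) exists in F, then T(f^[2]) = (Tf)^[2]. -/
section aux

variable {E : Type*} [Lattice E] [AddCommGroup E] [Module ℝ E]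
  [CovariantClass E E (· + ·) (· ≤ ·)] [PosSMulMono ℝ E]

private lemma aux_smul_right_mono {c d : ℝ} {v : E} (h : c ≤ d) (hv : 0 ≤ v) :
    c • v ≤ d • v := by
  have h0 : (0:E) ≤ (d - c) • v := smul_nonneg (by linarith) hv
  rw [sub_smul] at h0
  exact sub_nonneg.mp h0

private lemma aux_smul_abs_le {c N : ℝ} {x e : E} (hx : |x| ≤ N • e) :
    c • x ≤ (|c| * N) • e := by
  rw [mul_smul]
  rcases le_total 0 c with hc | hc
  · have h1 : x ≤ N • e := (le_abs_self x).trans hx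
    calc c • x ≤ c • (N • e) := smul_le_smul_of_nonneg_left h1 hc
      _ = |c| • (N • e) := by rw [abs_of_nonneg hc]
  · have h1 : -x ≤ N • e := (neg_le_abs x).trans hx
    have h2 : c • x = (-c) • (-x) := by rw [neg_smul, smul_neg, neg_neg]
    rw [h2, abs_of_nonpos hc]
    exact smul_le_smul_of_nonneg_left h1 (by linarith)

end aux

set_option maxHeartbeats 1000000 in
/-- Lattice homomorphisms between Archimedean vector lattices with strong order
units, mapping unit to unit, interchange with the order-theoretic square. -/
theorem hom_interchange_square {E F : Type*}
    [Lattice E] [AddCommGroup E] [Module ℝ E]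
    [CovariantClass E E (· + ·) (· ≤ ·)] [PosSMulMono ℝ E]
    [Lattice F] [AddCommGroup F] [Module ℝ F]
    [CovariantClass F F (· + ·) (· ≤ ·)] [PosSMulMono ℝ F]
    (hArchE : ∀ x y : E, (∀ n : ℕ, (n : ℝ) • x ≤ y) → x ≤ 0)
    (hArchF : ∀ x y : F, (∀ n : ℕ, (n : ℝ) • x ≤ y) → x ≤ 0)
    (e₁ : E) (e₂ : F) (he₁ : 0 ≤ e₁) (he₂ : 0 ≤ e₂)
    (hsu₁ : ∀ x : E, ∃ n : ℕ, |x| ≤ (n : ℝ) • e₁)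
    (hsu₂ : ∀ x : F, ∃ n : ℕ, |x| ≤ (n : ℝ) • e₂)
    (T : E →ₗ[ℝ] F) (hTlat : ∀ a b : E, T (a ⊔ b) = T a ⊔ T b)
    (hTe : T e₁ = e₂)
    (f : E) (s : E) (s' : F)
    (hs : IsLUB (Set.range fun l : ℝ => (2 * l) • f - (l ^ 2) • e₁) s)
    (hs' : IsLUB (Set.range fun l : ℝ => (2 * l) • (T f) - (l ^ 2) • e₂) s') :
    T s = s' := by
  set g : ℝ → E := fun l => (2 * l) • f - (l ^ 2) • e₁ with hgdef
  set g' : ℝ → F := fun l => (2 * l) • (T f) - (l ^ 2) • e₂ with hg'def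
  have hTg : ∀ l, T (g l) = g' l := by
    intro l
    simp only [hgdef, hg'def, map_sub, map_smul, hTe]
  have hTmono : Monotone T := by
    intro a b hab
    have h := hTlat a b
    rw [sup_eq_right.mpr hab] at h
    rw [h]
    exact le_sup_left
  have h1 : s' ≤ T s := by
    apply hs'.2
    rintro _ ⟨l, rfl⟩
    rw [← hTg]
    exact hTmono (hs.1 ⟨l, rfl⟩)
  obtain ⟨n, hn⟩ := hsu₁ f
  set N : ℝ := (n : ℝ) with hNdef
  have hN : 0 ≤ N := Nat.cast_nonneg n
  have key : ∀ ε : ℝ, 0 < ε → T s ≤ s' + ε • e₂ := by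
    intro ε hε
    set δ : ℝ := min 1 (ε / (6 * N + 1)) with hδdef
    have hδpos : 0 < δ := lt_min one_pos (div_pos hε (by linarith))
    have hδ1 : δ * (6 * N + 1) ≤ ε := by
      have h2 : δ ≤ ε / (6 * N + 1) := min_le_right _ _
      rw [le_div_iff₀ (by linarith : (0:ℝ) < 6 * N + 1)] at h2
      exact h2
    have hδε : 6 * N * δ ≤ ε := by nlinarith
    set K : ℕ := ⌈(4 * N) / δ⌉₊ with hKdef
    set Λ : Finset ℝ :=
      insert 0 ((Finset.range (K + 1)).image fun k : ℕ => -(2 * N) + (k : ℝ) * δ) with hΛdef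
    have hΛne : Λ.Nonempty := ⟨0, Finset.mem_insert_self _ _⟩
    -- pointwise estimate on nearby parameters
    have hstep : ∀ l μ : ℝ, |l - μ| ≤ δ → |μ| ≤ 2 * N → |l| ≤ 2 * N →
        g l ≤ g μ + ε • e₁ := by
      intro l μ hd hμ hl
      have hdecomp : g l = g μ + (2 * (l - μ)) • f + (μ ^ 2 - l ^ 2) • e₁ := by
        simp only [hgdef]
        module
      have hb1 : (2 * (l - μ)) • f ≤ (|2 * (l - μ)| * N) • e₁ := aux_smul_abs_le hn
      have hb2 : (μ ^ 2 - l ^ 2) • e₁ ≤ |μ ^ 2 - l ^ 2| • e₁ :=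
        aux_smul_right_mono (le_abs_self _) he₁
      have hc1 : |2 * (l - μ)| * N ≤ 2 * δ * N := by
        have : |2 * (l - μ)| ≤ 2 * δ := by
          rw [abs_mul, abs_two]
          nlinarith
        nlinarith
      have hc2 : |μ ^ 2 - l ^ 2| ≤ δ * (4 * N) := by
        rw [show μ ^ 2 - l ^ 2 = (μ - l) * (μ + l) by ring, abs_mul]
        have ha : |μ - l| ≤ δ := by rw [abs_sub_comm]; exact hd
        have hb : |μ + l| ≤ 4 * N := (abs_add_le μ l).trans (by linarith)
        exact mul_le_mul ha hb (abs_nonneg _) hδpos.le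
      have hsum : |2 * (l - μ)| * N + |μ ^ 2 - l ^ 2| ≤ ε := by nlinarith
      calc g l = g μ + ((2 * (l - μ)) • f + (μ ^ 2 - l ^ 2) • e₁) := by
            rw [hdecomp]; abel
        _ ≤ g μ + ((|2 * (l - μ)| * N) • e₁ + |μ ^ 2 - l ^ 2| • e₁) :=
            add_le_add_right (add_le_add hb1 hb2) _
        _ = g μ + (|2 * (l - μ)| * N + |μ ^ 2 - l ^ 2|) • e₁ := by rw [add_smul]
        _ ≤ g μ + ε • e₁ := add_le_add_right (aux_smul_right_mono hsum he₁) _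
    have hub : ∀ l : ℝ, g l ≤ Λ.sup' hΛne g + ε • e₁ := by
      intro l
      rcases le_or_gt |l| (2 * N) with hl | hl
      · set k : ℕ := ⌊(l + 2 * N) / δ⌋₊ with hkdef
        set μ : ℝ := -(2 * N) + (k : ℝ) * δ with hμdef
        have hlabs := abs_le.mp hl
        have hl1 : 0 ≤ l + 2 * N := by linarith [hlabs.1]
        have hkle : (k : ℝ) ≤ (l + 2 * N) / δ := Nat.floor_le (div_nonneg hl1 hδpos.le)
        have hklt : (l + 2 * N) / δ < (k : ℝ) + 1 := Nat.lt_floor_add_one _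
        have hkle' : (k : ℝ) * δ ≤ l + 2 * N := by
          rw [← le_div_iff₀ hδpos]; exact hkle
        have hklt' : l + 2 * N < ((k : ℝ) + 1) * δ := by
          rw [← div_lt_iff₀ hδpos]; exact hklt
        have hμl : μ ≤ l := by simp only [hμdef]; linarith
        have hlμ : l - μ ≤ δ := by simp only [hμdef]; linarith
        have hkK : k ≤ K := by
          have h3 : (l + 2 * N) / δ ≤ (4 * N) / δ := by
            gcongr
            linarith [hlabs.2]
          calc k = ⌊(l + 2 * N) / δ⌋₊ := rfl
            _ ≤ ⌊(4 * N) / δ⌋₊ := Nat.floor_mono h3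
            _ ≤ ⌈(4 * N) / δ⌉₊ := Nat.floor_le_ceil _
        have hμmem : μ ∈ Λ := by
          apply Finset.mem_insert_of_mem
          exact Finset.mem_image.mpr ⟨k, Finset.mem_range.mpr (Nat.lt_succ_of_le hkK), rfl⟩
        have hk0 : 0 ≤ (k : ℝ) * δ := mul_nonneg (Nat.cast_nonneg k) hδpos.le
        have hμabs : |μ| ≤ 2 * N := by
          rw [abs_le]
          constructor
          · simp only [hμdef]; linarith
          · linarith [hlabs.2]
        calc g l ≤ g μ + ε • e₁ :=
              hstep l μ (abs_le.mpr ⟨by linarith, hlμ⟩) hμabs hl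
          _ ≤ Λ.sup' hΛne g + ε • e₁ :=
              add_le_add_left (Finset.le_sup' g hμmem) _
      · have hg0 : g 0 = 0 := by simp [hgdef]
        have hgl : g l ≤ 0 := by
          have h2 : (2 * l) • f ≤ (|2 * l| * N) • e₁ := aux_smul_abs_le hn
          have h3 : g l ≤ (|2 * l| * N - l ^ 2) • e₁ := by
            have : (|2 * l| * N - l ^ 2) • e₁ = (|2 * l| * N) • e₁ - (l ^ 2) • e₁ := by
              rw [sub_smul]
            rw [this]
            exact sub_le_sub_right h2 _
          have hc : |2 * l| * N - l ^ 2 ≤ 0 := by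
            rw [abs_mul, abs_two]
            nlinarith [sq_abs l, abs_nonneg l]
          calc g l ≤ (|2 * l| * N - l ^ 2) • e₁ := h3
            _ ≤ (0 : ℝ) • e₁ := aux_smul_right_mono hc he₁
            _ = 0 := zero_smul _ _
        have h0mem : (0 : E) ≤ Λ.sup' hΛne g := by
          calc (0 : E) = g 0 := hg0.symm
            _ ≤ Λ.sup' hΛne g := Finset.le_sup' g (Finset.mem_insert_self 0 _)
        have hε1 : (0 : E) ≤ ε • e₁ := smul_nonneg hε.le he₁
        calc g l ≤ 0 := hgl
          _ ≤ Λ.sup' hΛne g + ε • e₁ := add_nonneg h0mem hε1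
    have hssup : s ≤ Λ.sup' hΛne g + ε • e₁ := by
      apply hs.2
      rintro _ ⟨l, rfl⟩
      exact hub l
    have hTsup : T (Λ.sup' hΛne g) ≤ s' := by
      rw [Finset.comp_sup'_eq_sup'_comp hΛne (T : E → F) hTlat]
      apply Finset.sup'_le
      intro l _
      show T (g l) ≤ s'
      rw [hTg]
      exact hs'.1 ⟨l, rfl⟩
    calc T s ≤ T (Λ.sup' hΛne g + ε • e₁) := hTmono hssup
      _ = T (Λ.sup' hΛne g) + ε • e₂ := by rw [map_add, map_smul, hTe]
      _ ≤ s' + ε • e₂ := add_le_add_left hTsup _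
  have h2 : T s - s' ≤ 0 := by
    apply hArchF (T s - s') e₂
    intro m
    rcases Nat.eq_zero_or_pos m with rfl | hm
    · simpa using he₂
    · have hmR : (0 : ℝ) < m := by exact_mod_cast hm
      have hkey := key ((m : ℝ)⁻¹) (by positivity)
      have hx : T s - s' ≤ (m : ℝ)⁻¹ • e₂ := by
        rw [sub_le_iff_le_add, add_comm]
        exact hkey
      calc (m : ℝ) • (T s - s') ≤ (m : ℝ) • ((m : ℝ)⁻¹ • e₂) :=
            smul_le_smul_of_nonneg_left hx hmR.le
        _ = e₂ := by rw [smul_smul, mul_inv_cancel₀ hmR.ne', one_smul]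
  exact le_antisymm (sub_nonpos.mp h2) h1
end

section
/- Let E be an Archimedean vector lattice and e ∈ E. Then E admits a Φ-algebra (unital f-algebra) multiplication with multiplicative unit e if and only if (E,e) is square closed, i.e., sup_{λ∈ℝ}(2λf − λ²e) exists in E for every f ∈ E. In this case, the multiplication is uniquely given by fg = ½((f+g)^[2] − f^[2] − g^[2]), and f² = f^[2] for all f ∈ E. -/
set_option linter.unusedSectionVars false

namespace PhiSq
section Helpers
variable {E : Type*} [Lattice E] [AddCommGroup E] [Module ℝ E]
  [CovariantClass E E (· + ·) (· ≤ ·)] [PosSMulMono ℝ E]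

lemma pp_nonneg (a : E) : 0 ≤ a⁺ := le_sup_right.trans_eq (posPart_def a).symm

lemma pp_mono {a b : E} (h : a ≤ b) : a⁺ ≤ b⁺ := sup_le_sup_right h 0

lemma le_pp (a : E) : a ≤ a⁺ := le_sup_left

lemma pp_le {a b : E} (h : a ≤ b) (hb : 0 ≤ b) : a⁺ ≤ b := sup_le h hb

lemma pp_eq_zero {a : E} (h : a ≤ 0) : a⁺ = 0 := le_antisymm (pp_le h le_rfl) (pp_nonneg a)

lemma pp_eq_self {a : E} (h : 0 ≤ a) : a⁺ = a := sup_of_le_left h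

lemma np_nonneg (a : E) : 0 ≤ a⁻ := by rw [negPart_def]; exact le_sup_right

lemma pp_neg (a : E) : (-a)⁺ = a⁻ := by rw [posPart_def, negPart_def]

lemma pp_add_le (x : E) {c : E} (hc : 0 ≤ c) : (x + c)⁺ ≤ x⁺ + c :=
  pp_le (add_le_add_left (le_pp x) c) (add_nonneg (pp_nonneg x) hc)

lemma pp_sub_le (x : E) {c : E} (hc : 0 ≤ c) : x⁺ - c ≤ (x - c)⁺ := by
  have := pp_add_le (x - c) hc
  simp only [sub_add_cancel] at this
  exact sub_le_iff_le_add.mpr this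

lemma pp_sub_pp (x : E) {T : E} (hT : 0 ≤ T) : (x⁺ - T)⁺ = (x - T)⁺ := by
  have h1 : (x⁺ - T) = (x - T) ⊔ (-T) := by rw [posPart_def, sup_sub]; simp
  rw [h1, posPart_def, posPart_def, sup_assoc]
  congr 1
  exact sup_of_le_right (neg_nonpos.mpr hT)

lemma disj_pp {u v : E} (h : u + v ≤ 0) : u⁺ ⊓ v⁺ = 0 := by
  have hv : v ≤ -u := by
    calc v = -u + (u + v) := by abel
    _ ≤ -u + 0 := add_le_add_right h _
    _ = -u := add_zero _
  have h2 : u⁺ ⊓ v⁺ ≤ u⁺ ⊓ u⁻ := inf_le_inf_left _ ((pp_mono hv).trans_eq (pp_neg u))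
  exact le_antisymm (h2.trans_eq (posPart_inf_negPart_eq_zero u))
    (le_inf (pp_nonneg u) (pp_nonneg v))

lemma inf_add_le' {a b c : E} (ha : 0 ≤ a) (hb : 0 ≤ b) (hc : 0 ≤ c) :
    (a + b) ⊓ c ≤ a ⊓ c + b ⊓ c := by
  have h1 : a ⊓ c + b ⊓ c = ((a+b) ⊓ (a+c)) ⊓ ((c+b) ⊓ (c+c)) := by
    rw [← add_inf, ← add_inf, ← inf_add]
  rw [h1]
  exact le_inf (le_inf inf_le_left ((inf_le_right).trans (le_add_of_nonneg_left ha)))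
    (le_inf (inf_le_right.trans (le_add_of_nonneg_right hb))
      (inf_le_right.trans (le_add_of_nonneg_left hc)))

lemma smul_nn {r : ℝ} (hr : 0 ≤ r) {x : E} (hx : 0 ≤ x) : 0 ≤ r • x := by
  simpa using smul_le_smul_of_nonneg_left hx hr

lemma smul_mono_scalar {a b : ℝ} (h : a ≤ b) {x : E} (hx : 0 ≤ x) : a • x ≤ b • x := by
  have h1 : 0 ≤ (b - a) • x := smul_nn (sub_nonneg.mpr h) hx
  rw [sub_smul] at h1
  exact sub_nonneg.mp h1

lemma smul_inf {r : ℝ} (hr : 0 < r) (a b : E) : r • (a ⊓ b) = (r • a) ⊓ (r • b) := by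
  refine le_antisymm (le_inf (smul_le_smul_of_nonneg_left inf_le_left hr.le)
    (smul_le_smul_of_nonneg_left inf_le_right hr.le)) ?_
  have h1 : r⁻¹ • ((r • a) ⊓ (r • b)) ≤ a ⊓ b := by
    refine le_inf ?_ ?_
    · have := smul_le_smul_of_nonneg_left (inf_le_left (a := r • a) (b := r • b))
        (inv_nonneg.mpr hr.le)
      rwa [inv_smul_smul₀ hr.ne'] at this
    · have := smul_le_smul_of_nonneg_left (inf_le_right (a := r • a) (b := r • b))
        (inv_nonneg.mpr hr.le)
      rwa [inv_smul_smul₀ hr.ne'] at this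
  have := smul_le_smul_of_nonneg_left h1 hr.le
  rwa [smul_inv_smul₀ hr.ne'] at this

lemma smul_sup {r : ℝ} (hr : 0 < r) (a b : E) : r • (a ⊔ b) = (r • a) ⊔ (r • b) := by
  have h := smul_inf hr (-a) (-b)
  have h2 : a ⊔ b = -((-a) ⊓ (-b)) := by rw [neg_inf]; simp
  rw [h2, smul_neg, h, neg_inf]
  simp [smul_neg]

lemma smul_pp {r : ℝ} (hr : 0 ≤ r) (a : E) : (r • a)⁺ = r • a⁺ := by
  rcases eq_or_lt_of_le hr with h | h
  · simp [← h]
  · rw [posPart_def, posPart_def, smul_sup h, smul_zero]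

lemma abs_nonneg_pos {r : ℝ} (hr : 0 < r) (a : E) : |r • a| = r • |a| := by
  rw [abs, abs, smul_sup hr, smul_neg]

lemma abs_smul' (r : ℝ) (a : E) : |r • a| = |r| • |a| := by
  rcases lt_trichotomy r 0 with h | h | h
  · have : r • a = (-r) • (-a) := by rw [neg_smul_neg]
    rw [this, abs_nonneg_pos (by linarith) (-a), abs_neg, abs_of_neg h]
  · simp [h]
  · rw [abs_nonneg_pos h, abs_of_pos h]

lemma le_abs_smul (r : ℝ) (a : E) : r • a ≤ |r| • |a| := (le_abs_self _).trans (abs_smul' r a).le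


lemma abs_pp_np (a : E) : |a| = a⁺ + a⁻ := (posPart_add_negPart a).symm

lemma np_eq_pp_neg (a b : E) : (a - b)⁻ = (b - a)⁺ := by rw [← pp_neg, neg_sub]

lemma disj_add_eq_sup {x y : E} (h : x ⊓ y = 0) : x + y = x ⊔ y := by
  have := inf_add_sup x y
  rw [h, zero_add] at this
  exact this.symm

lemma inf_of_le_zero {x y : E} (hx : 0 ≤ x) (hy : 0 ≤ y) (h : x ⊓ y ≤ 0) : x ⊓ y = 0 :=
  le_antisymm h (le_inf hx hy)

lemma sum_nonneg' {ι : Type*} {s : Finset ι} {g : ι → E} (h : ∀ i ∈ s, 0 ≤ g i) :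
    0 ≤ ∑ i ∈ s, g i := by
  classical
  induction s using Finset.cons_induction with
  | empty => simp
  | cons a s ha ih =>
    rw [Finset.sum_cons]
    exact add_nonneg (h a (Finset.mem_cons_self a s))
      (ih (fun i hi => h i (Finset.mem_cons_of_mem hi)))

lemma sum_inf_eq_zero {ι : Type*} {s : Finset ι} {g : ι → E} {c : E}
    (hg : ∀ i ∈ s, 0 ≤ g i) (hc : 0 ≤ c) (h : ∀ i ∈ s, g i ⊓ c = 0) :
    (∑ i ∈ s, g i) ⊓ c = 0 := by
  classical
  induction s using Finset.cons_induction with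
  | empty => simpa using hc
  | cons a s ha ih =>
    rw [Finset.sum_cons]
    have hs0 := sum_nonneg' (fun i hi => hg i (Finset.mem_cons_of_mem hi))
    refine inf_of_le_zero (add_nonneg (hg a (Finset.mem_cons_self a s)) hs0) hc ?_
    calc (g a + ∑ i ∈ s, g i) ⊓ c ≤ g a ⊓ c + (∑ i ∈ s, g i) ⊓ c :=
        inf_add_le' (hg a (Finset.mem_cons_self a s)) hs0 hc
    _ = 0 := by
        rw [h a (Finset.mem_cons_self a s),
          ih (fun i hi => hg i (Finset.mem_cons_of_mem hi))
            (fun i hi => h i (Finset.mem_cons_of_mem hi)), add_zero]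

/-- sum of pairwise disjoint nonneg elements each `≤ Bd` is `≤ Bd`. -/
lemma disj_sum_le {ι : Type*} {s : Finset ι} {g : ι → E} {Bd : E} (hBd : 0 ≤ Bd)
    (hg : ∀ i ∈ s, 0 ≤ g i) (hle : ∀ i ∈ s, g i ≤ Bd)
    (hd : ∀ i ∈ s, ∀ j ∈ s, i ≠ j → g i ⊓ g j = 0) :
    ∑ i ∈ s, g i ≤ Bd := by
  classical
  induction s using Finset.cons_induction with
  | empty => simpa using hBd
  | cons a s ha ih =>
    rw [Finset.sum_cons]
    have hsum0 : (∑ i ∈ s, g i) ⊓ g a = 0 :=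
      sum_inf_eq_zero (fun i hi => hg i (Finset.mem_cons_of_mem hi))
        (hg a (Finset.mem_cons_self a s))
        (fun i hi => hd i (Finset.mem_cons_of_mem hi) a (Finset.mem_cons_self a s)
          (fun hia => ha (hia ▸ hi)))
    have : g a + ∑ i ∈ s, g i = g a ⊔ ∑ i ∈ s, g i := by
      rw [add_comm, disj_add_eq_sup hsum0, sup_comm]
    rw [this]
    exact sup_le (hle a (Finset.mem_cons_self a s))
      (ih (fun i hi => hg i (Finset.mem_cons_of_mem hi))
        (fun i hi => hle i (Finset.mem_cons_of_mem hi))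
        (fun i hi j hj hij => hd i (Finset.mem_cons_of_mem hi) j (Finset.mem_cons_of_mem hj) hij))

lemma cutoff {N : ℝ} (hN : 1 ≤ N) {a e : E} (ha : 0 ≤ a) (he : 0 ≤ e) :
    N • ((a - N • e)⁺ ⊓ e) ≤ a := by
  have hN0 : (0:ℝ) < N := lt_of_lt_of_le one_pos hN
  set b := (a - N • e)⁺ with hb
  set c := (N • e - a)⁺ with hc
  have hbc : b ⊓ c = 0 := by
    rw [hb, hc, ← np_eq_pp_neg a (N • e)]
    exact posPart_inf_negPart_eq_zero _
  have key : N • (b ⊓ e) = (N • b) ⊓ (N • e) := smul_inf hN0 b e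
  have hdisj : ((N • b) ⊓ (N • e)) ⊓ c = 0 := by
    refine inf_of_le_zero (le_inf (smul_nn hN0.le (pp_nonneg _)) (smul_nn hN0.le he))
      (pp_nonneg _) ?_
    calc ((N • b) ⊓ (N • e)) ⊓ c ≤ (N • b) ⊓ c := inf_le_inf_right c inf_le_left
    _ ≤ (N • b) ⊓ (N • c) := by
        refine inf_le_inf_left _ ?_
        have : (1:ℝ) • c ≤ N • c := smul_mono_scalar hN (pp_nonneg _)
        simpa using this
    _ = N • (b ⊓ c) := (smul_inf hN0 b c).symm
    _ = 0 := by rw [hbc, smul_zero]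
  have hce : c ≤ N • e := by
    have : (N • e - a) ≤ N • e := sub_le_self _ ha
    exact (pp_mono this).trans_eq (pp_eq_self (smul_nn hN0.le he))
  have hXsup : ((N • b) ⊓ (N • e)) + c = ((N • b) ⊓ (N • e)) ⊔ c := disj_add_eq_sup hdisj
  have hXle : ((N • b) ⊓ (N • e)) ⊔ c ≤ N • e + b :=
    sup_le (inf_le_right.trans (le_add_of_nonneg_right (pp_nonneg _)))
      (hce.trans (le_add_of_nonneg_right (pp_nonneg _)))
  have ha' : N • e + b - c = a := by
    have h1 : b - c = a - N • e := by
      rw [hb, hc, ← np_eq_pp_neg a (N • e)]; exact posPart_sub_negPart _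
    rw [add_sub_assoc, h1]; abel
  rw [key]
  calc (N • b) ⊓ (N • e) = ((N • b) ⊓ (N • e)) + c - c := by abel
  _ ≤ N • e + b - c := by
      rw [hXsup]; exact sub_le_sub_right hXle c
  _ = a := ha'

lemma grid_step {t : ℝ} (ht : 0 < t) {e v L h : E} (he : 0 ≤ e) (hL : 0 ≤ L) (hv : 0 ≤ v)
    (H1 : v ≤ (t/2) • e + h⁺ + L) (H2 : v ≤ |h - t • e|) (H3 : v ≤ |h|) :
    v ≤ (t/2) • e + (h - t • e)⁺ + L := by
  set T := (t/2) • e with hTdef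
  have hT0 : 0 ≤ T := smul_nn (by positivity) he
  set r := (h - t • e)⁺ with hrdef
  have hr0 : 0 ≤ r := pp_nonneg _
  set z := (v - (T + r + L))⁺ with hzdef
  have hteT : t • e - T = T := by
    rw [hTdef, ← sub_smul, show t - t/2 = t/2 by ring]
  have hrh : r ≤ h⁺ := pp_mono (sub_le_self _ (smul_nn ht.le he))
  have z1 : z ≤ h⁺ - r := by
    refine pp_le ?_ (sub_nonneg.mpr hrh)
    have : v - (T + r + L) ≤ (T + h⁺ + L) - (T + r + L) := sub_le_sub_right H1 _
    calc v - (T + r + L) ≤ (T + h⁺ + L) - (T + r + L) := this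
    _ = h⁺ - r := by abel
  have z2 : z ≤ (T - h)⁺ := by
    have habs : |h - t • e| = r + (t • e - h)⁺ := by
      rw [abs_pp_np, ← hrdef, np_eq_pp_neg]
    have step : v - (T + r + L) ≤ (t • e - h)⁺ - T := by
      calc v - (T + r + L) ≤ (r + (t • e - h)⁺) - (T + r + L) := by
            rw [← habs]; exact sub_le_sub_right H2 _
      _ = (t • e - h)⁺ - T - L := by abel
      _ ≤ (t • e - h)⁺ - T - 0 := sub_le_sub_left hL _
      _ = (t • e - h)⁺ - T := by abel
    calc z ≤ ((t • e - h)⁺ - T)⁺ := pp_mono step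
    _ = (t • e - h - T)⁺ := pp_sub_pp _ hT0
    _ = (T - h)⁺ := by rw [show t • e - h - T = (t • e - T) - h by abel, hteT]
  have z3 : z ≤ (h⁺ - r - T)⁺ + h⁻ := by
    have step : v - (T + r + L) ≤ (h⁺ - r - T) + h⁻ := by
      calc v - (T + r + L) ≤ |h| - (T + r + L) := sub_le_sub_right H3 _
      _ = (h⁺ - r - T) + h⁻ - L := by rw [abs_pp_np]; abel
      _ ≤ (h⁺ - r - T) + h⁻ - 0 := sub_le_sub_left hL _
      _ = (h⁺ - r - T) + h⁻ := by abel
    calc z ≤ ((h⁺ - r - T) + h⁻)⁺ := pp_mono step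
    _ ≤ (h⁺ - r - T)⁺ + h⁻ := pp_add_le _ (np_nonneg h)
  have hG : (T - h)⁺ ⊓ (h⁺ - r - T)⁺ = 0 := by
    refine inf_of_le_zero (pp_nonneg _) (pp_nonneg _) ?_
    calc (T - h)⁺ ⊓ (h⁺ - r - T)⁺ ≤ (T - h)⁺ ⊓ (h⁺ - T)⁺ :=
        inf_le_inf_left _ (pp_mono (by
          have : h⁺ - r - T ≤ h⁺ - T := by
            have := sub_le_sub_right (sub_le_self h⁺ hr0) T
            exact this
          exact this))
    _ = (T - h)⁺ ⊓ (h - T)⁺ := by rw [pp_sub_pp _ hT0]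
    _ = (h - T)⁺ ⊓ (T - h)⁺ := inf_comm _ _
    _ = 0 := disj_pp (by abel_nf; exact le_rfl)
  have zfin : z ≤ h⁻ := by
    calc z ≤ (T - h)⁺ ⊓ ((h⁺ - r - T)⁺ + h⁻) := le_inf z2 z3
    _ = ((h⁺ - r - T)⁺ + h⁻) ⊓ (T - h)⁺ := inf_comm _ _
    _ ≤ (h⁺ - r - T)⁺ ⊓ (T - h)⁺ + h⁻ ⊓ (T - h)⁺ :=
        inf_add_le' (pp_nonneg _) (np_nonneg _) (pp_nonneg _)
    _ = h⁻ ⊓ (T - h)⁺ := by rw [inf_comm ((h⁺ - r - T)⁺), hG, zero_add]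
    _ ≤ h⁻ := inf_le_left
  have zzero : z = 0 := by
    refine le_antisymm ?_ (pp_nonneg _)
    calc z ≤ h⁺ ⊓ h⁻ := le_inf (z1.trans (sub_le_self _ hr0)) zfin
    _ = 0 := posPart_inf_negPart_eq_zero h
  have : v - (T + r + L) ≤ 0 := by
    have := le_pp (v - (T + r + L))
    rw [← hzdef, zzero] at this
    exact this
  calc v = (v - (T + r + L)) + (T + r + L) := by abel
  _ ≤ 0 + (T + r + L) := add_le_add_left this _
  _ = T + r + L := zero_add _

lemma grid {f e v : E} (he : 0 ≤ e) {t : ℝ} (ht : 0 < t)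
    (H : ∀ l : ℝ, v ≤ |f - l • e|) (hv : 0 ≤ v) (μ : ℝ) :
    ∀ m : ℕ, v ≤ (t/2) • e + (f - (μ + m * t) • e)⁺ + (μ • e - f)⁺ := by
  intro m
  induction m with
  | zero =>
    have h0 : v ≤ |f - μ • e| := H μ
    rw [abs_pp_np, np_eq_pp_neg] at h0
    calc v ≤ (f - μ • e)⁺ + (μ • e - f)⁺ := h0
    _ ≤ (t/2) • e + ((f - (μ + (0:ℕ) * t) • e)⁺ + (μ • e - f)⁺) := by
        push_cast
        rw [zero_mul, add_zero]
        exact le_add_of_nonneg_left (smul_nn (by positivity) he)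
    _ = (t/2) • e + (f - (μ + (0:ℕ) * t) • e)⁺ + (μ • e - f)⁺ := by rw [add_assoc]
  | succ m ih =>
    have harg : f - (μ + (m:ℝ) * t) • e - t • e = f - (μ + ((m:ℝ) + 1) * t) • e := by
      rw [show (μ + ((m:ℝ)+1) * t) • e = (μ + (m:ℝ) * t) • e + t • e by
        rw [← add_smul]; ring_nf]
      abel
    have key := grid_step ht he (pp_nonneg (μ • e - f)) hv ih
      (by rw [harg]; exact H _) (H _)
    rw [harg] at key
    push_cast
    exact key

lemma inf_sub_dist (u v w : E) : (u ⊓ v) - w = (u - w) ⊓ (v - w) := by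
  rw [sub_eq_add_neg, add_comm, add_inf, add_comm, add_comm (-w) v, ← sub_eq_add_neg,
    ← sub_eq_add_neg]

lemma pp_eq_add_np (y : E) : y⁺ = y + y⁻ :=
  eq_add_of_sub_eq (posPart_sub_negPart y)

lemma sub_inf_pp (a b : E) : a - a ⊓ b = (a - b)⁺ := by
  have h1 : (a - b)⁺ = (a ⊔ b) - b := by rw [posPart_def, sup_sub]; simp
  have h2 := inf_add_sup a b
  rw [h1]
  have : a ⊔ b = a + b - a ⊓ b := by rw [← h2]; abel
  rw [this]; abel

lemma abs_nn (a : E) : 0 ≤ |a| := by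
  rw [abs_pp_np]; exact add_nonneg (pp_nonneg a) (np_nonneg a)

lemma abs_sub_le_add {a b : E} (ha : 0 ≤ a) (hb : 0 ≤ b) : |a - b| ≤ a + b := by
  rw [abs_pp_np]
  exact add_le_add (pp_le (sub_le_self a hb) ha)
    (((np_eq_pp_neg a b).trans_le (pp_le (sub_le_self b ha) hb)))

lemma abs_add' (a b : E) : |a + b| ≤ |a| + |b| := by
  rw [abs, sup_le_iff]
  refine ⟨add_le_add (le_abs_self a) (le_abs_self b), ?_⟩
  rw [neg_add]
  exact add_le_add (neg_le_abs a) (neg_le_abs b)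

lemma abs_eq_zero' {a : E} (h : |a| ≤ 0) : a = 0 := by
  have h1 : a ≤ 0 := (le_abs_self a).trans h
  have h2 : -a ≤ 0 := (neg_le_abs a).trans h
  exact le_antisymm h1 (by simpa using h2)

lemma sum_map_of_add {S : E → E} (hS : ∀ a b, S (a + b) = S a + S b) {ι : Type*}
    (s : Finset ι) (g : ι → E) : S (∑ i ∈ s, g i) = ∑ i ∈ s, S (g i) := by
  classical
  have hS0 : S 0 = 0 := by
    have h00 := hS 0 0
    rw [add_zero] at h00
    exact left_eq_add.mp h00
  induction s using Finset.cons_induction with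
  | empty => simpa using hS0
  | cons a s ha ih => rw [Finset.sum_cons, Finset.sum_cons, hS, ih]

lemma abs_sum_le {ι : Type*} (s : Finset ι) (g : ι → E) :
    |∑ i ∈ s, g i| ≤ ∑ i ∈ s, |g i| := by
  classical
  induction s using Finset.cons_induction with
  | empty => simp
  | cons a s ha ih =>
    rw [Finset.sum_cons, Finset.sum_cons]
    exact (abs_add' _ _).trans (add_le_add_right ih _)

/-- A Φ-algebra-like multiplication (associativity not required). -/
structure Good (e : E) (B : E → E → E) : Prop where
  add₁ : ∀ x y z : E, B (x + y) z = B x z + B y z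
  add₂ : ∀ x y z : E, B x (y + z) = B x y + B x z
  sm₁ : ∀ (a : ℝ) (x y : E), B (a • x) y = a • B x y
  sm₂ : ∀ (a : ℝ) (x y : E), B x (a • y) = a • B x y
  pos : ∀ x y : E, 0 ≤ x → 0 ≤ y → 0 ≤ B x y
  fax₁ : ∀ x y c : E, x ⊓ y = 0 → 0 ≤ c → B c x ⊓ y = 0
  fax₂ : ∀ x y c : E, x ⊓ y = 0 → 0 ≤ c → B x c ⊓ y = 0
  u₁ : ∀ x : E, B x e = x
  u₂ : ∀ x : E, B e x = x

namespace Good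
variable {e : E} {B : E → E → E} (hB : Good e B)
include hB

lemma neg₁ (x y : E) : B (-x) y = -(B x y) := by
  rw [← neg_one_smul ℝ x, hB.sm₁, neg_one_smul]

lemma neg₂ (x y : E) : B x (-y) = -(B x y) := by
  rw [← neg_one_smul ℝ y, hB.sm₂, neg_one_smul]

lemma sub₁ (x y z : E) : B (x - y) z = B x z - B y z := by
  rw [sub_eq_add_neg, hB.add₁, hB.neg₁, ← sub_eq_add_neg]

lemma sub₂ (x y z : E) : B x (y - z) = B x y - B x z := by
  rw [sub_eq_add_neg, hB.add₂, hB.neg₂, ← sub_eq_add_neg]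

lemma disj_mul {x y : E} (h : x ⊓ y = 0) : B x y = 0 := by
  have hx : 0 ≤ x := h ▸ inf_le_left
  have hy : 0 ≤ y := h ▸ inf_le_right
  have hyx : y ⊓ x = 0 := by rwa [inf_comm]
  have wy : B x y ⊓ y = 0 := hB.fax₂ x y y h hy
  have ww : B x y ⊓ B x y = 0 := by
    have : y ⊓ B x y = 0 := by rwa [inf_comm] at wy
    exact hB.fax₁ y (B x y) x this hx
  rw [inf_idem] at ww
  exact ww

lemma sq_split (f : E) : B f f = B f⁺ f⁺ + B f⁻ f⁻ := by
  have hd := posPart_inf_negPart_eq_zero f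
  have hd' : f⁻ ⊓ f⁺ = 0 := by rwa [inf_comm] at hd
  calc B f f = B (f⁺ - f⁻) (f⁺ - f⁻) := by rw [posPart_sub_negPart]
  _ = B f⁺ f⁺ - B f⁺ f⁻ - (B f⁻ f⁺ - B f⁻ f⁻) := by rw [hB.sub₁, hB.sub₂, hB.sub₂]
  _ = B f⁺ f⁺ + B f⁻ f⁻ := by rw [hB.disj_mul hd, hB.disj_mul hd']; abel

lemma sq_nonneg (f : E) : 0 ≤ B f f := by
  rw [hB.sq_split]
  exact add_nonneg (hB.pos _ _ (pp_nonneg f) (pp_nonneg f))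
    (hB.pos _ _ (np_nonneg f) (np_nonneg f))

lemma e_nonneg : (0:E) ≤ e := by
  have := hB.sq_nonneg e
  rwa [hB.u₁ e] at this

lemma weak_unit {x : E} (hx : 0 ≤ x) (h : x ⊓ e = 0) : x = 0 := by
  have h' : e ⊓ x = 0 := by rwa [inf_comm]
  have := hB.fax₁ e x x h' hx
  rw [hB.u₁ x, inf_idem] at this
  exact this

lemma mono₂ {x y y' : E} (hx : 0 ≤ x) (h : y ≤ y') : B x y ≤ B x y' := by
  have h0 : 0 ≤ B x (y' - y) := hB.pos _ _ hx (sub_nonneg.mpr h)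
  rw [hB.sub₂] at h0
  exact sub_nonneg.mp h0

lemma mono₁ {x x' y : E} (hy : 0 ≤ y) (h : x ≤ x') : B x y ≤ B x' y := by
  have h0 : 0 ≤ B (x' - x) y := hB.pos _ _ (sub_nonneg.mpr h) hy
  rw [hB.sub₁] at h0
  exact sub_nonneg.mp h0

lemma sq_abs (f : E) : B f f = B |f| |f| := by
  have hd := posPart_inf_negPart_eq_zero f
  have hd' : f⁻ ⊓ f⁺ = 0 := by rwa [inf_comm] at hd
  rw [hB.sq_split, abs_pp_np, hB.add₁, hB.add₂, hB.add₂, hB.disj_mul hd, hB.disj_mul hd']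
  abel

lemma sq_inf_e_le {x : E} (hx : 0 ≤ x) : (B x x) ⊓ e ≤ x := by
  set a := (x - e)⁺ with hadef
  set b := (x - e)⁻ with hbdef
  have hab : a ⊓ b = 0 := posPart_inf_negPart_eq_zero _
  have hBab : B x a ⊓ b = 0 := hB.fax₁ a b x hab hx
  have key : B x x - x = B x a - B x b := by
    calc B x x - x = B x x - B x e := by rw [hB.u₁]
    _ = B x (x - e) := (hB.sub₂ _ _ _).symm
    _ = B x (a - b) := by rw [hadef, hbdef, posPart_sub_negPart]
    _ = B x a - B x b := hB.sub₂ _ _ _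
  have hex : e - x = b - a := by
    have : x - e = a - b := (posPart_sub_negPart _).symm
    rw [show e - x = -(x - e) by abel, this]; abel
  have step : (B x x - x) ⊓ (e - x) ≤ 0 := by
    calc (B x x - x) ⊓ (e - x) = (B x a - B x b) ⊓ (b - a) := by rw [key, hex]
    _ ≤ (B x a) ⊓ b := inf_le_inf (sub_le_self _ (hB.pos _ _ hx (np_nonneg _)))
        (sub_le_self _ (pp_nonneg _))
    _ = 0 := hBab
  have : (B x x ⊓ e) - x ≤ 0 := by rw [inf_sub_dist]; exact step
  exact sub_nonpos.mp this

lemma tail_bound {x : E} (hx : 0 ≤ x) (n : ℕ) :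
    (n:ℝ) • (x - (n:ℝ) • e)⁺ ≤ B x x := by
  set r := (x - (n:ℝ) • e)⁺ with hrdef
  have hne : (0:E) ≤ (n:ℝ) • e := smul_nn (Nat.cast_nonneg n) hB.e_nonneg
  have hr0 : 0 ≤ r := pp_nonneg _
  have h1 : B x r ≤ B x x := by
    refine hB.mono₂ hx ?_
    rw [hrdef, ← sub_inf_pp]
    exact sub_le_self x (le_inf hx hne)
  have hsr : ((n:ℝ) • e - x)⁺ ⊓ r = 0 := by
    rw [hrdef, ← np_eq_pp_neg x ((n:ℝ) • e), inf_comm]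
    exact posPart_inf_negPart_eq_zero _
  have hxsplit : x - (n:ℝ) • e = r - ((n:ℝ) • e - x)⁺ := by
    rw [hrdef, ← np_eq_pp_neg x ((n:ℝ) • e)]
    exact (posPart_sub_negPart _).symm
  have h2 : B x r = (n:ℝ) • r + B r r := by
    have e1 : B x r = B (x - (n:ℝ) • e) r + (n:ℝ) • r := by
      calc B x r = B ((x - (n:ℝ) • e) + (n:ℝ) • e) r := by
            rw [show (x - (n:ℝ) • e) + (n:ℝ) • e = x by abel]
      _ = B (x - (n:ℝ) • e) r + B ((n:ℝ) • e) r := hB.add₁ _ _ _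
      _ = B (x - (n:ℝ) • e) r + (n:ℝ) • r := by rw [hB.sm₁, hB.u₂]
    rw [e1, hxsplit, hB.sub₁, hB.disj_mul hsr]
    abel
  calc (n:ℝ) • r ≤ (n:ℝ) • r + B r r := le_add_of_nonneg_right (hB.sq_nonneg r)
  _ = B x r := h2.symm
  _ ≤ B x x := h1

lemma sq_expand (l : ℝ) (f : E) :
    B (f - l • e) (f - l • e) = B f f - (2*l) • f + (l^2) • e := by
  rw [hB.sub₁, hB.sub₂, hB.sub₂, hB.sm₁, hB.sm₂, hB.sm₂, hB.sm₁, hB.u₁, hB.u₂, hB.u₁ e]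
  rw [smul_smul, show l*l = l^2 by ring, show (2*l) • f = l • f + l • f by
    rw [← add_smul]; ring_nf]
  abel

lemma upper_sq (l : ℝ) (f : E) : (2*l) • f - (l^2) • e ≤ B f f := by
  have h : 0 ≤ B f f - (2*l) • f + (l^2) • e := by
    have h0 := hB.sq_nonneg (f - l • e)
    rwa [hB.sq_expand] at h0
  have h2 : 0 ≤ B f f - ((2*l) • f - (l^2) • e) := by
    rw [show B f f - ((2*l) • f - (l^2) • e) = B f f - (2*l) • f + (l^2) • e by abel]
    exact h
  exact sub_nonneg.mp h2

theorem isLUB_sq (hArch : ∀ x y : E, (∀ n : ℕ, (n : ℝ) • x ≤ y) → x ≤ 0) (f : E) :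
    IsLUB (Set.range fun l : ℝ => (2 * l) • f - (l ^ 2) • e) (B f f) := by
  constructor
  · rintro z ⟨l, rfl⟩
    exact hB.upper_sq l f
  · intro u hu
    have hub : ∀ l : ℝ, (2*l) • f - (l^2) • e ≤ u := fun l => hu ⟨l, rfl⟩
    have hd0 : 0 ≤ (B f f - u)⁺ := pp_nonneg _
    have hdle : ∀ l : ℝ, (B f f - u)⁺ ≤ B (f - l • e) (f - l • e) := by
      intro l
      refine pp_le ?_ (hB.sq_nonneg _)
      rw [hB.sq_expand]
      calc B f f - u ≤ B f f - ((2*l) • f - (l^2) • e) := sub_le_sub_left (hub l) _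
      _ = B f f - (2*l) • f + (l^2) • e := by abel
    set v := (B f f - u)⁺ ⊓ e with hvdef
    have hv0 : 0 ≤ v := le_inf hd0 hB.e_nonneg
    have hve : v ≤ e := inf_le_right
    have hvabs : ∀ l : ℝ, v ≤ |f - l • e| := by
      intro l
      have h1 : v ≤ B |f - l • e| |f - l • e| ⊓ e :=
        inf_le_inf_right e ((hdle l).trans_eq (hB.sq_abs _))
      exact h1.trans (hB.sq_inf_e_le (abs_nn _))
    have hv_t : ∀ t : ℝ, 0 < t → v ≤ (t/2) • e := by
      intro t ht
      set w := (v - (t/2) • e)⁺ with hwdef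
      have hw0 : 0 ≤ w := pp_nonneg _
      have hw_e : w ≤ e := by
        calc w ≤ v⁺ := pp_mono (sub_le_self v (smul_nn (by positivity) hB.e_nonneg))
        _ = v := pp_eq_self hv0
        _ ≤ e := hve
      have hgrid : ∀ n : ℕ,
          v ≤ (t/2) • e + (f - ((n:ℝ)*t) • e)⁺ + ((-((n:ℝ)*t)) • e - f)⁺ := by
        intro n
        have hg := grid hB.e_nonneg ht hvabs hv0 (-((n:ℝ)*t)) (2*n)
        have harg : -((n:ℝ)*t) + ((2*n : ℕ):ℝ) * t = (n:ℝ)*t := by push_cast; ring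
        rwa [harg] at hg
      have hwn : ∀ n : ℕ, w ≤ (|f| - ((n:ℝ)*t) • e)⁺ := by
        intro n
        have hA : (f - ((n:ℝ)*t) • e)⁺ ≤ (|f| - ((n:ℝ)*t) • e)⁺ :=
          pp_mono (sub_le_sub_right (le_abs_self f) _)
        have hBt : ((-((n:ℝ)*t)) • e - f)⁺ ≤ (|f| - ((n:ℝ)*t) • e)⁺ := by
          have hrw : (-((n:ℝ)*t)) • e - f = -f - ((n:ℝ)*t) • e := by
            rw [neg_smul]; abel
          rw [hrw]
          exact pp_mono (sub_le_sub_right (neg_le_abs f) _)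
        have hdisj : (f - ((n:ℝ)*t) • e)⁺ ⊓ ((-((n:ℝ)*t)) • e - f)⁺ = 0 := by
          refine disj_pp ?_
          have hsum : (f - ((n:ℝ)*t) • e) + ((-((n:ℝ)*t)) • e - f)
              = -((((n:ℝ)*t) • e) + (((n:ℝ)*t) • e)) := by
            rw [neg_smul]; abel
          rw [hsum, neg_nonpos]
          have := smul_nn (by positivity : (0:ℝ) ≤ (n:ℝ)*t) hB.e_nonneg
          exact add_nonneg this this
        have hside : w ≤ (f - ((n:ℝ)*t) • e)⁺ + ((-((n:ℝ)*t)) • e - f)⁺ := by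
          refine pp_le ?_ (add_nonneg (pp_nonneg _) (pp_nonneg _))
          have := hgrid n
          calc v - (t/2) • e
              ≤ ((t/2) • e + (f - ((n:ℝ)*t) • e)⁺ + ((-((n:ℝ)*t)) • e - f)⁺) - (t/2) • e :=
              sub_le_sub_right this _
          _ = (f - ((n:ℝ)*t) • e)⁺ + ((-((n:ℝ)*t)) • e - f)⁺ := by abel
        calc w ≤ (f - ((n:ℝ)*t) • e)⁺ + ((-((n:ℝ)*t)) • e - f)⁺ := hside
        _ = (f - ((n:ℝ)*t) • e)⁺ ⊔ ((-((n:ℝ)*t)) • e - f)⁺ := disj_add_eq_sup hdisj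
        _ ≤ (|f| - ((n:ℝ)*t) • e)⁺ := sup_le hA hBt
      have harch : ∀ m : ℕ, (m:ℝ) • w ≤ |f| := by
        intro m
        set n : ℕ := ⌈((m:ℝ)+1)/t⌉₊ + 1 with hndef
        have hn1 : ((m:ℝ)+1)/t ≤ (n:ℝ) := by
          rw [hndef]; push_cast
          exact (Nat.le_ceil _).trans (by linarith)
        have hnt : (m:ℝ)+1 ≤ (n:ℝ)*t := by
          rw [← div_le_iff₀ ht]
          exact hn1
        have hN1 : 1 ≤ (n:ℝ)*t := by
          have : (0:ℝ) ≤ (m:ℝ) := Nat.cast_nonneg m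
          linarith
        have hNm : (m:ℝ) ≤ (n:ℝ)*t := by linarith
        have hcut := cutoff hN1 (abs_nn f) hB.e_nonneg
        have hwle : w ≤ (|f| - ((n:ℝ)*t) • e)⁺ ⊓ e := le_inf (hwn n) hw_e
        calc (m:ℝ) • w ≤ ((n:ℝ)*t) • w := smul_mono_scalar hNm hw0
        _ ≤ ((n:ℝ)*t) • ((|f| - ((n:ℝ)*t) • e)⁺ ⊓ e) :=
            smul_le_smul_of_nonneg_left hwle (by linarith)
        _ ≤ |f| := hcut
      have hw_nonpos : w ≤ 0 := hArch w |f| harch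
      have : v - (t/2) • e ≤ 0 := (le_pp _).trans hw_nonpos
      exact sub_nonpos.mp this
    have harch2 : ∀ m : ℕ, (m:ℝ) • v ≤ e := by
      intro m
      have h1 : v ≤ (((m:ℝ)+1)⁻¹) • e := by
        have h2 := hv_t (2*((m:ℝ)+1)⁻¹) (by positivity)
        rwa [show (2*((m:ℝ)+1)⁻¹)/2 = ((m:ℝ)+1)⁻¹ by ring] at h2
      have hm1 : (0:ℝ) < (m:ℝ)+1 := by positivity
      calc (m:ℝ) • v ≤ ((m:ℝ)+1) • v := smul_mono_scalar (by linarith) hv0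
      _ ≤ ((m:ℝ)+1) • ((((m:ℝ)+1)⁻¹) • e) := smul_le_smul_of_nonneg_left h1 hm1.le
      _ = e := smul_inv_smul₀ hm1.ne' e
    have hv_zero : v = 0 := le_antisymm (hArch v e harch2) hv0
    have hd_zero : (B f f - u)⁺ = 0 := hB.weak_unit hd0 hv_zero
    have : B f f - u ≤ 0 := (le_pp _).trans_eq hd_zero
    exact sub_nonpos.mp this

end Good

/-- Positive band-preserving additive map. -/
structure Orth (e : E) (S : E → E) : Prop where
  add : ∀ x y : E, S (x + y) = S x + S y
  smul : ∀ (a : ℝ) (x : E), S (a • x) = a • S x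
  pos : ∀ x : E, 0 ≤ x → 0 ≤ S x
  band : ∀ x y : E, 0 ≤ x → 0 ≤ y → x ⊓ y = 0 → S x ⊓ y = 0

namespace Orth
variable {e : E} {S : E → E} (hS : Orth e S)
include hS

lemma zero : S 0 = 0 := by
  have h := hS.add 0 0
  rw [add_zero] at h
  exact left_eq_add.mp h

lemma sub (x y : E) : S (x - y) = S x - S y := by
  have h := hS.add (x - y) y
  rw [show x - y + y = x by abel] at h
  rw [h]; abel

lemma mono {x y : E} (h : x ≤ y) : S x ≤ S y := by
  have h0 := hS.pos _ (sub_nonneg.mpr h)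
  rw [hS.sub] at h0
  exact sub_nonneg.mp h0

end Orth

section Vanish
variable {e : E} {S T : E → E}

theorem vanish (hArch : ∀ x y : E, (∀ n : ℕ, (n : ℝ) • x ≤ y) → x ≤ 0)
    (he : 0 ≤ e) (hS : Orth e S) (hT : Orth e T) (hste : S e = T e)
    (htail : ∀ x : E, 0 ≤ x → ∃ w : E, ∀ n : ℕ, (n:ℝ) • (x - (n:ℝ) • e)⁺ ≤ w) :
    ∀ x : E, S x = T x := by
  have hSe0 : 0 ≤ S e := hS.pos e he
  -- step (i): x ∈ [0, e]
  have step1 : ∀ x : E, 0 ≤ x → x ≤ e → S x = T x := by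
    intro x hx hxe
    have key : ∀ n : ℕ, 1 ≤ n → |S x - T x| ≤ ((2:ℝ)/(n:ℝ)) • (S e) := by
      intro n hn
      have hn0 : (0:ℝ) < (n:ℝ) := by exact_mod_cast Nat.pos_of_ne_zero (by omega)
      set p : ℕ → E := fun j => (x - ((j:ℝ)/(n:ℝ)) • e)⁺ with hpdef
      set q : ℕ → E := fun j => (((j:ℝ)/(n:ℝ)) • e - x)⁺ with hqdef
      set d : ℕ → E := fun j => p j - p (j+1) with hddef
      set z : ℕ → E := fun j => ((n:ℝ))⁻¹ • e - d j with hzdef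
      have hp' : ∀ j : ℕ, p j = (x - ((j:ℝ)/(n:ℝ)) • e)⁺ := fun j => by rw [hpdef]
      have hq' : ∀ j : ℕ, q j = (((j:ℝ)/(n:ℝ)) • e - x)⁺ := fun j => by rw [hqdef]
      have hd' : ∀ j : ℕ, d j = p j - p (j+1) := fun j => by rw [hddef]
      have hz' : ∀ j : ℕ, z j = ((n:ℝ))⁻¹ • e - d j := fun j => by rw [hzdef]
      have hpq : ∀ j : ℕ, p j - q j = x - ((j:ℝ)/(n:ℝ)) • e := by
        intro j
        rw [hp' j, hq' j, ← np_eq_pp_neg x (((j:ℝ)/(n:ℝ)) • e)]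
        exact posPart_sub_negPart _
      have hpq0 : ∀ j : ℕ, p j ⊓ q j = 0 := by
        intro j
        rw [hp' j, hq' j, ← np_eq_pp_neg x (((j:ℝ)/(n:ℝ)) • e)]
        exact posPart_inf_negPart_eq_zero _
      have hp_anti : ∀ j l : ℕ, j ≤ l → p l ≤ p j := by
        intro j l hjl
        rw [hp' j, hp' l]
        refine pp_mono (sub_le_sub_left ?_ x)
        refine smul_mono_scalar ?_ he
        have hc : (j:ℝ) ≤ (l:ℝ) := by exact_mod_cast hjl
        gcongr
      have hq_mono : ∀ j l : ℕ, j ≤ l → q j ≤ q l := by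
        intro j l hjl
        rw [hq' j, hq' l]
        refine pp_mono (sub_le_sub_right ?_ x)
        refine smul_mono_scalar ?_ he
        have hc : (j:ℝ) ≤ (l:ℝ) := by exact_mod_cast hjl
        gcongr
      have hd_eq : ∀ j : ℕ, d j = ((n:ℝ))⁻¹ • e + q j - q (j+1) := by
        intro j
        have h1 : p j = x - ((j:ℝ)/(n:ℝ)) • e + q j := by
          have := hpq j; rw [← this]; abel
        have h2 : p (j+1) = x - ((((j:ℕ)+1:ℕ):ℝ)/(n:ℝ)) • e + q (j+1) := by
          have := hpq (j+1); rw [← this]; abel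
        have hstep : (((j+1:ℕ):ℝ)/(n:ℝ)) • e - ((j:ℝ)/(n:ℝ)) • e = ((n:ℝ))⁻¹ • e := by
          rw [← sub_smul]
          congr 1
          push_cast
          field_simp
          ring
        rw [hd' j, h1, h2, show x - ((j:ℝ)/(n:ℝ)) • e + q j
            - (x - ((((j:ℕ)+1:ℕ):ℝ)/(n:ℝ)) • e + q (j+1))
          = (((((j:ℕ)+1:ℕ):ℝ)/(n:ℝ)) • e - ((j:ℝ)/(n:ℝ)) • e) + q j - q (j+1) by abel, hstep]
      have hd0 : ∀ j : ℕ, 0 ≤ d j := fun j => by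
        rw [hd' j]; exact sub_nonneg.mpr (hp_anti j (j+1) (by omega))
      have hdle : ∀ j : ℕ, d j ≤ ((n:ℝ))⁻¹ • e := by
        intro j
        rw [hd_eq j]
        calc ((n:ℝ))⁻¹ • e + q j - q (j+1) ≤ ((n:ℝ))⁻¹ • e + q (j+1) - q (j+1) := by
              have := hq_mono j (j+1) (by omega)
              exact sub_le_sub_right (add_le_add_right this _) _
        _ = ((n:ℝ))⁻¹ • e := by abel
      have hz_eq : ∀ j : ℕ, z j = q (j+1) - q j := by
        intro j
        rw [hz' j, hd_eq j]; abel
      have hz0 : ∀ j : ℕ, 0 ≤ z j := by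
        intro j
        rw [hz_eq j]
        exact sub_nonneg.mpr (hq_mono j (j+1) (by omega))
      have hzq : ∀ j : ℕ, z j ≤ q (j+1) := by
        intro j
        rw [hz_eq j]
        exact sub_le_self _ (pp_nonneg _)
      have hplq : ∀ j l : ℕ, j + 1 ≤ l → p l ⊓ q (j+1) = 0 := by
        intro j l hjl
        refine inf_of_le_zero (by rw [hp' l]; exact pp_nonneg _)
          (by rw [hq' (j+1)]; exact pp_nonneg _) ?_
        calc p l ⊓ q (j+1) ≤ p (j+1) ⊓ q (j+1) := inf_le_inf_right _ (hp_anti _ _ hjl)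
        _ = 0 := hpq0 (j+1)
      set u : ℕ → E := fun j => |S (d j) - T (d j)| with hudef
      have hu' : ∀ j : ℕ, u j = |S (d j) - T (d j)| := fun j => by rw [hudef]
      have hu0 : ∀ j : ℕ, 0 ≤ u j := fun j => by rw [hu' j]; exact abs_nn _
      have hu_sum_bound : ∀ j : ℕ, u j ≤ S (d j) + T (d j) := fun j => by
        rw [hu' j]
        exact abs_sub_le_add (hS.pos _ (hd0 j)) (hT.pos _ (hd0 j))
      have hu_le : ∀ j : ℕ, u j ≤ ((2:ℝ)/(n:ℝ)) • (S e) := by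
        intro j
        calc u j ≤ S (d j) + T (d j) := hu_sum_bound j
        _ ≤ S (((n:ℝ))⁻¹ • e) + T (((n:ℝ))⁻¹ • e) :=
            add_le_add (hS.mono (hdle j)) (hT.mono (hdle j))
        _ = ((n:ℝ))⁻¹ • S e + ((n:ℝ))⁻¹ • T e := by rw [hS.smul, hT.smul]
        _ = ((2:ℝ)/(n:ℝ)) • (S e) := by
            rw [← hste, ← add_smul]
            congr 1
            field_simp
            ring
      have hRz : ∀ j : ℕ, S (d j) - T (d j) = -(S (z j) - T (z j)) := by
        intro j
        have hdz : d j = ((n:ℝ))⁻¹ • e - z j := by rw [hz' j]; abel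
        rw [hdz, hS.sub, hT.sub, hS.smul, hT.smul, hste]
        abel
      have hdisj : ∀ j l : ℕ, j + 1 ≤ l → u j ⊓ u l = 0 := by
        intro j l hjl
        have h1 : d l ⊓ z j = 0 := by
          refine inf_of_le_zero (hd0 l) (hz0 j) ?_
          have hstep1 : d l ⊓ z j ≤ p l ⊓ q (j+1) := by
            refine inf_le_inf ?_ (hzq j)
            rw [hd' l]
            exact sub_le_self _ (by rw [hp' (l+1)]; exact pp_nonneg _)
          exact hstep1.trans_eq (hplq j l hjl)
        have h2 : (S (d l) + T (d l)) ⊓ z j ≤ 0 := by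
          calc (S (d l) + T (d l)) ⊓ z j ≤ S (d l) ⊓ z j + T (d l) ⊓ z j :=
              inf_add_le' (hS.pos _ (hd0 l)) (hT.pos _ (hd0 l)) (hz0 j)
          _ = 0 := by
              rw [hS.band _ _ (hd0 l) (hz0 j) h1, hT.band _ _ (hd0 l) (hz0 j) h1, add_zero]
        have h3 : u l ⊓ z j = 0 := by
          refine inf_of_le_zero (hu0 l) (hz0 j) ?_
          exact (inf_le_inf_right _ (hu_sum_bound l)).trans h2
        have h3' : z j ⊓ u l = 0 := by rwa [inf_comm] at h3
        have h4 : (S (z j) + T (z j)) ⊓ u l ≤ 0 := by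
          calc (S (z j) + T (z j)) ⊓ u l ≤ S (z j) ⊓ u l + T (z j) ⊓ u l :=
              inf_add_le' (hS.pos _ (hz0 j)) (hT.pos _ (hz0 j)) (hu0 l)
          _ = 0 := by
              rw [hS.band _ _ (hz0 j) (hu0 l) h3', hT.band _ _ (hz0 j) (hu0 l) h3', add_zero]
        refine inf_of_le_zero (hu0 j) (hu0 l) ?_
        have hju : u j ≤ S (z j) + T (z j) := by
          rw [hu' j, hRz j, abs_neg]
          exact abs_sub_le_add (hS.pos _ (hz0 j)) (hT.pos _ (hz0 j))
        exact (inf_le_inf_right _ hju).trans h4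
      have hsum_d : ∑ j ∈ Finset.range n, d j = x := by
        have : ∀ j ∈ Finset.range n, d j = p j - p (j+1) := fun j _ => hd' j
        rw [Finset.sum_congr rfl this, Finset.sum_range_sub' p]
        have hp0 : p 0 = x := by
          rw [hp' 0]
          simp only [Nat.cast_zero, zero_div, zero_smul, sub_zero]
          exact pp_eq_self hx
        have hpn : p n = 0 := by
          rw [hp' n, div_self hn0.ne', one_smul]
          exact pp_eq_zero (sub_nonpos.mpr hxe)
        rw [hp0, hpn, sub_zero]
      have hRx : S x - T x = ∑ j ∈ Finset.range n, (S (d j) - T (d j)) := by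
        rw [← hsum_d, sum_map_of_add hS.add, sum_map_of_add hT.add, Finset.sum_sub_distrib]
      calc |S x - T x| ≤ ∑ j ∈ Finset.range n, u j := by
            rw [hRx]
            refine (abs_sum_le _ _).trans_eq ?_
            exact Finset.sum_congr rfl (fun j _ => (hu' j).symm)
      _ ≤ ((2:ℝ)/(n:ℝ)) • (S e) := by
          refine disj_sum_le (smul_nn (by positivity) hSe0) (fun j _ => hu0 j)
            (fun j _ => hu_le j) ?_
          intro i _ j _ hij
          rcases lt_or_gt_of_ne hij with h | h
          · exact hdisj i j (by omega)
          · rw [inf_comm]; exact hdisj j i (by omega)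
    have harch : ∀ m : ℕ, (m:ℝ) • |S x - T x| ≤ (2:ℝ) • (S e) := by
      intro m
      rcases Nat.eq_zero_or_pos m with hm | hm
      · rw [hm]
        simp only [Nat.cast_zero, zero_smul]
        exact smul_nn (by norm_num) hSe0
      · have hm0 : (0:ℝ) < (m:ℝ) := by exact_mod_cast hm
        calc (m:ℝ) • |S x - T x| ≤ (m:ℝ) • (((2:ℝ)/(m:ℝ)) • (S e)) :=
            smul_le_smul_of_nonneg_left (key m hm) hm0.le
        _ = (2:ℝ) • (S e) := by
            rw [smul_smul]
            congr 1
            field_simp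
    have := hArch _ _ harch
    have h0 := abs_eq_zero' this
    exact sub_eq_zero.mp h0
  -- step (ii): 0 ≤ x ≤ n • e
  have step2 : ∀ (m : ℕ), 1 ≤ m → ∀ x : E, 0 ≤ x → x ≤ (m:ℝ) • e → S x = T x := by
    intro m hm x hx hxe
    have hm0 : (0:ℝ) < (m:ℝ) := by exact_mod_cast Nat.pos_of_ne_zero (by omega)
    have hx' : (0:E) ≤ ((m:ℝ))⁻¹ • x := smul_nn (by positivity) hx
    have hxe' : ((m:ℝ))⁻¹ • x ≤ e := by
      have := smul_le_smul_of_nonneg_left hxe (inv_nonneg.mpr hm0.le)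
      rwa [inv_smul_smul₀ hm0.ne'] at this
    have h1 := step1 _ hx' hxe'
    have h2 : x = (m:ℝ) • (((m:ℝ))⁻¹ • x) := (smul_inv_smul₀ hm0.ne' x).symm
    rw [h2, hS.smul, hT.smul, h1]
  -- step (iii): 0 ≤ x
  have step3 : ∀ x : E, 0 ≤ x → S x = T x := by
    intro x hx
    obtain ⟨w, hw⟩ := htail x hx
    have hw0 : 0 ≤ w := by
      have := hw 0
      simpa using this
    have harch : ∀ n : ℕ, (n:ℝ) • |S x - T x| ≤ S w + T w := by
      intro n
      rcases Nat.eq_zero_or_pos n with hn | hn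
      · rw [hn]
        simp only [Nat.cast_zero, zero_smul]
        exact add_nonneg (hS.pos w hw0) (hT.pos w hw0)
      · have hne : (0:E) ≤ (n:ℝ) • e := smul_nn (Nat.cast_nonneg n) he
        set r := (x - (n:ℝ) • e)⁺ with hrdef
        have hr0 : 0 ≤ r := pp_nonneg _
        have hxsplit : x ⊓ ((n:ℝ) • e) + r = x := by
          rw [hrdef, ← sub_inf_pp]
          abel
        have hinf0 : 0 ≤ x ⊓ ((n:ℝ) • e) := le_inf hx hne
        have hinfeq := step2 n hn _ hinf0 inf_le_right
        have hRr : S x - T x = S r - T r := by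
          have h1 : S x = S (x ⊓ ((n:ℝ) • e)) + S r := by rw [← hS.add, hxsplit]
          have h2 : T x = T (x ⊓ ((n:ℝ) • e)) + T r := by rw [← hT.add, hxsplit]
          rw [h1, h2, hinfeq]
          abel
        have habs : |S x - T x| ≤ S r + T r := by
          rw [hRr]
          exact abs_sub_le_add (hS.pos _ hr0) (hT.pos _ hr0)
        calc (n:ℝ) • |S x - T x| ≤ (n:ℝ) • (S r + T r) :=
            smul_le_smul_of_nonneg_left habs (Nat.cast_nonneg n)
        _ = S ((n:ℝ) • r) + T ((n:ℝ) • r) := by rw [hS.smul, hT.smul, smul_add]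
        _ ≤ S w + T w := add_le_add (hS.mono (hw n)) (hT.mono (hw n))
    have := hArch _ _ harch
    have h0 := abs_eq_zero' this
    exact sub_eq_zero.mp h0
  intro x
  have hxsplit : x = x⁺ - x⁻ := (posPart_sub_negPart x).symm
  rw [hxsplit, hS.sub, hT.sub, step3 _ (pp_nonneg x), step3 _ (np_nonneg x)]

end Vanish

namespace Good
variable {e : E} {B : E → E → E} (hB : Good e B)
include hB

theorem comm (hArch : ∀ x y : E, (∀ n : ℕ, (n : ℝ) • x ≤ y) → x ≤ 0) (x y : E) :
    B x y = B y x := by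
  have main : ∀ y : E, 0 ≤ y → ∀ x : E, B x y = B y x := by
    intro y hy
    have hS : Orth e (fun x => B x y) :=
      ⟨fun a b => hB.add₁ a b y, fun a x => hB.sm₁ a x y,
        fun x hx => hB.pos x y hx hy,
        fun x z hx hz hxz => hB.fax₂ x z y hxz hy⟩
    have hT : Orth e (fun x => B y x) :=
      ⟨fun a b => hB.add₂ y a b, fun a x => hB.sm₂ a y x,
        fun x hx => hB.pos y x hy hx,
        fun x z hx hz hxz => hB.fax₁ x z y hxz hy⟩
    have hste : B e y = B y e := by rw [hB.u₁, hB.u₂]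
    exact vanish hArch hB.e_nonneg hS hT hste
      (fun x hx => ⟨B x x, fun n => hB.tail_bound hx n⟩)
  calc B x y = B x y⁺ - B x y⁻ := by
        rw [← hB.sub₂, posPart_sub_negPart]
  _ = B y⁺ x - B y⁻ x := by
        rw [main y⁺ (pp_nonneg y) x, main y⁻ (np_nonneg y) x]
  _ = B y x := by rw [← hB.sub₁, posPart_sub_negPart]

theorem polar (hArch : ∀ x y : E, (∀ n : ℕ, (n : ℝ) • x ≤ y) → x ≤ 0)
    (f g s₁ s₂ s₃ : E)
    (h₁ : IsLUB (Set.range fun l : ℝ => (2 * l) • (f + g) - (l ^ 2) • e) s₁)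
    (h₂ : IsLUB (Set.range fun l : ℝ => (2 * l) • f - (l ^ 2) • e) s₂)
    (h₃ : IsLUB (Set.range fun l : ℝ => (2 * l) • g - (l ^ 2) • e) s₃) :
    B f g = (2 : ℝ)⁻¹ • (s₁ - s₂ - s₃) := by
  have e₁ : s₁ = B (f + g) (f + g) := h₁.unique (hB.isLUB_sq hArch (f + g))
  have e₂ : s₂ = B f f := h₂.unique (hB.isLUB_sq hArch f)
  have e₃ : s₃ = B g g := h₃.unique (hB.isLUB_sq hArch g)
  have hexp : B (f + g) (f + g) = B f f + B f g + B g f + B g g := by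
    rw [hB.add₁, hB.add₂, hB.add₂]
    abel
  have hc : B g f = B f g := hB.comm hArch g f
  rw [e₁, e₂, e₃, hexp, hc]
  rw [show B f f + B f g + B f g + B g g - B f f - B g g = (2:ℝ) • B f g by
    rw [two_smul]; abel]
  rw [smul_smul]
  norm_num

end Good

section IsLUBHelpers

lemma isLUB_add_le {S T : Set E} {a b c : E} (ha : IsLUB S a) (hb : IsLUB T b)
    (h : ∀ x ∈ S, ∀ y ∈ T, x + y ≤ c) : a + b ≤ c := by
  have h1 : ∀ y ∈ T, y ≤ c - a := by
    intro y hy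
    have h2 : a ≤ c - y := by
      refine ha.2 ?_
      intro x hx
      exact le_sub_iff_add_le.mpr ((h x hx y hy))
    calc y = a + y - a := by abel
    _ ≤ (c - y) + y - a := by
        exact sub_le_sub_right (add_le_add_left h2 y) a
    _ = c - a := by abel
  have h3 : b ≤ c - a := hb.2 h1
  calc a + b ≤ a + (c - a) := add_le_add_right h3 a
  _ = c := by abel

lemma isLUB_smul {c : ℝ} (hc : 0 < c) {S : Set E} {s : E} (h : IsLUB S s) :
    IsLUB ((c • ·) '' S) (c • s) := by
  constructor
  · rintro z ⟨x, hx, rfl⟩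
    exact smul_le_smul_of_nonneg_left (h.1 hx) hc.le
  · intro u hu
    have h1 : ∀ x ∈ S, x ≤ c⁻¹ • u := by
      intro x hx
      have h2 : c • x ≤ u := hu ⟨x, hx, rfl⟩
      have := smul_le_smul_of_nonneg_left h2 (inv_nonneg.mpr hc.le)
      rwa [inv_smul_smul₀ hc.ne'] at this
    have h3 : s ≤ c⁻¹ • u := h.2 h1
    have := smul_le_smul_of_nonneg_left h3 hc.le
    rwa [smul_inv_smul₀ hc.ne'] at this

lemma isLUB_translate {v : E} {S : Set E} {s : E} (h : IsLUB S s) :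
    IsLUB ((· + v) '' S) (s + v) := by
  constructor
  · rintro z ⟨x, hx, rfl⟩
    exact add_le_add_left (h.1 hx) v
  · intro u hu
    have h1 : ∀ x ∈ S, x ≤ u - v := fun x hx => le_sub_iff_add_le.mpr (hu ⟨x, hx, rfl⟩)
    have h2 : s ≤ u - v := h.2 h1
    calc s + v ≤ (u - v) + v := add_le_add_left h2 v
    _ = u := by abel

end IsLUBHelpers

section Construction
variable {e : E} {SQ : E → E}
variable (hSQ : ∀ f : E, IsLUB (Set.range fun l : ℝ => (2 * l) • f - (l ^ 2) • e) (SQ f))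
include hSQ

lemma SQ_ge (f : E) (l : ℝ) : (2 * l) • f - (l ^ 2) • e ≤ SQ f := (hSQ f).1 ⟨l, rfl⟩

lemma SQ_nonneg (f : E) : 0 ≤ SQ f := by
  have := SQ_ge hSQ f 0
  simpa using this

lemma e_nn (hArch : ∀ x y : E, (∀ n : ℕ, (n : ℝ) • x ≤ y) → x ≤ 0) : (0:E) ≤ e := by
  have key : ∀ n : ℕ, (n:ℝ) • (-e) ≤ SQ 0 := by
    intro n
    have h1 := SQ_ge hSQ 0 (Real.sqrt n)
    rw [smul_zero, zero_sub, Real.sq_sqrt (Nat.cast_nonneg n)] at h1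
    rw [smul_neg]
    exact h1
  have := hArch (-e) (SQ 0) key
  simpa using this

lemma SQ_zero (he : (0:E) ≤ e) : SQ 0 = 0 := by
  refine le_antisymm ?_ (SQ_nonneg hSQ 0)
  refine (hSQ 0).2 ?_
  rintro z ⟨l, rfl⟩
  simp only [smul_zero, zero_sub]
  exact neg_nonpos.mpr (smul_nn (sq_nonneg l) he)

lemma SQ_neg (f : E) : SQ (-f) = SQ f := by
  have hset : (Set.range fun l : ℝ => (2 * l) • (-f) - (l ^ 2) • e)
      = (Set.range fun l : ℝ => (2 * l) • f - (l ^ 2) • e) := by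
    ext z
    constructor
    · rintro ⟨l, rfl⟩
      exact ⟨-l, by module⟩
    · rintro ⟨l, rfl⟩
      exact ⟨-l, by module⟩
  have h2 : IsLUB (Set.range fun l : ℝ => (2 * l) • f - (l ^ 2) • e) (SQ (-f)) :=
    hset ▸ hSQ (-f)
  exact h2.unique (hSQ f)

lemma SQ_smul (he : (0:E) ≤ e) (a : ℝ) (f : E) : SQ (a • f) = (a^2) • SQ f := by
  rcases eq_or_ne a 0 with ha | ha
  · subst ha
    rw [zero_smul, SQ_zero hSQ he]
    norm_num
  · have ha2 : (0:ℝ) < a^2 := by positivity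
    have hset : (Set.range fun l : ℝ => (2 * l) • (a • f) - (l ^ 2) • e)
        = (fun x => (a^2) • x) '' (Set.range fun l : ℝ => (2 * l) • f - (l ^ 2) • e) := by
      ext z
      constructor
      · rintro ⟨l, rfl⟩
        refine ⟨(2 * (l/a)) • f - ((l/a) ^ 2) • e, ⟨l/a, rfl⟩, ?_⟩
        match_scalars <;> field_simp <;> ring_nf
      · rintro ⟨x, ⟨m, rfl⟩, rfl⟩
        exact ⟨a * m, by module⟩
    have h2 := isLUB_smul ha2 (hSQ f)
    rw [← hset] at h2
    exact (hSQ (a • f)).unique h2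

lemma SQ_shift (m : ℝ) (f : E) : SQ (f + m • e) = SQ f + (2*m) • f + (m^2) • e := by
  have hset : (Set.range fun l : ℝ => (2 * l) • (f + m • e) - (l ^ 2) • e)
      = (fun x => x + ((2*m) • f + (m^2) • e)) ''
        (Set.range fun l : ℝ => (2 * l) • f - (l ^ 2) • e) := by
    ext z
    constructor
    · rintro ⟨l, rfl⟩
      exact ⟨(2 * (l - m)) • f - ((l - m) ^ 2) • e, ⟨l - m, rfl⟩, by module⟩
    · rintro ⟨x, ⟨ν, rfl⟩, rfl⟩
      exact ⟨ν + m, by module⟩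
  have h2 := isLUB_translate (v := (2*m) • f + (m^2) • e) (hSQ f)
  rw [← hset] at h2
  have h3 := (hSQ (f + m • e)).unique h2
  rw [h3]
  abel

lemma SQ_mono {f g : E} (h : |f| ≤ g) : SQ f ≤ SQ g := by
  refine ((hSQ f).2 ?_)
  rintro z ⟨l, rfl⟩
  have h1 : (2*l) • f ≤ (2*|l|) • g := by
    calc (2*l) • f ≤ |2*l| • |f| := le_abs_smul _ _
    _ = (2*|l|) • |f| := by rw [abs_mul, abs_two]
    _ ≤ (2*|l|) • g := smul_le_smul_of_nonneg_left h (by positivity)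
  calc (2*l) • f - (l^2) • e ≤ (2*|l|) • g - (|l|^2) • e := by
        rw [sq_abs]
        exact sub_le_sub_right h1 _
  _ ≤ SQ g := SQ_ge hSQ g (|l|)

lemma SQ_abs (he : (0:E) ≤ e) (f : E) : SQ |f| = SQ f := by
  refine le_antisymm ?_ (SQ_mono hSQ le_rfl)
  refine (hSQ |f|).2 ?_
  rintro z ⟨l, rfl⟩
  rcases le_or_gt l 0 with hl | hl
  · have h1 : (2*l) • |f| ≤ 0 := by
      have := smul_mono_scalar (show 2*l ≤ 0 by linarith) (abs_nn f)
      rwa [zero_smul] at this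
    have h2 : (0:E) ≤ (l^2) • e := smul_nn (sq_nonneg l) he
    calc (2*l) • |f| - (l^2) • e ≤ 0 - 0 := sub_le_sub h1 h2
    _ = 0 := by abel
    _ ≤ SQ f := SQ_nonneg hSQ f
  · have h2l : (0:ℝ) < 2*l := by linarith
    have h1 : (2*l) • |f| = ((2*l) • f) ⊔ ((2*(-l)) • f) := by
      rw [abs, smul_sup h2l, show (2*(-l)) • f = (2*l) • (-f) by module]
    show (2*l) • |f| - (l^2) • e ≤ SQ f
    rw [h1, sup_sub]
    refine sup_le ?_ ?_
    · exact SQ_ge hSQ f l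
    · have := SQ_ge hSQ f (-l)
      rwa [neg_pow, show (-1:ℝ)^2 * l^2 = l^2 by ring] at this
  
lemma SQ_parallelogram (f g : E) :
    SQ (f + g) + SQ (f - g) = (2:ℝ) • SQ f + (2:ℝ) • SQ g := by
  refine le_antisymm ?_ ?_
  · refine isLUB_add_le (hSQ (f+g)) (hSQ (f-g)) ?_
    rintro x ⟨l, rfl⟩ y ⟨m, rfl⟩
    have e1 : ((2*l) • (f+g) - (l^2) • e) + ((2*m) • (f-g) - (m^2) • e)
        = (2:ℝ) • ((2*((l+m)/2)) • f - (((l+m)/2)^2) • e)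
          + (2:ℝ) • ((2*((l-m)/2)) • g - (((l-m)/2)^2) • e) := by
      match_scalars <;> ring
    rw [e1]
    exact add_le_add
      (smul_le_smul_of_nonneg_left (SQ_ge hSQ f ((l+m)/2)) (by norm_num))
      (smul_le_smul_of_nonneg_left (SQ_ge hSQ g ((l-m)/2)) (by norm_num))
  · refine isLUB_add_le (isLUB_smul two_pos (hSQ f)) (isLUB_smul two_pos (hSQ g)) ?_
    rintro x ⟨x', ⟨l, rfl⟩, rfl⟩ y ⟨y', ⟨m, rfl⟩, rfl⟩
    have e1 : (2:ℝ) • ((2*l) • f - (l^2) • e) + (2:ℝ) • ((2*m) • g - (m^2) • e)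
        = ((2*(l+m)) • (f+g) - ((l+m)^2) • e) + ((2*(l-m)) • (f-g) - ((l-m)^2) • e) := by
      match_scalars <;> ring
    rw [e1]
    exact add_le_add (SQ_ge hSQ (f+g) (l+m)) (SQ_ge hSQ (f-g) (l-m))

section TauDef
variable (SQ : E → E)

/-- Candidate multiplication from squares. -/
noncomputable def tau (f g : E) : E := (4:ℝ)⁻¹ • (SQ (f + g) - SQ (f - g))

end TauDef

lemma tau_comm (f g : E) : tau SQ f g = tau SQ g f := by
  rw [tau, tau, add_comm g f, show g - f = -(f - g) by abel, SQ_neg hSQ]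

lemma tau_zero₁ (he : (0:E) ≤ e) (g : E) : tau SQ 0 g = 0 := by
  rw [tau, zero_add, zero_sub, SQ_neg hSQ, sub_self, smul_zero]

lemma tau_self (he : (0:E) ≤ e) (f : E) : tau SQ f f = SQ f := by
  rw [tau, sub_self, SQ_zero hSQ he, sub_zero, show f + f = (2:ℝ) • f from (two_smul ℝ f).symm,
    SQ_smul hSQ he]
  rw [smul_smul]
  norm_num

lemma tau_addJ (f₁ f₂ g : E) :
    tau SQ (f₁ + f₂) g + tau SQ (f₁ - f₂) g = (2:ℝ) • tau SQ f₁ g := by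
  have hAC := SQ_parallelogram hSQ (f₁ + g) f₂
  have hBD := SQ_parallelogram hSQ (f₁ - g) f₂
  rw [tau, tau, tau, show f₁ + f₂ + g = (f₁ + g) + f₂ by abel,
    show f₁ + f₂ - g = (f₁ - g) + f₂ by abel,
    show f₁ - f₂ + g = (f₁ + g) - f₂ by abel,
    show f₁ - f₂ - g = (f₁ - g) - f₂ by abel]
  have key : SQ ((f₁+g)+f₂) - SQ ((f₁-g)+f₂) + (SQ ((f₁+g)-f₂) - SQ ((f₁-g)-f₂))
      = (2:ℝ) • SQ (f₁+g) - (2:ℝ) • SQ (f₁-g) := by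
    calc SQ ((f₁+g)+f₂) - SQ ((f₁-g)+f₂) + (SQ ((f₁+g)-f₂) - SQ ((f₁-g)-f₂))
        = (SQ ((f₁+g)+f₂) + SQ ((f₁+g)-f₂)) - (SQ ((f₁-g)+f₂) + SQ ((f₁-g)-f₂)) := by
          abel
    _ = ((2:ℝ) • SQ (f₁+g) + (2:ℝ) • SQ f₂) - ((2:ℝ) • SQ (f₁-g) + (2:ℝ) • SQ f₂) := by
          rw [hAC, hBD]
    _ = (2:ℝ) • SQ (f₁+g) - (2:ℝ) • SQ (f₁-g) := by abel
  rw [← smul_add, key]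
  module

lemma tau_double (he : (0:E) ≤ e) (h g : E) :
    tau SQ (h + h) g = (2:ℝ) • tau SQ h g := by
  have := tau_addJ hSQ h h g
  rwa [sub_self, tau_zero₁ hSQ he, add_zero] at this

lemma tau_add₁ (he : (0:E) ≤ e) (u v g : E) :
    tau SQ (u + v) g = tau SQ u g + tau SQ v g := by
  have h := tau_addJ hSQ (u + v) (u - v) g
  rw [show u + v + (u - v) = u + u by abel, show u + v - (u - v) = v + v by abel,
    tau_double hSQ he, tau_double hSQ he] at h
  have h2 : (2:ℝ) • (tau SQ u g + tau SQ v g) = (2:ℝ) • tau SQ (u+v) g := by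
    rw [smul_add, h]
  have := smul_right_injective E (by norm_num : (2:ℝ) ≠ 0) h2
  exact this.symm

lemma tau_neg₁ (f g : E) : tau SQ (-f) g = -(tau SQ f g) := by
  rw [tau, tau, show -f + g = -(f - g) by abel, show -f - g = -(f + g) by abel,
    SQ_neg hSQ, SQ_neg hSQ]
  module

lemma tau_sub₁ (he : (0:E) ≤ e) (u v g : E) :
    tau SQ (u - v) g = tau SQ u g - tau SQ v g := by
  rw [sub_eq_add_neg, tau_add₁ hSQ he, tau_neg₁ hSQ, ← sub_eq_add_neg]

lemma tau_pos (hf : (0:E) ≤ f) (hg : (0:E) ≤ g) : (0:E) ≤ tau SQ f g := by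
  have h1 : |f - g| ≤ f + g := abs_sub_le_add hf hg
  have h2 : SQ (f - g) ≤ SQ (f + g) := SQ_mono hSQ h1
  exact smul_nn (by norm_num) (sub_nonneg.mpr h2)

lemma tau_nat (he : (0:E) ≤ e) (k : ℕ) (f g : E) :
    tau SQ ((k:ℝ) • f) g = (k:ℝ) • tau SQ f g := by
  induction k with
  | zero => simp [tau_zero₁ hSQ he]
  | succ k ih =>
    have : ((k+1:ℕ):ℝ) • f = (k:ℝ) • f + f := by
      push_cast
      rw [add_smul, one_smul]
    rw [this, tau_add₁ hSQ he, ih]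
    push_cast
    rw [add_smul, one_smul]

lemma tau_int (he : (0:E) ≤ e) (k : ℤ) (f g : E) :
    tau SQ ((k:ℝ) • f) g = (k:ℝ) • tau SQ f g := by
  obtain ⟨n, rfl | rfl⟩ := k.eq_nat_or_neg
  · push_cast
    exact tau_nat hSQ he n f g
  · push_cast
    rw [neg_smul, ← smul_neg, tau_nat hSQ he n (-f) g, tau_neg₁ hSQ]
    rw [neg_smul, ← smul_neg]

lemma tau_inv_nat (he : (0:E) ≤ e) (n : ℕ) (hn : n ≠ 0) (f g : E) :
    tau SQ (((n:ℝ))⁻¹ • f) g = ((n:ℝ))⁻¹ • tau SQ f g := by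
  have hn0 : ((n:ℝ)) ≠ 0 := Nat.cast_ne_zero.mpr hn
  have h := tau_nat hSQ he n (((n:ℝ))⁻¹ • f) g
  rw [smul_inv_smul₀ hn0] at h
  rw [h, inv_smul_smul₀ hn0]

lemma tau_ratio (he : (0:E) ≤ e) (k : ℤ) (n : ℕ) (hn : n ≠ 0) (f g : E) :
    tau SQ (((k:ℝ)/(n:ℝ)) • f) g = ((k:ℝ)/(n:ℝ)) • tau SQ f g := by
  have h : ((k:ℝ)/(n:ℝ)) • f = ((n:ℝ))⁻¹ • ((k:ℝ) • f) := by
    rw [smul_smul, div_eq_inv_mul]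
  rw [h, tau_inv_nat hSQ he n hn, tau_int hSQ he, smul_smul, div_eq_inv_mul]

lemma tau_real_pos (hArch : ∀ x y : E, (∀ n : ℕ, (n : ℝ) • x ≤ y) → x ≤ 0)
    (he : (0:E) ≤ e) (a : ℝ) {f g : E} (hf : (0:E) ≤ f) (hg : (0:E) ≤ g) :
    tau SQ (a • f) g = a • tau SQ f g := by
  have ht0 : (0:E) ≤ tau SQ f g := tau_pos hSQ hf hg
  have hmono : ∀ b c : ℝ, b ≤ c → tau SQ (b • f) g ≤ tau SQ (c • f) g := by
    intro b c hbc
    have h1 : tau SQ (c • f) g - tau SQ (b • f) g = tau SQ ((c - b) • f) g := by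
      rw [← tau_sub₁ hSQ he, ← sub_smul]
    have h2 : (0:E) ≤ tau SQ ((c-b) • f) g :=
      tau_pos hSQ (smul_nn (by linarith) hf) hg
    rw [← h1] at h2
    exact sub_nonneg.mp h2
  have key : ∀ n : ℕ, (n:ℝ) • |tau SQ (a • f) g - a • tau SQ f g| ≤ tau SQ f g := by
    intro n
    rcases Nat.eq_zero_or_pos n with hn | hn
    · rw [hn]
      simpa using ht0
    have hn0 : ((n:ℝ)) ≠ 0 := by positivity
    have hnpos : (0:ℝ) < (n:ℝ) := by exact_mod_cast hn
    set k : ℤ := ⌊a * n⌋ with hk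
    have hp : ((k:ℝ)/(n:ℝ)) ≤ a := by
      rw [div_le_iff₀ hnpos]
      exact Int.floor_le (a * n)
    have hq : a ≤ (((k:ℝ)+1)/(n:ℝ)) := by
      rw [le_div_iff₀ hnpos]
      exact (Int.lt_floor_add_one (a * n)).le
    have hXq : tau SQ (a • f) g ≤ (((k:ℝ)+1)/(n:ℝ)) • tau SQ f g := by
      have h1 := hmono a (((k:ℝ)+1)/(n:ℝ)) hq
      have h2 : tau SQ ((((k:ℝ)+1)/(n:ℝ)) • f) g = (((k:ℝ)+1)/(n:ℝ)) • tau SQ f g := by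
        have := tau_ratio hSQ he (k+1) n (by omega) f g
        push_cast at this
        exact this
      rw [← h2]
      exact h1
    have hXp : ((k:ℝ)/(n:ℝ)) • tau SQ f g ≤ tau SQ (a • f) g := by
      have h1 := hmono (((k:ℝ))/(n:ℝ)) a hp
      have h2 := tau_ratio hSQ he k n (by omega) f g
      rw [← h2]
      exact h1
    have hYq : a • tau SQ f g ≤ (((k:ℝ)+1)/(n:ℝ)) • tau SQ f g := smul_mono_scalar hq ht0
    have hYp : ((k:ℝ)/(n:ℝ)) • tau SQ f g ≤ a • tau SQ f g := smul_mono_scalar hp ht0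
    have hgap : (((k:ℝ)+1)/(n:ℝ)) • tau SQ f g - ((k:ℝ)/(n:ℝ)) • tau SQ f g
        = ((n:ℝ))⁻¹ • tau SQ f g := by
      rw [← sub_smul]
      congr 1
      field_simp
      ring
    have habs : |tau SQ (a • f) g - a • tau SQ f g| ≤ ((n:ℝ))⁻¹ • tau SQ f g := by
      rw [abs, sup_le_iff]
      constructor
      · calc tau SQ (a • f) g - a • tau SQ f g
            ≤ (((k:ℝ)+1)/(n:ℝ)) • tau SQ f g - ((k:ℝ)/(n:ℝ)) • tau SQ f g :=
            sub_le_sub hXq hYp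
        _ = ((n:ℝ))⁻¹ • tau SQ f g := hgap
      · calc -(tau SQ (a • f) g - a • tau SQ f g)
            = a • tau SQ f g - tau SQ (a • f) g := by abel
        _ ≤ (((k:ℝ)+1)/(n:ℝ)) • tau SQ f g - ((k:ℝ)/(n:ℝ)) • tau SQ f g :=
            sub_le_sub hYq hXp
        _ = ((n:ℝ))⁻¹ • tau SQ f g := hgap
    calc (n:ℝ) • |tau SQ (a • f) g - a • tau SQ f g|
        ≤ (n:ℝ) • (((n:ℝ))⁻¹ • tau SQ f g) :=
        smul_le_smul_of_nonneg_left habs (Nat.cast_nonneg n)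
    _ = tau SQ f g := smul_inv_smul₀ hn0 _
  have := hArch _ _ key
  have h0 := abs_eq_zero' this
  exact sub_eq_zero.mp h0

lemma tau_smul₁ (hArch : ∀ x y : E, (∀ n : ℕ, (n : ℝ) • x ≤ y) → x ≤ 0)
    (he : (0:E) ≤ e) (a : ℝ) (f g : E) :
    tau SQ (a • f) g = a • tau SQ f g := by
  have hsplit : ∀ g' : E, 0 ≤ g' → tau SQ (a • f) g' = a • tau SQ f g' := by
    intro g' hg'
    have h1 : tau SQ (a • f) g' = tau SQ (a • f⁺) g' - tau SQ (a • f⁻) g' := by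
      rw [← tau_sub₁ hSQ he, ← smul_sub, posPart_sub_negPart]
    rw [h1, tau_real_pos hSQ hArch he a (pp_nonneg f) hg',
      tau_real_pos hSQ hArch he a (np_nonneg f) hg',
      show tau SQ f g' = tau SQ f⁺ g' - tau SQ f⁻ g' by
        rw [← tau_sub₁ hSQ he, posPart_sub_negPart], smul_sub]
  calc tau SQ (a • f) g = tau SQ (a • f) g⁺ - tau SQ (a • f) g⁻ := by
        rw [tau_comm hSQ, tau_comm hSQ (a • f) g⁺, tau_comm hSQ (a • f) g⁻,
          ← tau_sub₁ hSQ he, posPart_sub_negPart]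
  _ = a • (tau SQ f g⁺ - tau SQ f g⁻) := by
        rw [hsplit g⁺ (pp_nonneg g), hsplit g⁻ (np_nonneg g), smul_sub]
  _ = a • tau SQ f g := by
        rw [tau_comm hSQ f g⁺, tau_comm hSQ f g⁻, ← tau_sub₁ hSQ he,
          posPart_sub_negPart, tau_comm hSQ]

lemma tau_unit (f : E) : tau SQ f e = f := by
  rw [tau, show f + e = f + (1:ℝ) • e by rw [one_smul],
    show f - e = f + (-1:ℝ) • e by rw [neg_one_smul]; abel,
    SQ_shift hSQ 1 f, SQ_shift hSQ (-1) f]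
  module


lemma tau_disj (he : (0:E) ≤ e) {f g : E} (h : f ⊓ g = 0) : tau SQ f g = 0 := by
  have hf : 0 ≤ f := h ▸ inf_le_left
  have hg : 0 ≤ g := h ▸ inf_le_right
  have h1 : (f - g)⁺ = (f ⊔ g) - g := by rw [posPart_def, sup_sub]; simp
  have h2 : (f - g)⁻ = (f ⊔ g) - f := by
    rw [np_eq_pp_neg, posPart_def, sup_sub, sup_comm]
    simp
  have habs : |f - g| = f + g := by
    rw [abs_pp_np, h1, h2, ← disj_add_eq_sup h]
    abel
  have h3 : SQ (f - g) = SQ (f + g) := by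
    rw [← SQ_abs hSQ he (f - g), habs]
  rw [tau, h3, sub_self, smul_zero]

lemma tau_mono₁ (he : (0:E) ≤ e) {x x' g : E} (hg : 0 ≤ g) (h : x ≤ x') :
    tau SQ x g ≤ tau SQ x' g := by
  have h1 : tau SQ x' g - tau SQ x g = tau SQ (x' - x) g := (tau_sub₁ hSQ he x' x g).symm
  have h2 : (0:E) ≤ tau SQ (x' - x) g := tau_pos hSQ (sub_nonneg.mpr h) hg
  rw [← h1] at h2
  exact sub_nonneg.mp h2

lemma tau_tail (he : (0:E) ≤ e) {c : E} (hc : 0 ≤ c) (n : ℕ) :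
    (n:ℝ) • (c - (n:ℝ) • e)⁺ ≤ tau SQ c c := by
  set r := (c - (n:ℝ) • e)⁺ with hrdef
  have hne : (0:E) ≤ (n:ℝ) • e := smul_nn (Nat.cast_nonneg n) he
  have hr0 : 0 ≤ r := pp_nonneg _
  have h1 : tau SQ c r ≤ tau SQ c c := by
    have hle : r ≤ c := by
      rw [hrdef, ← sub_inf_pp]
      exact sub_le_self c (le_inf hc hne)
    rw [tau_comm hSQ c r, tau_comm hSQ c c]
    exact tau_mono₁ hSQ he hc hle
  have hsr : ((n:ℝ) • e - c)⁺ ⊓ r = 0 := by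
    rw [hrdef, ← np_eq_pp_neg c ((n:ℝ) • e), inf_comm]
    exact posPart_inf_negPart_eq_zero _
  have hcsplit : c - (n:ℝ) • e = r - ((n:ℝ) • e - c)⁺ := by
    rw [hrdef, ← np_eq_pp_neg c ((n:ℝ) • e)]
    exact (posPart_sub_negPart _).symm
  have h2 : tau SQ c r = (n:ℝ) • r + tau SQ r r := by
    have e1 : tau SQ c r = tau SQ (c - (n:ℝ) • e) r + (n:ℝ) • r := by
      calc tau SQ c r = tau SQ ((c - (n:ℝ) • e) + (n:ℝ) • e) r := by
            rw [show (c - (n:ℝ) • e) + (n:ℝ) • e = c by abel]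
      _ = tau SQ (c - (n:ℝ) • e) r + tau SQ ((n:ℝ) • e) r := tau_add₁ hSQ he _ _ _
      _ = tau SQ (c - (n:ℝ) • e) r + (n:ℝ) • r := by
            rw [tau_nat hSQ he n e r, tau_comm hSQ e r, tau_unit hSQ r]
    rw [e1, hcsplit, tau_sub₁ hSQ he, tau_disj hSQ he hsr]
    abel
  calc (n:ℝ) • r ≤ (n:ℝ) • r + tau SQ r r :=
      le_add_of_nonneg_right (tau_pos hSQ hr0 hr0)
  _ = tau SQ c r := h2.symm
  _ ≤ tau SQ c c := h1


lemma tau_fax (hArch : ∀ x y : E, (∀ n : ℕ, (n : ℝ) • x ≤ y) → x ≤ 0)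
    (he : (0:E) ≤ e) {f g c : E} (h : f ⊓ g = 0) (hc : 0 ≤ c) :
    tau SQ c f ⊓ g = 0 := by
  have hf : 0 ≤ f := h ▸ inf_le_left
  have hg : 0 ≤ g := h ▸ inf_le_right
  set x := tau SQ c f ⊓ g with hxdef
  have hx0 : 0 ≤ x := le_inf (tau_pos hSQ hc hf) hg
  have key : ∀ n : ℕ, 1 ≤ n → (n:ℝ) • x ≤ tau SQ (tau SQ c c) f := by
    intro n hn
    have hn0 : (0:ℝ) < (n:ℝ) := by exact_mod_cast Nat.pos_of_ne_zero (by omega)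
    have hne : (0:E) ≤ (n:ℝ) • e := smul_nn (Nat.cast_nonneg n) he
    set r := (c - (n:ℝ) • e)⁺ with hrdef
    have hr0 : 0 ≤ r := pp_nonneg _
    have hsplit : c ⊓ ((n:ℝ) • e) + r = c := by
      rw [hrdef, ← sub_inf_pp]
      abel
    have h1 : tau SQ c f = tau SQ (c ⊓ ((n:ℝ) • e)) f + tau SQ r f := by
      rw [← tau_add₁ hSQ he, hsplit]
    have h2 : tau SQ (c ⊓ ((n:ℝ) • e)) f ≤ (n:ℝ) • f := by
      have hle : c ⊓ ((n:ℝ) • e) ≤ (n:ℝ) • e := inf_le_right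
      calc tau SQ (c ⊓ ((n:ℝ) • e)) f ≤ tau SQ ((n:ℝ) • e) f :=
          tau_mono₁ hSQ he hf hle
      _ = (n:ℝ) • f := by rw [tau_nat hSQ he n e f, tau_comm hSQ e f, tau_unit hSQ f]
    have h3 : (((n:ℝ) • f) ⊓ g : E) = 0 := by
      refine inf_of_le_zero (smul_nn (Nat.cast_nonneg n) hf) hg ?_
      calc ((n:ℝ) • f) ⊓ g ≤ ((n:ℝ) • f) ⊓ ((n:ℝ) • g) := by
            refine inf_le_inf_left _ ?_
            have := smul_mono_scalar (show (1:ℝ) ≤ (n:ℝ) by exact_mod_cast hn) hg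
            rwa [one_smul] at this
      _ = (n:ℝ) • (f ⊓ g) := (smul_inf hn0 f g).symm
      _ = 0 := by rw [h, smul_zero]
    have h4 : x ≤ tau SQ r f := by
      have hxle : x ≤ (tau SQ (c ⊓ ((n:ℝ) • e)) f + tau SQ r f) ⊓ g := by
        rw [hxdef, h1]
      have htr0 : 0 ≤ tau SQ r f := tau_pos hSQ hr0 hf
      have hti0 : 0 ≤ tau SQ (c ⊓ ((n:ℝ) • e)) f := tau_pos hSQ (le_inf hc hne) hf
      calc x ≤ (tau SQ (c ⊓ ((n:ℝ) • e)) f + tau SQ r f) ⊓ g := hxle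
      _ ≤ tau SQ (c ⊓ ((n:ℝ) • e)) f ⊓ g + tau SQ r f ⊓ g := inf_add_le' hti0 htr0 hg
      _ ≤ ((n:ℝ) • f) ⊓ g + tau SQ r f := by
          refine add_le_add (inf_le_inf_right g h2) inf_le_left
      _ = tau SQ r f := by rw [h3, zero_add]
    have h5 : r ≤ ((n:ℝ))⁻¹ • tau SQ c c := by
      have := tau_tail hSQ he hc n
      rw [← hrdef] at this
      have h6 := smul_le_smul_of_nonneg_left this (inv_nonneg.mpr hn0.le)
      rwa [inv_smul_smul₀ hn0.ne'] at h6
    have h7 : tau SQ r f ≤ ((n:ℝ))⁻¹ • tau SQ (tau SQ c c) f := by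
      calc tau SQ r f ≤ tau SQ (((n:ℝ))⁻¹ • tau SQ c c) f := tau_mono₁ hSQ he hf h5
      _ = ((n:ℝ))⁻¹ • tau SQ (tau SQ c c) f := by
          rw [tau_inv_nat hSQ he n (by omega)]
    calc (n:ℝ) • x ≤ (n:ℝ) • (((n:ℝ))⁻¹ • tau SQ (tau SQ c c) f) :=
        smul_le_smul_of_nonneg_left (h4.trans h7) hn0.le
    _ = tau SQ (tau SQ c c) f := smul_inv_smul₀ hn0.ne' _
  have key' : ∀ n : ℕ, (n:ℝ) • x ≤ tau SQ (tau SQ c c) f := by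
    intro n
    rcases Nat.eq_zero_or_pos n with hn | hn
    · rw [hn]
      simp only [Nat.cast_zero, zero_smul]
      exact tau_pos hSQ (tau_pos hSQ hc hc) hf
    · exact key n hn
  exact le_antisymm (hArch _ _ key') hx0

theorem good_tau (hArch : ∀ x y : E, (∀ n : ℕ, (n : ℝ) • x ≤ y) → x ≤ 0)
    (he : (0:E) ≤ e) : Good e (tau SQ) where
  add₁ := tau_add₁ hSQ he
  add₂ := fun x y z => by
    rw [tau_comm hSQ x (y+z), tau_add₁ hSQ he, tau_comm hSQ y x, tau_comm hSQ z x]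
  sm₁ := fun a x y => tau_smul₁ hSQ hArch he a x y
  sm₂ := fun a x y => by
    rw [tau_comm hSQ x (a • y), tau_smul₁ hSQ hArch he, tau_comm hSQ y x]
  pos := fun x y hx hy => tau_pos hSQ hx hy
  fax₁ := fun x y c hxy hc => tau_fax hSQ hArch he hxy hc
  fax₂ := fun x y c hxy hc => by
    rw [tau_comm hSQ]
    exact tau_fax hSQ hArch he hxy hc
  u₁ := tau_unit hSQ
  u₂ := fun x => by rw [tau_comm hSQ]; exact tau_unit hSQ x

theorem tau_assoc (hArch : ∀ x y : E, (∀ n : ℕ, (n : ℝ) • x ≤ y) → x ≤ 0)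
    (he : (0:E) ≤ e) (f g h : E) :
    tau SQ (tau SQ f g) h = tau SQ f (tau SQ g h) := by
  have hB : Good e (tau SQ) := good_tau hSQ hArch he
  have main : ∀ g h : E, 0 ≤ g → 0 ≤ h → ∀ f : E,
      tau SQ (tau SQ f g) h = tau SQ f (tau SQ g h) := by
    intro g h hg hh
    have hgh0 : 0 ≤ tau SQ g h := hB.pos g h hg hh
    have hS : Orth e (fun x => tau SQ (tau SQ x g) h) := by
      refine ⟨fun a b => by rw [hB.add₁, hB.add₁], fun a x => by rw [hB.sm₁, hB.sm₁],
        fun x hx => hB.pos _ h (hB.pos x g hx hg) hh, ?_⟩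
      intro x y hx hy hxy
      have h1 : tau SQ x g ⊓ y = 0 := hB.fax₂ x y g hxy hg
      exact hB.fax₂ (tau SQ x g) y h h1 hh
    have hT : Orth e (fun x => tau SQ x (tau SQ g h)) := by
      refine ⟨fun a b => by rw [hB.add₁], fun a x => by rw [hB.sm₁],
        fun x hx => hB.pos x _ hx hgh0, ?_⟩
      intro x y hx hy hxy
      exact hB.fax₂ x y (tau SQ g h) hxy hgh0
    have hste : tau SQ (tau SQ e g) h = tau SQ e (tau SQ g h) := by
      rw [hB.u₂, hB.u₂]
    exact fun f => vanish hArch he hS hT hste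
      (fun x hx => ⟨tau SQ x x, fun n => hB.tail_bound hx n⟩) f
  have exp_h : ∀ X : E, tau SQ X h = tau SQ X h⁺ - tau SQ X h⁻ := fun X => by
    rw [← hB.sub₂, posPart_sub_negPart]
  have exp_g₁ : ∀ X Y : E, tau SQ X g = tau SQ X g⁺ - tau SQ X g⁻ := fun X Y => by
    rw [← hB.sub₂, posPart_sub_negPart]
  calc tau SQ (tau SQ f g) h
      = tau SQ (tau SQ f g⁺) h - tau SQ (tau SQ f g⁻) h := by
        rw [← hB.sub₁, ← hB.sub₂, posPart_sub_negPart]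
  _ = (tau SQ (tau SQ f g⁺) h⁺ - tau SQ (tau SQ f g⁺) h⁻)
      - (tau SQ (tau SQ f g⁻) h⁺ - tau SQ (tau SQ f g⁻) h⁻) := by
        rw [← hB.sub₂, ← hB.sub₂, posPart_sub_negPart]
  _ = (tau SQ f (tau SQ g⁺ h⁺) - tau SQ f (tau SQ g⁺ h⁻))
      - (tau SQ f (tau SQ g⁻ h⁺) - tau SQ f (tau SQ g⁻ h⁻)) := by
        rw [main g⁺ h⁺ (pp_nonneg g) (pp_nonneg h), main g⁺ h⁻ (pp_nonneg g) (np_nonneg h),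
          main g⁻ h⁺ (np_nonneg g) (pp_nonneg h), main g⁻ h⁻ (np_nonneg g) (np_nonneg h)]
  _ = tau SQ f (tau SQ g h) := by
        rw [← hB.sub₂ f, ← hB.sub₂ f, ← hB.sub₂ f,
          show tau SQ g⁺ h⁺ - tau SQ g⁺ h⁻ - (tau SQ g⁻ h⁺ - tau SQ g⁻ h⁻)
            = (tau SQ g⁺ h⁺ - tau SQ g⁺ h⁻) - (tau SQ g⁻ h⁺ - tau SQ g⁻ h⁻) from rfl,
          ← hB.sub₂ g⁺, ← hB.sub₂ g⁻, posPart_sub_negPart, ← hB.sub₁,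
          posPart_sub_negPart]

end Construction

end Helpers
end PhiSq


/-- An Archimedean vector lattice `E` admits a Φ-algebra multiplication with
unit `e` iff `(E,e)` is square closed; in that case any such multiplication
satisfies `f² = f^[2]` and `fg = ½((f+g)^[2] − f^[2] − g^[2])`. -/
theorem phiAlgebra_iff_square_closed {E : Type*} [Lattice E] [AddCommGroup E]
    [Module ℝ E] [CovariantClass E E (· + ·) (· ≤ ·)] [PosSMulMono ℝ E]
    (hArch : ∀ x y : E, (∀ n : ℕ, (n : ℝ) • x ≤ y) → x ≤ 0)
    (e : E) :
    ((∃ mul : E →ₗ[ℝ] E →ₗ[ℝ] E,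
        (∀ f g h : E, mul (mul f g) h = mul f (mul g h)) ∧
        (∀ f g : E, 0 ≤ f → 0 ≤ g → 0 ≤ mul f g) ∧
        (∀ f g c : E, f ⊓ g = 0 → 0 ≤ c → (mul c f) ⊓ g = 0) ∧
        (∀ f g c : E, f ⊓ g = 0 → 0 ≤ c → (mul f c) ⊓ g = 0) ∧
        (∀ f : E, mul f e = f) ∧ (∀ f : E, mul e f = f)) ↔
      (∀ f : E, ∃ s : E,
        IsLUB (Set.range fun l : ℝ => (2 * l) • f - (l ^ 2) • e) s)) ∧
    (∀ mul : E →ₗ[ℝ] E →ₗ[ℝ] E,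
      (∀ f g h : E, mul (mul f g) h = mul f (mul g h)) →
      (∀ f g : E, 0 ≤ f → 0 ≤ g → 0 ≤ mul f g) →
      (∀ f g c : E, f ⊓ g = 0 → 0 ≤ c → (mul c f) ⊓ g = 0) →
      (∀ f g c : E, f ⊓ g = 0 → 0 ≤ c → (mul f c) ⊓ g = 0) →
      (∀ f : E, mul f e = f) → (∀ f : E, mul e f = f) →
      (∀ f : E,
        IsLUB (Set.range fun l : ℝ => (2 * l) • f - (l ^ 2) • e) (mul f f)) ∧
      (∀ f g s₁ s₂ s₃ : E,
        IsLUB (Set.range fun l : ℝ => (2 * l) • (f + g) - (l ^ 2) • e) s₁ →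
        IsLUB (Set.range fun l : ℝ => (2 * l) • f - (l ^ 2) • e) s₂ →
        IsLUB (Set.range fun l : ℝ => (2 * l) • g - (l ^ 2) • e) s₃ →
        mul f g = (2 : ℝ)⁻¹ • (s₁ - s₂ - s₃))) := by
  classical
  have mkGood : ∀ mul : E →ₗ[ℝ] E →ₗ[ℝ] E,
      (∀ f g : E, 0 ≤ f → 0 ≤ g → 0 ≤ mul f g) →
      (∀ f g c : E, f ⊓ g = 0 → 0 ≤ c → (mul c f) ⊓ g = 0) →
      (∀ f g c : E, f ⊓ g = 0 → 0 ≤ c → (mul f c) ⊓ g = 0) →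
      (∀ f : E, mul f e = f) → (∀ f : E, mul e f = f) →
      PhiSq.Good e (fun x y => mul x y) := by
    intro mul hpos hf1 hf2 hu1 hu2
    refine ⟨fun x y z => by simp, fun x y z => by simp,
      fun a x y => by simp, fun a x y => by simp,
      hpos, hf1, hf2, hu1, hu2⟩
  refine ⟨⟨?_, ?_⟩, ?_⟩
  · rintro ⟨mul, hassoc, hpos, hf1, hf2, hu1, hu2⟩ f
    have hB := mkGood mul hpos hf1 hf2 hu1 hu2
    exact ⟨mul f f, hB.isLUB_sq hArch f⟩
  · intro hsq
    set SQ : E → E := fun f => (hsq f).choose with hSQdef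
    have hSQ : ∀ f : E,
        IsLUB (Set.range fun l : ℝ => (2 * l) • f - (l ^ 2) • e) (SQ f) :=
      fun f => (hsq f).choose_spec
    have he : (0:E) ≤ e := PhiSq.e_nn hSQ hArch
    have hB : PhiSq.Good e (PhiSq.tau SQ) := PhiSq.good_tau hSQ hArch he
    refine ⟨LinearMap.mk₂ ℝ (PhiSq.tau SQ) (fun m₁ m₂ n => hB.add₁ m₁ m₂ n)
      (fun c m n => hB.sm₁ c m n) (fun m n₁ n₂ => hB.add₂ m n₁ n₂)
      (fun c m n => hB.sm₂ c m n), ?_, ?_, ?_, ?_, ?_, ?_⟩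
    · intro f g h
      simp only [LinearMap.mk₂_apply]
      exact PhiSq.tau_assoc hSQ hArch he f g h
    · intro f g hf hg
      simp only [LinearMap.mk₂_apply]
      exact hB.pos f g hf hg
    · intro f g c h hc
      simp only [LinearMap.mk₂_apply]
      exact hB.fax₁ f g c h hc
    · intro f g c h hc
      simp only [LinearMap.mk₂_apply]
      exact hB.fax₂ f g c h hc
    · intro f
      simp only [LinearMap.mk₂_apply]
      exact hB.u₁ f
    · intro f
      simp only [LinearMap.mk₂_apply]
      exact hB.u₂ f
  · intro mul hassoc hpos hf1 hf2 hu1 hu2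
    have hB := mkGood mul hpos hf1 hf2 hu1 hu2
    exact ⟨fun f => hB.isLUB_sq hArch f,
      fun f g s₁ s₂ s₃ h₁ h₂ h₃ => hB.polar hArch f g s₁ s₂ s₃ h₁ h₂ h₃⟩
end

section
/- In the vector lattice PP₁[0,1] of continuous piecewise polynomials of degree at most 1 on [0,1], with pointed element the constant function 1, an element f has an order-theoretic square f^[2] = sup_{λ∈ℝ}(2λf − λ²·1) existing in PP₁[0,1] if and only if f is a constant function. -/
/-- `f : [0,1] → ℝ` is a continuous piecewise polynomial of degree at most 1:
there is a finite partition `0 = t₀ ≤ t₁ ≤ ⋯ ≤ tₙ = 1` such that `f` is affine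
on each piece. -/
def IsPP1 (f : Set.Icc (0 : ℝ) 1 → ℝ) : Prop :=
  Continuous f ∧
    ∃ (n : ℕ) (t : Fin (n + 1) → ℝ), Monotone t ∧ t 0 = 0 ∧ t (Fin.last n) = 1 ∧
      ∀ i : Fin n, ∃ a b : ℝ, ∀ x : Set.Icc (0 : ℝ) 1,
        t i.castSucc ≤ (x : ℝ) → (x : ℝ) ≤ t i.succ → f x = a * (x : ℝ) + b

/-- The vector lattice `PP₁[0,1]`, ordered pointwise. -/
abbrev PP1 : Type := {f : Set.Icc (0 : ℝ) 1 → ℝ // IsPP1 f}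

instance : PartialOrder PP1 := Subtype.partialOrder _

lemma PP1.le_def {a b : PP1} : a ≤ b ↔ ∀ x, a.1 x ≤ b.1 x := Iff.rfl

lemma isPP1_const (c : ℝ) : IsPP1 (fun _ => c) := by
  refine ⟨continuous_const, 1, ![0,1], ?_, rfl, rfl, ?_⟩
  · intro i j hij
    fin_cases i <;> fin_cases j <;> simp_all
  · intro i
    exact ⟨0, c, fun x _ _ => by ring⟩

lemma isPP1_affine {g : Set.Icc (0:ℝ) 1 → ℝ} (hg : IsPP1 g) (α β : ℝ) :
    IsPP1 (fun x => α * g x + β) := by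
  obtain ⟨hc, n, t, hm, h0, h1, hp⟩ := hg
  refine ⟨(continuous_const.mul hc).add continuous_const, n, t, hm, h0, h1, ?_⟩
  intro i
  obtain ⟨a, b, hab⟩ := hp i
  exact ⟨α * a, α * b + β, fun x h1 h2 => by
    show α * g x + β = _; rw [hab x h1 h2]; ring⟩

lemma isPP1_lam {g : Set.Icc (0:ℝ) 1 → ℝ} (hg : IsPP1 g) (l : ℝ) :
    IsPP1 (fun x => 2 * l * g x - l ^ 2) := by
  have h := isPP1_affine hg (2 * l) (-(l ^ 2))
  have : (fun x => 2 * l * g x + -(l ^ 2)) = (fun x => 2 * l * g x - l ^ 2) := by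
    funext x; ring
  rwa [this] at h

lemma isPP1_vee (z : ℝ) (hz0 : 0 ≤ z) (hz1 : z ≤ 1) (q C : ℝ) :
    IsPP1 (fun x : Set.Icc (0:ℝ) 1 => q + C * |(x:ℝ) - z|) := by
  refine ⟨continuous_const.add (continuous_const.mul
    ((continuous_subtype_val.sub continuous_const).abs)), 2, ![0, z, 1], ?_, rfl, rfl, ?_⟩
  · intro i j hij
    fin_cases i <;> fin_cases j <;> simp_all
  · intro i
    fin_cases i
    · refine ⟨-C, q + C*z, fun x hx1 hx2 => ?_⟩
      have : (x:ℝ) ≤ z := by simpa using hx2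
      show q + C * |(x:ℝ) - z| = _
      rw [abs_of_nonpos (by linarith)]; ring
    · refine ⟨C, q - C*z, fun x hx1 hx2 => ?_⟩
      have : z ≤ (x:ℝ) := by simpa using hx1
      show q + C * |(x:ℝ) - z| = _
      rw [abs_of_nonneg (by linarith)]; ring

lemma exists_right_affine {f : Set.Icc (0:ℝ) 1 → ℝ} (hf : IsPP1 f) {z : ℝ}
    (hz0 : 0 ≤ z) (hz1 : z < 1) :
    ∃ w, z < w ∧ w ≤ 1 ∧ ∃ a b : ℝ, ∀ x : Set.Icc (0:ℝ) 1,
      z ≤ (x:ℝ) → (x:ℝ) ≤ w → f x = a * (x:ℝ) + b := by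
  obtain ⟨-, n, t, hm, h0, h1, hp⟩ := hf
  set S : Finset (Fin (n+1)) := Finset.univ.filter (fun j => t j ≤ z) with hS
  have h0S : (0 : Fin (n+1)) ∈ S := by
    simp [hS, h0, hz0]
  have hSne : S.Nonempty := ⟨0, h0S⟩
  have hSm := S.max'_mem hSne
  have hiz : t (S.max' hSne) ≤ z := by
    simpa [hS] using hSm
  have hine : S.max' hSne ≠ Fin.last n := by
    intro h
    rw [h, h1] at hiz; linarith
  obtain ⟨i', hii⟩ := Fin.exists_castSucc_eq.mpr hine
  rw [← hii] at hiz
  have hsucc : z < t i'.succ := by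
    by_contra h
    push_neg at h
    have hmem : i'.succ ∈ S := by simp [hS, h]
    have hle := S.le_max' _ hmem
    rw [← hii] at hle
    exact absurd (lt_of_lt_of_le ((Fin.castSucc_lt_succ (i := i'))) hle) (lt_irrefl _)
  obtain ⟨a, b, hab⟩ := hp i'
  refine ⟨min (t i'.succ) 1, lt_min hsucc hz1, min_le_right _ _, a, b, fun x hx1 hx2 => ?_⟩
  exact hab x (le_trans hiz (by linarith)) (le_trans hx2 (min_le_left _ _))

lemma quad_slope_zero {a b c d p q r : ℝ} (hpq : p < q) (hqr : q < r)
    (h1 : (a*p+b)^2 = c*p+d) (h2 : (a*q+b)^2 = c*q+d) (h3 : (a*r+b)^2 = c*r+d) :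
    a = 0 := by
  have k1 : (p - q) * (a^2*(p+q) + 2*a*b - c) = 0 := by linear_combination h1 - h2
  have k2 : (q - r) * (a^2*(q+r) + 2*a*b - c) = 0 := by linear_combination h2 - h3
  have e1 : a^2*(p+q) + 2*a*b - c = 0 :=
    (mul_eq_zero.mp k1).resolve_left (by linarith)
  have e2 : a^2*(q+r) + 2*a*b - c = 0 :=
    (mul_eq_zero.mp k2).resolve_left (by linarith)
  have : a^2 * (p - r) = 0 := by linear_combination e1 - e2
  have ha2 : a^2 = 0 := (mul_eq_zero.mp this).resolve_right (by linarith)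
  exact pow_eq_zero_iff (by norm_num) |>.mp ha2

lemma const_of_locally_const {f : Set.Icc (0:ℝ) 1 → ℝ} (hc : Continuous f)
    (H : ∀ z : ℝ, (hz0 : 0 ≤ z) → (hz1 : z < 1) → ∃ w, z < w ∧ w ≤ 1 ∧
      ∀ x : Set.Icc (0:ℝ) 1, z ≤ (x:ℝ) → (x:ℝ) ≤ w → f x = f ⟨z, hz0, hz1.le⟩) :
    ∀ x : Set.Icc (0:ℝ) 1, f x = f ⟨0, by norm_num⟩ := by
  set f0 := f ⟨0, by norm_num⟩ with hf0
  set A : Set ℝ := {y | ∃ hy : y ∈ Set.Icc (0:ℝ) 1, ∀ x : Set.Icc (0:ℝ) 1, (x:ℝ) ≤ y → f x = f0} with hA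
  have h0A : (0:ℝ) ∈ A := by
    refine ⟨by norm_num, fun x hx => ?_⟩
    have hx0 : (x:ℝ) = 0 := le_antisymm hx x.2.1
    have : x = ⟨0, by norm_num⟩ := Subtype.ext hx0
    rw [this]
  have hAne : A.Nonempty := ⟨0, h0A⟩
  have hAbdd : BddAbove A := ⟨1, fun y hy => hy.1.2⟩
  set b := sSup A with hb
  have hb0 : 0 ≤ b := le_csSup hAbdd h0A
  have hb1 : b ≤ 1 := csSup_le hAne (fun y hy => hy.1.2)
  have hlt : ∀ x : Set.Icc (0:ℝ) 1, (x:ℝ) < b → f x = f0 := by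
    intro x hx
    obtain ⟨y, hyA, hxy⟩ := exists_lt_of_lt_csSup hAne hx
    exact hyA.2 x hxy.le
  have hfb : f ⟨b, hb0, hb1⟩ = f0 := by
    set F : ℝ → ℝ := fun y => f (Set.projIcc 0 1 zero_le_one y) with hF
    have hFc : Continuous F := hc.comp continuous_projIcc
    have hclosed : IsClosed {y : ℝ | F y = f0} := isClosed_eq hFc continuous_const
    have hsub : A ⊆ {y : ℝ | F y = f0} := by
      intro y hy
      have : Set.projIcc 0 1 zero_le_one y = ⟨y, hy.1⟩ := Set.projIcc_of_mem _ hy.1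
      simp only [Set.mem_setOf_eq, hF, this]
      exact hy.2 ⟨y, hy.1⟩ le_rfl
    have hbc : b ∈ closure A := csSup_mem_closure hAne hAbdd
    have hFb : F b = f0 := hclosed.closure_subset_iff.mpr hsub hbc
    have hproj : Set.projIcc 0 1 zero_le_one b = ⟨b, hb0, hb1⟩ :=
      Set.projIcc_of_mem _ ⟨hb0, hb1⟩
    rw [hF] at hFb
    simp only [hproj] at hFb
    exact hFb
  have hball : ∀ x : Set.Icc (0:ℝ) 1, (x:ℝ) ≤ b → f x = f0 := by
    intro x hx
    rcases lt_or_eq_of_le hx with h | h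
    · exact hlt x h
    · have : x = ⟨b, hb0, hb1⟩ := Subtype.ext h
      rw [this]; exact hfb
  have hb_eq : b = 1 := by
    by_contra h
    have hblt : b < 1 := lt_of_le_of_ne hb1 h
    obtain ⟨w, hbw, hw1, hw⟩ := H b hb0 hblt
    have hwA : w ∈ A := by
      refine ⟨⟨by linarith, hw1⟩, fun x hx => ?_⟩
      rcases le_or_gt (x:ℝ) b with h' | h'
      · exact hball x h'
      · rw [hw x h'.le hx]; exact hfb
    have := le_csSup hAbdd hwA
    linarith
  intro x
  exact hball x (by rw [hb_eq]; exact x.2.2)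

/-- In `PP₁[0,1]` with pointed element the constant function `1`, the
order-theoretic square `f^[2] = sup_{λ∈ℝ}(2λf − λ²·1)` exists iff `f` is
constant. -/
theorem pp1_square_exists_iff_constant (f : PP1) :
    (∃ s : PP1, IsLUB
        {g : PP1 | ∃ l : ℝ, ∀ x : Set.Icc (0 : ℝ) 1,
          g.val x =
            2 * l * f.val x - l ^ 2} s) ↔
      ∃ c : ℝ, ∀ x : Set.Icc (0 : ℝ) 1, f.val x = c := by
  constructor
  · rintro ⟨s, hub, hlb⟩
    -- Step A: s ≥ f² pointwise
    have hA : ∀ x : Set.Icc (0:ℝ) 1, (f.val x)^2 ≤ s.val x := by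
      intro x
      have hmem : (⟨fun y => 2 * (f.val x) * f.val y - (f.val x) ^ 2,
          isPP1_lam f.2 (f.val x)⟩ : PP1) ∈
          {g : PP1 | ∃ l : ℝ, ∀ y : Set.Icc (0 : ℝ) 1,
            g.val y = 2 * l * f.val y - l ^ 2} := ⟨f.val x, fun y => rfl⟩
      have := (hub hmem) x
      simp only at this
      nlinarith [this]
    -- Step B: s ≤ f² pointwise
    have hB : ∀ x₀ : Set.Icc (0:ℝ) 1, s.val x₀ ≤ (f.val x₀)^2 := by
      intro x₀
      refine le_of_forall_pos_le_add ?_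
      intro ε hε
      -- bound on f²
      obtain ⟨xm, -, hxm'⟩ := isCompact_univ.exists_isMaxOn (Set.univ_nonempty)
        ((f.2.1.mul f.2.1).continuousOn (s := Set.univ))
      have hxm : ∀ y : Set.Icc (0:ℝ) 1, f.val y * f.val y ≤ f.val xm * f.val xm :=
        fun y => isMaxOn_iff.mp hxm' y trivial
      set M := f.val xm * f.val xm with hM
      have hMnn : 0 ≤ M := by nlinarith [hxm x₀]
      -- continuity of f² at x₀
      have hcont : ContinuousAt (fun x => (f.val x)^2) x₀ :=
        ((f.2.1.pow 2).continuousAt)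
      obtain ⟨η, hη, hηp⟩ := Metric.continuousAt_iff.mp hcont ε hε
      set C := (M + 1) / η with hC
      have hCnn : 0 ≤ C := by positivity
      set q := (f.val x₀)^2 + ε with hq
      have hqnn : 0 < q := by positivity
      -- the vee upper bound
      set h : PP1 := ⟨fun x : Set.Icc (0:ℝ) 1 => q + C * |(x:ℝ) - (x₀:ℝ)|,
        isPP1_vee (x₀:ℝ) x₀.2.1 x₀.2.2 q C⟩ with hh
      have hup : h ∈ upperBounds {g : PP1 | ∃ l : ℝ, ∀ x : Set.Icc (0 : ℝ) 1,
          g.val x = 2 * l * f.val x - l ^ 2} := by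
        rintro g ⟨l, hl⟩
        rw [PP1.le_def]
        intro x
        rw [hl x]
        have h1 : 2 * l * f.val x - l ^ 2 ≤ (f.val x)^2 := by nlinarith [sq_nonneg (f.val x - l)]
        have h2 : (f.val x)^2 ≤ q + C * |(x:ℝ) - (x₀:ℝ)| := by
          rcases lt_or_ge (dist x x₀) η with hd | hd
          · have := hηp hd
            rw [Real.dist_eq] at this
            have habs : |(f.val x)^2 - (f.val x₀)^2| < ε := this
            have := abs_lt.mp habs
            have hCa : 0 ≤ C * |(x:ℝ) - (x₀:ℝ)| := mul_nonneg hCnn (abs_nonneg _)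
            rw [hq]; linarith [this.2]
          · have hdx : dist x x₀ = |(x:ℝ) - (x₀:ℝ)| := by
              rw [Subtype.dist_eq, Real.dist_eq]
            rw [hdx] at hd
            have hCb : M + 1 ≤ C * |(x:ℝ) - (x₀:ℝ)| := by
              rw [hC]
              rw [div_mul_eq_mul_div, le_div_iff₀ hη]
              nlinarith
            have hfx : (f.val x)^2 ≤ M := by
              have := hxm x
              nlinarith
            linarith
        exact le_trans h1 h2
      have hsl := (hlb hup) x₀
      simp only [hh] at hsl
      have : |(x₀:ℝ) - (x₀:ℝ)| = 0 := by simp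
      rw [this] at hsl
      linarith [hsl]
    have hseq : ∀ x : Set.Icc (0:ℝ) 1, s.val x = (f.val x)^2 :=
      fun x => le_antisymm (hB x) (hA x)
    -- Step C: f constant
    have H : ∀ z : ℝ, (hz0 : 0 ≤ z) → (hz1 : z < 1) → ∃ w, z < w ∧ w ≤ 1 ∧
        ∀ x : Set.Icc (0:ℝ) 1, z ≤ (x:ℝ) → (x:ℝ) ≤ w → f.val x = f.val ⟨z, hz0, hz1.le⟩ := by
      intro z hz0 hz1
      obtain ⟨w₁, hw₁, hw₁1, a, b, hab⟩ := exists_right_affine f.2 hz0 hz1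
      obtain ⟨w₂, hw₂, hw₂1, c, d, hcd⟩ := exists_right_affine s.2 hz0 hz1
      set w := min w₁ w₂ with hw
      have hzw : z < w := lt_min hw₁ hw₂
      have hw1 : w ≤ 1 := le_trans (min_le_left _ _) hw₁1
      have key : ∀ y : ℝ, z ≤ y → y ≤ w → (a*y+b)^2 = c*y+d := by
        intro y hy1 hy2
        have hy0 : 0 ≤ y := le_trans hz0 hy1
        have hy1' : y ≤ 1 := le_trans hy2 hw1
        set x : Set.Icc (0:ℝ) 1 := ⟨y, hy0, hy1'⟩ with hx
        have hf := hab x hy1 (le_trans hy2 (min_le_left _ _))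
        have hs := hcd x hy1 (le_trans hy2 (min_le_right _ _))
        have := hseq x
        rw [hs, hf] at this
        exact this.symm
      have ha0 : a = 0 := by
        have h1 := key z le_rfl hzw.le
        have h2 := key ((z+w)/2) (by linarith) (by linarith)
        have h3 := key w hzw.le le_rfl
        exact quad_slope_zero (by linarith) (by linarith) h1 h2 h3
      refine ⟨w, hzw, hw1, fun x hx1 hx2 => ?_⟩
      have hfx := hab x hx1 (le_trans hx2 (min_le_left _ _))
      have hfz := hab ⟨z, hz0, hz1.le⟩ le_rfl (by simpa using le_trans hzw.le (min_le_left _ _))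
      rw [hfx, hfz, ha0]
      simp
    exact ⟨f.val ⟨0, by norm_num⟩, const_of_locally_const f.2.1 H⟩
  · rintro ⟨c, hc⟩
    refine ⟨⟨fun _ => c^2, isPP1_const _⟩, ?_, ?_⟩
    · rintro g ⟨l, hl⟩
      rw [PP1.le_def]
      intro x
      rw [hl x, hc x]
      show 2 * l * c - l ^ 2 ≤ c ^ 2
      nlinarith [sq_nonneg (c - l)]
    · intro u hu
      have hmem : (⟨fun x => 2 * c * f.val x - c ^ 2, isPP1_lam f.2 c⟩ : PP1) ∈
          {g : PP1 | ∃ l : ℝ, ∀ x : Set.Icc (0 : ℝ) 1,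
            g.val x = 2 * l * f.val x - l ^ 2} := ⟨c, fun x => rfl⟩
      have := hu hmem
      rw [PP1.le_def] at this ⊢
      intro x
      have h1 := this x
      simp only at h1
      rw [hc x] at h1
      have : (2 : ℝ) * c * c - c ^ 2 = c ^ 2 := by ring
      rw [this] at h1
      exact h1
end
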